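/- arXiv:2411.08924 — 6 statements merged into one kernel-verified Lean document; each statement's English description precedes it below -/
import Mathlib

section
/- Let q be a prime power and let G be a balanced quasi-arc of weight x > 0 in PG(2,q), i.e., a set of 3x+3 points partitioned as F ∪ G1 ∪ G2 ∪ G3 where F = {E1,E2,E3} are three non-collinear points, |G1|=|G2|=|G3|=x, G1 ⊆ line(E1,E2), G2 ⊆ line(E2,E3), G3 ⊆ line(E3,E1), and every line other than the three lines EiEj meets G in at most 2 points. Then x ≤ (q-1)/2. -/
/-!
Pick `P ∈ G1`. The `2x + 1` points `E3` and `G2 ∪ G3` lie off the line `E1E2` through `P`, and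
every other line through `P` is not a fundamental line, so by the secant condition it contains at
most one of them. Projecting from `P` onto `E2E3` therefore sends them injectively to the `q`
points of `E2E3` other than `E2`, whence `2x + 1 ≤ q`.
-/

open scoped Classical

/-- A balanced quasi-arc of weight `x` in the projective plane `PG(2,q)`:
three non-collinear fundamental points `E1, E2, E3` together with sets
`G1, G2, G3` of `x` points lying on the fundamental lines `E1E2`, `E2E3`,
`E3E1` respectively, forming (together with the fundamental points) a set of
`3x+3` points, such that every line other than the three fundamental lines
meets the set in at most 2 points. -/
structure IsBalancedQuasiArc (F : Type*) [Field F] (x : ℕ)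
    (E1 E2 E3 : Projectivization F (Fin 3 → F))
    (G1 G2 G3 : Finset (Projectivization F (Fin 3 → F))) : Prop where
  not_collinear : ¬ ∃ W : Submodule F (Fin 3 → F), Module.finrank F W ≤ 2 ∧
      E1.submodule ≤ W ∧ E2.submodule ≤ W ∧ E3.submodule ≤ W
  card_G1 : G1.card = x
  card_G2 : G2.card = x
  card_G3 : G3.card = x
  sub_G1 : ∀ P ∈ G1, Projectivization.submodule P ≤ E1.submodule ⊔ E2.submodule
  sub_G2 : ∀ P ∈ G2, Projectivization.submodule P ≤ E2.submodule ⊔ E3.submodule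
  sub_G3 : ∀ P ∈ G3, Projectivization.submodule P ≤ E3.submodule ⊔ E1.submodule
  card_total : ({E1, E2, E3} ∪ G1 ∪ G2 ∪ G3 : Finset _).card = 3 * x + 3
  secant : ∀ W : Submodule F (Fin 3 → F), Module.finrank F W = 2 →
      W ≠ E1.submodule ⊔ E2.submodule → W ≠ E2.submodule ⊔ E3.submodule →
      W ≠ E3.submodule ⊔ E1.submodule →
      (({E1, E2, E3} ∪ G1 ∪ G2 ∪ G3 : Finset _).filter
        fun P => Projectivization.submodule P ≤ W).card ≤ 2

open Module Projectivization Finset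
open scoped LinearAlgebra.Projectivization

section

variable {K V : Type*} [DivisionRing K] [AddCommGroup V] [Module K V]

theorem Submodule.finrank_inf_eq_one_of_ne (hV : finrank K V = 3) {A B : Submodule K V}
    (hA : finrank K A = 2) (hB : finrank K B = 2) (hAB : A ≠ B) :
    finrank K (A ⊓ B : Submodule K V) = 1 := by
  have : FiniteDimensional K V := Module.finite_of_finrank_pos (by omega)
  have hlt : A < A ⊔ B := lt_of_le_of_ne le_sup_left fun h =>
    hAB (Submodule.eq_of_le_of_finrank_eq (h ▸ le_sup_right) (by rw [hA, hB])).symm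
  have h3 : finrank K (A ⊔ B : Submodule K V) = 3 :=
    le_antisymm (hV ▸ Submodule.finrank_le _)
      (by have := Submodule.finrank_lt_finrank_of_lt hlt; omega)
  have := Submodule.finrank_sup_add_finrank_inf_eq A B
  omega

namespace Projectivization

theorem isAtom_submodule (P : ℙ K V) : IsAtom P.submodule :=
  Submodule.isAtom_iff_finrank_eq_one.mpr P.finrank_submodule

theorem finrank_sup_le_two (P Q : ℙ K V) :
    finrank K (P.submodule ⊔ Q.submodule : Submodule K V) ≤ 2 := by
  have h := Submodule.finrank_sup_add_finrank_inf_eq P.submodule Q.submodule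
  rw [P.finrank_submodule, Q.finrank_submodule] at h
  omega

theorem finrank_sup_of_ne {P Q : ℙ K V} (h : P ≠ Q) :
    finrank K (P.submodule ⊔ Q.submodule : Submodule K V) = 2 := by
  have hinf : P.submodule ⊓ Q.submodule = ⊥ :=
    (P.isAtom_submodule.disjoint_of_ne Q.isAtom_submodule
      (submodule_injective.ne h)).eq_bot
  have h2 := Submodule.finrank_sup_add_finrank_inf_eq P.submodule Q.submodule
  rw [P.finrank_submodule, Q.finrank_submodule, hinf, finrank_bot] at h2
  omega

theorem sup_eq_of_le_sup {P Q R : ℙ K V} (hRP : R ≠ P)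
    (hR : R.submodule ≤ P.submodule ⊔ Q.submodule) :
    P.submodule ⊔ R.submodule = P.submodule ⊔ Q.submodule :=
  Submodule.eq_of_le_of_finrank_le (sup_le le_sup_left hR)
    ((finrank_sup_le_two P Q).trans (finrank_sup_of_ne hRP.symm).ge)

theorem eq_of_le_sup_of_le_sup {A B C R : ℙ K V}
    (hC : ¬ C.submodule ≤ A.submodule ⊔ B.submodule)
    (hAB : R.submodule ≤ A.submodule ⊔ B.submodule)
    (hBC : R.submodule ≤ B.submodule ⊔ C.submodule) : R = B := by
  by_contra hRB
  have h1 := sup_eq_of_le_sup hRB hBC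
  have h2 := sup_eq_of_le_sup hRB (sup_comm A.submodule B.submodule ▸ hAB)
  exact hC (by rw [← sup_comm B.submodule, ← h2, h1]; exact le_sup_right)

theorem ncard_setOf_submodule_le [Finite K] {W : Submodule K V} (hW : finrank K W = 2) :
    {R : ℙ K V | R.submodule ≤ W}.ncard = Nat.card K + 1 := by
  have hrange :
      {R : ℙ K V | R.submodule ≤ W} = Set.range (map W.subtype W.injective_subtype) := by
    ext R
    constructor
    · intro hR
      have hmem : R.rep ∈ W := hR (R.submodule_eq ▸ Submodule.mem_span_singleton_self _)
      refine ⟨mk K ⟨R.rep, hmem⟩ (by simpa using R.rep_nonzero), ?_⟩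
      rw [map_mk]
      exact R.mk_rep
    · rintro ⟨S, rfl⟩
      induction S using ind with | h v hv =>
      rw [Set.mem_ofPred_eq, map_mk, submodule_mk, Submodule.span_singleton_le_iff_mem]
      exact v.2
  rw [hrange, Set.ncard_range_of_injective (map_injective _ _), card_of_finrank_two K W hW]

theorem card_le_of_lines_through_subsingleton [Finite K] (hV : finrank K V = 3)
    {ℓ m : Submodule K V} (hℓ : finrank K ℓ = 2) (hm : finrank K m = 2)
    {P : ℙ K V} (hPm : P.submodule ≤ m) (hPℓ : ¬ P.submodule ≤ ℓ)
    {T : Finset (ℙ K V)} (hTm : ∀ Q ∈ T, ¬ Q.submodule ≤ m)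
    (hT : ∀ Q ∈ T, ∀ Q' ∈ T, Q'.submodule ≤ P.submodule ⊔ Q.submodule → Q' = Q) :
    T.card ≤ Nat.card K := by
  have : FiniteDimensional K V := Module.finite_of_finrank_pos (by omega)
  have : Finite V := Module.finite_of_finite K
  -- projection from `P` sends `T` injectively into `S`, the points of `ℓ` off `m`
  set S := {R : ℙ K V | R.submodule ≤ ℓ ∧ ¬ R.submodule ≤ m}
  have hS : S.ncard < Nat.card K + 1 := by
    rw [← ncard_setOf_submodule_le hℓ]
    refine Set.ncard_lt_ncard ⟨fun R hR => hR.1, fun hsub => ?_⟩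
    have hℓm : ℓ ≠ m := fun h => hPℓ (h ▸ hPm)
    obtain ⟨E, hE⟩ : ∃ E : ℙ K V, E.submodule = ℓ ⊓ m :=
      ⟨mk'' _ (Submodule.finrank_inf_eq_one_of_ne hV hℓ hm hℓm), submodule_mk'' _ _⟩
    exact (hsub (show E.submodule ≤ ℓ from hE ▸ inf_le_left)).2 (hE ▸ inf_le_right)
  have hproj : ∀ Q ∈ T, ∃ R ∈ (Set.toFinite S).toFinset,
      R.submodule ≤ P.submodule ⊔ Q.submodule := by
    intro Q hQ
    have hPQ : P ≠ Q := by rintro rfl; exact hTm P hQ hPm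
    have hne : P.submodule ⊔ Q.submodule ≠ ℓ := fun h => hPℓ (h ▸ le_sup_left)
    obtain ⟨R, hR⟩ : ∃ R : ℙ K V, R.submodule = (P.submodule ⊔ Q.submodule) ⊓ ℓ :=
      ⟨mk'' _ (Submodule.finrank_inf_eq_one_of_ne hV (finrank_sup_of_ne hPQ) hℓ hne),
        submodule_mk'' _ _⟩
    have hRℓ : R.submodule ≤ ℓ := hR ▸ inf_le_right
    have hRPQ : R.submodule ≤ P.submodule ⊔ Q.submodule := hR ▸ inf_le_left
    refine ⟨R, (Set.toFinite S).mem_toFinset.mpr ⟨hRℓ, fun hRm => hTm Q hQ ?_⟩, hRPQ⟩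
    have hRP : R ≠ P := by rintro rfl; exact hPℓ hRℓ
    calc Q.submodule ≤ P.submodule ⊔ Q.submodule := le_sup_right
      _ = P.submodule ⊔ R.submodule := (sup_eq_of_le_sup hRP hRPQ).symm
      _ ≤ m := sup_le hPm hRm
  have hunique : ∀ R ∈ (Set.toFinite S).toFinset, {Q | Q ∈ T ∧
      R.submodule ≤ P.submodule ⊔ Q.submodule}.Subsingleton := by
    rintro R hR Q ⟨hQ, hRQ⟩ Q' ⟨hQ', hRQ'⟩
    have hRP : R ≠ P := by rintro rfl; exact hPℓ ((Set.toFinite S).mem_toFinset.mp hR).1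
    refine (hT Q hQ Q' hQ' ?_).symm
    rw [← sup_eq_of_le_sup hRP hRQ, sup_eq_of_le_sup hRP hRQ']
    exact le_sup_right
  have := Finset.card_le_card_of_forall_subsingleton _ hproj hunique
  rw [← Set.ncard_eq_toFinset_card S] at this
  omega

end Projectivization

end

namespace IsBalancedQuasiArc

variable {F : Type*} [Field F] {x : ℕ} {E1 E2 E3 : ℙ F (Fin 3 → F)}
  {G1 G2 G3 : Finset (ℙ F (Fin 3 → F))} (h : IsBalancedQuasiArc F x E1 E2 E3 G1 G2 G3)
include h

theorem not_le_sup12 : ¬ E3.submodule ≤ E1.submodule ⊔ E2.submodule := fun hle =>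
  h.not_collinear ⟨_, finrank_sup_le_two E1 E2, le_sup_left, le_sup_right, hle⟩

theorem not_le_sup31 : ¬ E2.submodule ≤ E3.submodule ⊔ E1.submodule := fun hle =>
  h.not_collinear ⟨_, finrank_sup_le_two E3 E1, le_sup_right, hle, le_sup_left⟩

theorem disjoint_pieces : Disjoint ({E1, E2, E3} : Finset _) G1 ∧
    Disjoint ({E1, E2, E3} ∪ G1) G2 ∧ Disjoint ({E1, E2, E3} ∪ G1 ∪ G2) G3 := by
  have h0 : #({E1, E2, E3} : Finset _) ≤ 3 := card_le_three
  have h1 := card_union_le {E1, E2, E3} G1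
  have h2 := card_union_le ({E1, E2, E3} ∪ G1) G2
  have h3 := card_union_le ({E1, E2, E3} ∪ G1 ∪ G2) G3
  simp only [← card_union_eq_card_add_card]
  have := h.card_total
  have := h.card_G1
  have := h.card_G2
  have := h.card_G3
  omega

theorem sup_eq_side_of_le_sup {A B C : ℙ F (Fin 3 → F)}
    (hA : A ∈ ({E1, E2, E3} ∪ G1 ∪ G2 ∪ G3 : Finset _))
    (hB : B ∈ ({E1, E2, E3} ∪ G1 ∪ G2 ∪ G3 : Finset _))
    (hC : C ∈ ({E1, E2, E3} ∪ G1 ∪ G2 ∪ G3 : Finset _))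
    (hAB : A ≠ B) (hAC : A ≠ C) (hBC : B ≠ C)
    (hCAB : C.submodule ≤ A.submodule ⊔ B.submodule) :
    A.submodule ⊔ B.submodule = E1.submodule ⊔ E2.submodule ∨
      A.submodule ⊔ B.submodule = E2.submodule ⊔ E3.submodule ∨
      A.submodule ⊔ B.submodule = E3.submodule ⊔ E1.submodule := by
  by_contra! hne
  have hsub : ({A, B, C} : Finset _) ⊆ ({E1, E2, E3} ∪ G1 ∪ G2 ∪ G3 : Finset _).filter
      fun P => P.submodule ≤ A.submodule ⊔ B.submodule := by
    intro P hP
    simp only [mem_insert, mem_singleton] at hP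
    rcases hP with rfl | rfl | rfl
    · exact mem_filter.mpr ⟨hA, le_sup_left⟩
    · exact mem_filter.mpr ⟨hB, le_sup_right⟩
    · exact mem_filter.mpr ⟨hC, hCAB⟩
  have := (card_le_card hsub).trans (h.secant _ (finrank_sup_of_ne hAB) hne.1 hne.2.1 hne.2.2)
  rw [card_eq_three.mpr ⟨A, B, C, hAB, hAC, hBC, rfl⟩] at this
  omega

theorem not_le_sup23_of_mem_G1 {P : ℙ F (Fin 3 → F)} (hP : P ∈ G1) :
    ¬ P.submodule ≤ E2.submodule ⊔ E3.submodule := fun hle =>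
  disjoint_left.mp h.disjoint_pieces.1 (by simp) <|
    (eq_of_le_sup_of_le_sup h.not_le_sup12 (h.sub_G1 P hP) hle) ▸ hP

theorem not_le_sup31_of_mem_G1 {P : ℙ F (Fin 3 → F)} (hP : P ∈ G1) :
    ¬ P.submodule ≤ E3.submodule ⊔ E1.submodule := fun hle =>
  disjoint_left.mp h.disjoint_pieces.1 (by simp) <|
    (eq_of_le_sup_of_le_sup h.not_le_sup31 hle (h.sub_G1 P hP)) ▸ hP

theorem not_le_sup12_of_mem {Q : ℙ F (Fin 3 → F)} (hQ : Q ∈ insert E3 (G2 ∪ G3)) :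
    ¬ Q.submodule ≤ E1.submodule ⊔ E2.submodule := by
  obtain ⟨-, hd2, hd3⟩ := h.disjoint_pieces
  intro hle
  rcases mem_insert.mp hQ with rfl | hQ
  · exact h.not_le_sup12 hle
  rcases mem_union.mp hQ with hQ2 | hQ3
  · have hQE2 := eq_of_le_sup_of_le_sup h.not_le_sup12 hle (h.sub_G2 Q hQ2)
    exact disjoint_left.mp hd2 (by simp [hQE2]) hQ2
  · have hQE1 := eq_of_le_sup_of_le_sup h.not_le_sup31 (h.sub_G3 Q hQ3) hle
    exact disjoint_left.mp hd3 (by simp [hQE1]) hQ3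

theorem card_insert_E3_union : #(insert E3 (G2 ∪ G3)) = 2 * x + 1 := by
  obtain ⟨-, hd2, hd3⟩ := h.disjoint_pieces
  have hE3 : E3 ∉ G2 ∪ G3 := by
    rw [mem_union, not_or]
    exact ⟨disjoint_left.mp hd2 (by simp), disjoint_left.mp hd3 (by simp)⟩
  have hG : Disjoint G2 G3 := disjoint_of_subset_left subset_union_right hd3
  rw [card_insert_of_notMem hE3, card_union_of_disjoint hG, h.card_G2, h.card_G3]
  ring

theorem eq_of_le_sup_of_mem {P Q Q' : ℙ F (Fin 3 → F)} (hP : P ∈ G1)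
    (hQ : Q ∈ insert E3 (G2 ∪ G3)) (hQ' : Q' ∈ insert E3 (G2 ∪ G3))
    (hle : Q'.submodule ≤ P.submodule ⊔ Q.submodule) : Q' = Q := by
  by_contra hne
  have hmem : ∀ R ∈ insert E3 (G2 ∪ G3),
      R ∈ ({E1, E2, E3} ∪ G1 ∪ G2 ∪ G3 : Finset _) := by
    intro R hR; simp only [mem_insert, mem_union, mem_singleton] at hR ⊢; tauto
  have hP12 := h.sub_G1 P hP
  have hPQ : ∀ R ∈ insert E3 (G2 ∪ G3), P ≠ R := by
    rintro R hR rfl; exact h.not_le_sup12_of_mem hR hP12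
  rcases h.sup_eq_side_of_le_sup (by simp [hP]) (hmem Q hQ) (hmem Q' hQ') (hPQ Q hQ) (hPQ Q' hQ')
    (Ne.symm hne) hle with h12 | h23 | h31
  · exact h.not_le_sup12_of_mem hQ (h12 ▸ le_sup_right)
  · exact h.not_le_sup23_of_mem_G1 hP (h23 ▸ le_sup_left)
  · exact h.not_le_sup31_of_mem_G1 hP (h31 ▸ le_sup_left)

end IsBalancedQuasiArc

/-- A balanced quasi-arc of weight `x > 0` in `PG(2,q)` satisfies `x ≤ (q-1)/2`. -/
theorem stmt0 {F : Type*} [Field F] [Fintype F] {x : ℕ} (hx : 0 < x)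
    {E1 E2 E3 : Projectivization F (Fin 3 → F)}
    {G1 G2 G3 : Finset (Projectivization F (Fin 3 → F))}
    (h : IsBalancedQuasiArc F x E1 E2 E3 G1 G2 G3) :
    x ≤ (Fintype.card F - 1) / 2 := by
  obtain ⟨P, hP⟩ : G1.Nonempty := card_pos.mp (h.card_G1 ▸ hx)
  have hE12 : E1 ≠ E2 := fun h12 => h.not_le_sup31 (h12 ▸ le_sup_right)
  have hE23 : E2 ≠ E3 := fun h23 => h.not_le_sup12 (h23 ▸ le_sup_right)
  have hcard := card_le_of_lines_through_subsingleton (finrank_fin_fun F)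
    (finrank_sup_of_ne hE23) (finrank_sup_of_ne hE12) (h.sub_G1 P hP)
    (h.not_le_sup23_of_mem_G1 hP) (fun Q hQ => h.not_le_sup12_of_mem hQ)
    (fun Q hQ Q' hQ' => h.eq_of_le_sup_of_mem hP hQ hQ')
  rw [h.card_insert_E3_union, Nat.card_eq_fintype_card] at hcard
  omega
end

section
/- For every integer x ≥ 0 and every prime power q with x ≤ (q-1)/2 and q odd, there exists a balanced quasi-arc of weight x in PG(2,q). -/
open scoped Classical

namespace QArcAux

open Projectivization Module

variable {F : Type*} [Field F]

lemma vne1 (a : F) : (![1, a, 0] : Fin 3 → F) ≠ 0 := by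
  intro h; simpa using congrFun h 0

lemma vne2 (b : F) : (![0, 1, b] : Fin 3 → F) ≠ 0 := by
  intro h; simpa using congrFun h 1

lemma vne3 (c : F) : (![c, 0, 1] : Fin 3 → F) ≠ 0 := by
  intro h; simpa using congrFun h 2

noncomputable def p1 (a : F) : Projectivization F (Fin 3 → F) :=
  Projectivization.mk F ![1, a, 0] (vne1 a)

noncomputable def p2 (b : F) : Projectivization F (Fin 3 → F) :=
  Projectivization.mk F ![0, 1, b] (vne2 b)

noncomputable def p3 (c : F) : Projectivization F (Fin 3 → F) :=
  Projectivization.mk F ![c, 0, 1] (vne3 c)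

lemma mem_of_le_p1 {a : F} {W : Submodule F (Fin 3 → F)} (h : (p1 a).submodule ≤ W) :
    ![1, a, 0] ∈ W := by
  rw [p1, submodule_mk, Submodule.span_singleton_le_iff_mem] at h; exact h

lemma mem_of_le_p2 {b : F} {W : Submodule F (Fin 3 → F)} (h : (p2 b).submodule ≤ W) :
    ![0, 1, b] ∈ W := by
  rw [p2, submodule_mk, Submodule.span_singleton_le_iff_mem] at h; exact h

lemma mem_of_le_p3 {c : F} {W : Submodule F (Fin 3 → F)} (h : (p3 c).submodule ≤ W) :
    ![c, 0, 1] ∈ W := by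
  rw [p3, submodule_mk, Submodule.span_singleton_le_iff_mem] at h; exact h

lemma le_of_mem_p1 {a : F} {W : Submodule F (Fin 3 → F)} (h : ![1, a, 0] ∈ W) :
    (p1 a).submodule ≤ W := by
  rw [p1, submodule_mk, Submodule.span_singleton_le_iff_mem]; exact h

lemma le_of_mem_p2 {b : F} {W : Submodule F (Fin 3 → F)} (h : ![0, 1, b] ∈ W) :
    (p2 b).submodule ≤ W := by
  rw [p2, submodule_mk, Submodule.span_singleton_le_iff_mem]; exact h

lemma le_of_mem_p3 {c : F} {W : Submodule F (Fin 3 → F)} (h : ![c, 0, 1] ∈ W) :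
    (p3 c).submodule ≤ W := by
  rw [p3, submodule_mk, Submodule.span_singleton_le_iff_mem]; exact h

-- inequalities
lemma p1_ne_p2 (a b : F) : p1 a ≠ p2 b := by
  rw [p1, p2, Ne, mk_eq_mk_iff']
  rintro ⟨t, ht⟩
  simpa using congrFun ht 0

lemma p2_ne_p3 (b c : F) : p2 b ≠ p3 c := by
  rw [p2, p3, Ne, mk_eq_mk_iff']
  rintro ⟨t, ht⟩
  simpa using congrFun ht 1

lemma p1_ne_p3 (a c : F) : p1 a ≠ p3 c := by
  rw [p1, p3, Ne, mk_eq_mk_iff']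
  rintro ⟨t, ht⟩
  have h2 := congrFun ht 2
  have h0 := congrFun ht 0
  simp at h2
  simp [h2] at h0

lemma p1_inj : Function.Injective (p1 : F → Projectivization F (Fin 3 → F)) := by
  intro a a' h
  rw [p1, p1, mk_eq_mk_iff'] at h
  obtain ⟨t, ht⟩ := h
  have h0 := congrFun ht 0
  have h1 := congrFun ht 1
  simp at h0
  simp [h0] at h1
  exact h1.symm

lemma p2_inj : Function.Injective (p2 : F → Projectivization F (Fin 3 → F)) := by
  intro a a' h
  rw [p2, p2, mk_eq_mk_iff'] at h
  obtain ⟨t, ht⟩ := h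
  have h1 := congrFun ht 1
  have h2 := congrFun ht 2
  simp at h1
  simp [h1] at h2
  exact h2.symm

lemma p3_inj : Function.Injective (p3 : F → Projectivization F (Fin 3 → F)) := by
  intro a a' h
  rw [p3, p3, mk_eq_mk_iff'] at h
  obtain ⟨t, ht⟩ := h
  have h2 := congrFun ht 2
  have h0 := congrFun ht 0
  simp at h2
  simp [h2] at h0
  exact h0.symm

-- line memberships
lemma memL1_p1 (a : F) : (p1 a).submodule ≤ (p1 0).submodule ⊔ (p2 0).submodule := by
  apply le_of_mem_p1
  refine Submodule.mem_sup.2 ⟨![1, 0, 0], ?_, a • ![0, 1, 0], ?_, ?_⟩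
  · rw [p1, submodule_mk]; exact Submodule.mem_span_singleton_self _
  · rw [p2, submodule_mk]
    exact Submodule.smul_mem _ _ (Submodule.mem_span_singleton_self _)
  · funext i; fin_cases i <;> simp

lemma memL2_p2 (b : F) : (p2 b).submodule ≤ (p2 0).submodule ⊔ (p3 0).submodule := by
  apply le_of_mem_p2
  refine Submodule.mem_sup.2 ⟨![0, 1, 0], ?_, b • ![0, 0, 1], ?_, ?_⟩
  · rw [p2, submodule_mk]; exact Submodule.mem_span_singleton_self _
  · rw [p3, submodule_mk]
    exact Submodule.smul_mem _ _ (Submodule.mem_span_singleton_self _)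
  · funext i; fin_cases i <;> simp

lemma memL3_p3 (c : F) : (p3 c).submodule ≤ (p3 0).submodule ⊔ (p1 0).submodule := by
  apply le_of_mem_p3
  refine Submodule.mem_sup.2 ⟨![0, 0, 1], ?_, c • ![1, 0, 0], ?_, ?_⟩
  · rw [p3, submodule_mk]; exact Submodule.mem_span_singleton_self _
  · rw [p1, submodule_mk]
    exact Submodule.smul_mem _ _ (Submodule.mem_span_singleton_self _)
  · funext i; fin_cases i <;> simp

lemma top3 {W : Submodule F (Fin 3 → F)} (h0 : ![1, 0, 0] ∈ W) (h1 : ![0, 1, 0] ∈ W)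
    (h2 : ![0, 0, 1] ∈ W) : W = ⊤ := by
  rw [Submodule.eq_top_iff']
  intro v
  have hv : v = v 0 • ![1, 0, 0] + v 1 • ![0, 1, 0] + v 2 • ![0, 0, 1] := by
    funext i; fin_cases i <;> simp
  have := W.add_mem (W.add_mem (W.smul_mem (v 0) h0) (W.smul_mem (v 1) h1))
    (W.smul_mem (v 2) h2)
  rwa [← hv] at this

lemma rank_sup_two {P Q : Projectivization F (Fin 3 → F)} (h : P ≠ Q) :
    finrank F ↥(P.submodule ⊔ Q.submodule) = 2 := by
  have hinf : P.submodule ⊓ Q.submodule = ⊥ := by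
    by_contra hne
    have hle : finrank F ↥(P.submodule ⊓ Q.submodule) ≤ 1 := by
      have := Submodule.finrank_mono (inf_le_left : P.submodule ⊓ Q.submodule ≤ P.submodule)
      rwa [P.finrank_submodule] at this
    have hne0 : finrank F ↥(P.submodule ⊓ Q.submodule) ≠ 0 := fun h' =>
      hne (Submodule.finrank_eq_zero.1 h')
    have h2 : finrank F ↥(P.submodule ⊓ Q.submodule) = 1 := le_antisymm hle (by omega)
    have e1' : P.submodule ⊓ Q.submodule = P.submodule :=
      Submodule.eq_of_le_of_finrank_le inf_le_left (by rw [P.finrank_submodule, h2])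
    have e2' : P.submodule ⊓ Q.submodule = Q.submodule :=
      Submodule.eq_of_le_of_finrank_le inf_le_right (by rw [Q.finrank_submodule, h2])
    exact h (submodule_injective (e1'.symm.trans e2'))
  have hsum := Submodule.finrank_sup_add_finrank_inf_eq P.submodule Q.submodule
  rw [hinf, finrank_bot, P.finrank_submodule, Q.finrank_submodule] at hsum
  omega

lemma line_eq {W L : Submodule F (Fin 3 → F)} {P Q : Projectivization F (Fin 3 → F)}
    (hPQ : P ≠ Q) (hW : finrank F W = 2) (hL : finrank F L = 2)
    (hPW : P.submodule ≤ W) (hQW : Q.submodule ≤ W)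
    (hPL : P.submodule ≤ L) (hQL : Q.submodule ≤ L) : W = L := by
  have hs := rank_sup_two hPQ
  have h1 : P.submodule ⊔ Q.submodule = W :=
    Submodule.eq_of_le_of_finrank_le (sup_le hPW hQW) (by rw [hW, hs])
  have h2 : P.submodule ⊔ Q.submodule = L :=
    Submodule.eq_of_le_of_finrank_le (sup_le hPL hQL) (by rw [hL, hs])
  rw [← h1, h2]

lemma killdet {W : Submodule F (Fin 3 → F)} (hW : finrank F W = 2) {a b c : F}
    (habc : a * b * c ≠ -1)
    (h1 : (p1 a).submodule ≤ W) (h2 : (p2 b).submodule ≤ W)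
    (h3 : (p3 c).submodule ≤ W) : False := by
  have m1 := mem_of_le_p1 h1
  have m2 := mem_of_le_p2 h2
  have m3 := mem_of_le_p3 h3
  have hd0 : (1 + a * b * c : F) ≠ 0 := fun h => habc (by linear_combination h)
  have k0 : (![1, 0, 0] : Fin 3 → F) ∈ W := by
    have h' : (1 + a * b * c : F)⁻¹ • (![1, a, 0] + (-a) • ![0, 1, b] + (a * b) • ![c, 0, 1])
        = (![1, 0, 0] : Fin 3 → F) := by
      funext i; fin_cases i <;> simp <;> (try field_simp) <;> (try ring)
    rw [← h']
    exact W.smul_mem _ (W.add_mem (W.add_mem m1 (W.smul_mem _ m2)) (W.smul_mem _ m3))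
  have k1 : (![0, 1, 0] : Fin 3 → F) ∈ W := by
    have h' : (1 + a * b * c : F)⁻¹ • (![0, 1, b] + (-b) • ![c, 0, 1] + (b * c) • ![1, a, 0])
        = (![0, 1, 0] : Fin 3 → F) := by
      funext i; fin_cases i <;> simp <;> (try field_simp) <;> (try ring)
    rw [← h']
    exact W.smul_mem _ (W.add_mem (W.add_mem m2 (W.smul_mem _ m3)) (W.smul_mem _ m1))
  have k2 : (![0, 0, 1] : Fin 3 → F) ∈ W := by
    have h' : (1 + a * b * c : F)⁻¹ • (![c, 0, 1] + (-c) • ![1, a, 0] + (c * a) • ![0, 1, b])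
        = (![0, 0, 1] : Fin 3 → F) := by
      funext i; fin_cases i <;> simp <;> (try field_simp) <;> (try ring)
    rw [← h']
    exact W.smul_mem _ (W.add_mem (W.add_mem m3 (W.smul_mem _ m1)) (W.smul_mem _ m2))
  have htop := top3 k0 k1 k2
  rw [htop, finrank_top, Module.finrank_fin_fun] at hW
  omega

end QArcAux

attribute [irreducible] QArcAux.p1 QArcAux.p2 QArcAux.p3

set_option maxHeartbeats 1000000 in
open QArcAux Projectivization Module in
/-- For every odd prime power `q` and every `x ≤ (q-1)/2`, there exists a
balanced quasi-arc of weight `x` in `PG(2,q)`. -/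
theorem stmt3 {F : Type*} [Field F] [Fintype F] (hq : Odd (Fintype.card F))
    (x : ℕ) (hx : x ≤ (Fintype.card F - 1) / 2) :
    ∃ (E1 E2 E3 : Projectivization F (Fin 3 → F))
      (G1 G2 G3 : Finset (Projectivization F (Fin 3 → F))),
      IsBalancedQuasiArc F x E1 E2 E3 G1 G2 G3 := by
  classical
  have hchar : ringChar F ≠ 2 := by
    intro h
    have := FiniteField.even_card_of_char_two h
    rw [Nat.odd_iff] at hq
    omega
  -- counting squares and nonsquares
  set Sq : Finset F := Finset.univ.filter fun a => quadraticChar F a = 1 with hSqdef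
  set Ns : Finset F := Finset.univ.filter fun a => quadraticChar F a = -1 with hNsdef
  have hSqmem : ∀ a ∈ Sq, quadraticChar F a = 1 := fun a ha => (Finset.mem_filter.1 ha).2
  have hNsmem : ∀ a ∈ Ns, quadraticChar F a = -1 := fun a ha => (Finset.mem_filter.1 ha).2
  have hdisj : Disjoint Sq Ns := by
    rw [Finset.disjoint_left]
    intro a ha hb
    have h1 := hSqmem a ha
    have h2 := hNsmem a hb
    rw [h1] at h2
    exact absurd h2 (by norm_num)
  have hzero : ∀ a : F, a ≠ 0 → a ∈ Sq ∨ a ∈ Ns := by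
    intro a ha
    rcases quadraticChar_isQuadratic F a with h | h | h
    · exact absurd (quadraticChar_eq_zero_iff.1 h) ha
    · exact Or.inl (Finset.mem_filter.2 ⟨Finset.mem_univ _, h⟩)
    · exact Or.inr (Finset.mem_filter.2 ⟨Finset.mem_univ _, h⟩)
  have hne00 : ∀ a ∈ Sq, a ≠ 0 := by
    rintro a ha rfl
    have := hSqmem 0 ha
    rw [quadraticChar_zero] at this
    exact absurd this (by norm_num)
  have hne0Ns : ∀ a ∈ Ns, a ≠ 0 := by
    rintro a ha rfl
    have := hNsmem 0 ha
    rw [quadraticChar_zero] at this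
    exact absurd this (by norm_num)
  have hunion : Sq ∪ Ns = Finset.univ.erase 0 := by
    ext a
    simp only [Finset.mem_union, Finset.mem_erase, Finset.mem_univ, and_true]
    constructor
    · rintro (h | h)
      · exact hne00 a h
      · exact hne0Ns a h
    · exact hzero a
  have hcards : Sq.card + Ns.card = Fintype.card F - 1 := by
    rw [← Finset.card_union_of_disjoint hdisj, hunion,
      Finset.card_erase_of_mem (Finset.mem_univ _), Finset.card_univ]
  have hcardeq : Sq.card = Ns.card := by
    have hs0 := quadraticChar_sum_zero hchar
    have hsub : ∑ a ∈ Sq ∪ Ns, quadraticChar F a = ∑ a : F, quadraticChar F a := by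
      apply Finset.sum_subset (Finset.subset_univ _)
      intro a _ ha
      rcases quadraticChar_isQuadratic F a with h | h | h
      · exact h
      · refine absurd (Finset.mem_union_left Ns ?_) ha
        rw [hSqdef]
        exact Finset.mem_filter.2 ⟨Finset.mem_univ a, h⟩
      · refine absurd (Finset.mem_union_right Sq ?_) ha
        rw [hNsdef]
        exact Finset.mem_filter.2 ⟨Finset.mem_univ a, h⟩
    rw [Finset.sum_union hdisj] at hsub
    have hs1 : ∑ a ∈ Sq, quadraticChar F a = (Sq.card : ℤ) := by
      rw [Finset.sum_congr rfl hSqmem, Finset.sum_const, nsmul_eq_mul, mul_one]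
    have hs2 : ∑ a ∈ Ns, quadraticChar F a = -(Ns.card : ℤ) := by
      rw [Finset.sum_congr rfl hNsmem, Finset.sum_const, nsmul_eq_mul, mul_neg_one]
    rw [hs1, hs2, hs0] at hsub
    omega
  have hcardF : 0 < Fintype.card F := Fintype.card_pos
  have hqodd : Fintype.card F % 2 = 1 := Nat.odd_iff.1 hq
  have hxSq : x ≤ Sq.card := by omega
  have hxNs : x ≤ Ns.card := by omega
  obtain ⟨S1, hS1sub, hS1card⟩ := Finset.exists_subset_card_eq (s := Sq) (n := x) hxSq
  obtain ⟨S2, hS2sub, hS2card⟩ := Finset.exists_subset_card_eq (s := Sq) (n := x) hxSq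
  obtain ⟨S3, hS3sub, hS3card⟩ :
      ∃ S3 : Finset F, (∀ c ∈ S3, c ≠ 0 ∧ quadraticChar F c = -quadraticChar F (-1)) ∧
        S3.card = x := by
    by_cases hsq : IsSquare (-1 : F)
    · obtain ⟨S3, hsub, hcard⟩ := Finset.exists_subset_card_eq (s := Ns) (n := x) hxNs
      refine ⟨S3, fun c hc => ⟨hne0Ns c (hsub hc), ?_⟩, hcard⟩
      rw [hNsmem c (hsub hc), (quadraticChar_one_iff_isSquare (by
        intro h; rw [neg_eq_zero] at h; exact one_ne_zero h)).2 hsq]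
    · obtain ⟨S3, hsub, hcard⟩ := Finset.exists_subset_card_eq (s := Sq) (n := x) hxSq
      refine ⟨S3, fun c hc => ⟨hne00 c (hsub hc), ?_⟩, hcard⟩
      rw [hSqmem c (hsub hc), quadraticChar_neg_one_iff_not_isSquare.2 hsq]
      norm_num
  have hS1 : ∀ a ∈ S1, a ≠ 0 := fun a ha => hne00 a (hS1sub ha)
  have hS2 : ∀ a ∈ S2, a ≠ 0 := fun a ha => hne00 a (hS2sub ha)
  have hS3 : ∀ a ∈ S3, a ≠ 0 := fun a ha => (hS3sub a ha).1
  have habc : ∀ a ∈ S1, ∀ b ∈ S2, ∀ c ∈ S3, a * b * c ≠ -1 := by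
    intro a ha b hb c hc h
    have h1 := hSqmem a (hS1sub ha)
    have h2 := hSqmem b (hS2sub hb)
    have h3 := (hS3sub c hc).2
    have hm : quadraticChar F (a * b * c) = quadraticChar F a * quadraticChar F b *
        quadraticChar F c := by rw [map_mul, map_mul]
    rw [h, h1, h2, h3, one_mul, one_mul] at hm
    rcases quadraticChar_isQuadratic F (-1 : F) with h4 | h4 | h4 <;> rw [h4] at hm <;>
      norm_num at hm
    exact absurd ((quadraticChar_eq_zero_iff (a := (-1 : F))).1 h4)
      (by intro hh; rw [neg_eq_zero] at hh; exact one_ne_zero hh)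
  -- the construction
  refine ⟨p1 0, p2 0, p3 0, S1.image p1, S2.image p2, S3.image p3, ?_, ?_, ?_, ?_, ?_, ?_, ?_,
    ?_, ?_⟩
  · -- not_collinear
    rintro ⟨W, hW, h1, h2, h3⟩
    have := top3 (mem_of_le_p1 h1) (by simpa using mem_of_le_p2 h2) (by simpa using mem_of_le_p3 h3)
    rw [this, finrank_top, Module.finrank_fin_fun] at hW
    omega
  · rw [Finset.card_image_of_injective _ p1_inj]; exact hS1card
  · rw [Finset.card_image_of_injective _ p2_inj]; exact hS2card
  · rw [Finset.card_image_of_injective _ p3_inj]; exact hS3card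
  · -- sub_G1
    intro P hP
    obtain ⟨a, _, rfl⟩ := Finset.mem_image.1 hP
    exact memL1_p1 a
  · intro P hP
    obtain ⟨a, _, rfl⟩ := Finset.mem_image.1 hP
    exact memL2_p2 a
  · intro P hP
    obtain ⟨a, _, rfl⟩ := Finset.mem_image.1 hP
    exact memL3_p3 a
  · -- card_total
    have d12 : Disjoint (S1.image (p1 : F → _)) (S2.image p2) := by
      rw [Finset.disjoint_left]
      rintro P hP hQ
      obtain ⟨a, _, rfl⟩ := Finset.mem_image.1 hP
      obtain ⟨b, _, hb⟩ := Finset.mem_image.1 hQ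
      exact p1_ne_p2 a b hb.symm
    have d13 : Disjoint (S1.image (p1 : F → _)) (S3.image p3) := by
      rw [Finset.disjoint_left]
      rintro P hP hQ
      obtain ⟨a, _, rfl⟩ := Finset.mem_image.1 hP
      obtain ⟨b, _, hb⟩ := Finset.mem_image.1 hQ
      exact p1_ne_p3 a b hb.symm
    have d23 : Disjoint (S2.image (p2 : F → _)) (S3.image p3) := by
      rw [Finset.disjoint_left]
      rintro P hP hQ
      obtain ⟨a, _, rfl⟩ := Finset.mem_image.1 hP
      obtain ⟨b, _, hb⟩ := Finset.mem_image.1 hQ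
      exact p2_ne_p3 a b hb.symm
    have dA : ∀ P : Projectivization F (Fin 3 → F), (P = p1 0 ∨ P = p2 0 ∨ P = p3 0) →
        P ∉ S1.image (p1 : F → _) ∧ P ∉ S2.image p2 ∧ P ∉ S3.image p3 := by
      rintro P hP
      refine ⟨?_, ?_, ?_⟩ <;> intro hmem
      · obtain ⟨a, haS, ha⟩ := Finset.mem_image.1 hmem
        rcases hP with rfl | rfl | rfl
        · exact hS1 a haS (p1_inj ha)
        · exact p1_ne_p2 a 0 ha
        · exact p1_ne_p3 a 0 ha
      · obtain ⟨a, haS, ha⟩ := Finset.mem_image.1 hmem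
        rcases hP with rfl | rfl | rfl
        · exact p1_ne_p2 0 a ha.symm
        · exact hS2 a haS (p2_inj ha)
        · exact p2_ne_p3 a 0 ha
      · obtain ⟨a, haS, ha⟩ := Finset.mem_image.1 hmem
        rcases hP with rfl | rfl | rfl
        · exact p1_ne_p3 0 a ha.symm
        · exact p2_ne_p3 0 a ha.symm
        · exact hS3 a haS (p3_inj ha)
    have hA3 : ({p1 0, p2 0, p3 0} : Finset (Projectivization F (Fin 3 → F))).card = 3 := by
      rw [Finset.card_insert_of_notMem, Finset.card_insert_of_notMem, Finset.card_singleton]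
      · simp only [Finset.mem_singleton]
        exact p2_ne_p3 0 0
      · simp only [Finset.mem_insert, Finset.mem_singleton]
        push_neg
        exact ⟨p1_ne_p2 0 0, p1_ne_p3 0 0⟩
    have hdA1 : Disjoint ({p1 0, p2 0, p3 0} : Finset (Projectivization F (Fin 3 → F)))
        (S1.image p1) := by
      rw [Finset.disjoint_left]
      intro P hP
      simp only [Finset.mem_insert, Finset.mem_singleton] at hP
      exact (dA P hP).1
    have hdA2 : Disjoint ({p1 0, p2 0, p3 0} : Finset (Projectivization F (Fin 3 → F)))
        (S2.image p2) := by
      rw [Finset.disjoint_left]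
      intro P hP
      simp only [Finset.mem_insert, Finset.mem_singleton] at hP
      exact (dA P hP).2.1
    have hdA3 : Disjoint ({p1 0, p2 0, p3 0} : Finset (Projectivization F (Fin 3 → F)))
        (S3.image p3) := by
      rw [Finset.disjoint_left]
      intro P hP
      simp only [Finset.mem_insert, Finset.mem_singleton] at hP
      exact (dA P hP).2.2
    rw [Finset.card_union_of_disjoint (by
        rw [Finset.disjoint_union_left, Finset.disjoint_union_left]
        exact ⟨⟨hdA3, d13⟩, d23⟩),
      Finset.card_union_of_disjoint (by
        rw [Finset.disjoint_union_left]
        exact ⟨hdA2, d12⟩),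
      Finset.card_union_of_disjoint hdA1, hA3,
      Finset.card_image_of_injective _ p1_inj,
      Finset.card_image_of_injective _ p2_inj,
      Finset.card_image_of_injective _ p3_inj, hS1card, hS2card, hS3card]
    ring
  · -- secant
    intro W hW hne1 hne2 hne3
    by_contra hc
    push_neg at hc
    obtain ⟨P, Q, R, hP, hQ, hR, hPQ, hPR, hQR⟩ := Finset.two_lt_card_iff.1 hc
    simp only [Finset.mem_filter] at hP hQ hR
    obtain ⟨hPs, hPW⟩ := hP
    obtain ⟨hQs, hQW⟩ := hQ
    obtain ⟨hRs, hRW⟩ := hR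
    have hclass : ∀ X : Projectivization F (Fin 3 → F),
        X ∈ ({p1 0, p2 0, p3 0} : Finset _) ∪ S1.image p1 ∪ S2.image p2 ∪ S3.image p3 →
        X = p1 0 ∨ X = p2 0 ∨ X = p3 0 ∨ (∃ a ∈ S1, X = p1 a) ∨ (∃ a ∈ S2, X = p2 a) ∨
          (∃ a ∈ S3, X = p3 a) := by
      intro X hX
      simp only [Finset.mem_union, Finset.mem_insert, Finset.mem_singleton,
        Finset.mem_image] at hX
      rcases hX with ((h | h) | h) | h
      · tauto
      · obtain ⟨a, ha, rfl⟩ := h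
        exact Or.inr (Or.inr (Or.inr (Or.inl ⟨a, ha, rfl⟩)))
      · obtain ⟨a, ha, rfl⟩ := h
        exact Or.inr (Or.inr (Or.inr (Or.inr (Or.inl ⟨a, ha, rfl⟩))))
      · obtain ⟨a, ha, rfl⟩ := h
        exact Or.inr (Or.inr (Or.inr (Or.inr (Or.inr ⟨a, ha, rfl⟩))))
    have cP := hclass P hPs
    have cQ := hclass Q hQs
    have cR := hclass R hRs
    have kill1 : ∀ {X Y : Projectivization F (Fin 3 → F)}, X ≠ Y →
        X.submodule ≤ W → Y.submodule ≤ W →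
        X.submodule ≤ (p1 (0:F)).submodule ⊔ (p2 0).submodule →
        Y.submodule ≤ (p1 (0:F)).submodule ⊔ (p2 0).submodule → False :=
      fun hXY hXW hYW hXL hYL =>
        hne1 (line_eq hXY hW (rank_sup_two (p1_ne_p2 0 0)) hXW hYW hXL hYL)
    have kill2 : ∀ {X Y : Projectivization F (Fin 3 → F)}, X ≠ Y →
        X.submodule ≤ W → Y.submodule ≤ W →
        X.submodule ≤ (p2 (0:F)).submodule ⊔ (p3 0).submodule →
        Y.submodule ≤ (p2 (0:F)).submodule ⊔ (p3 0).submodule → False :=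
      fun hXY hXW hYW hXL hYL =>
        hne2 (line_eq hXY hW (rank_sup_two (p2_ne_p3 0 0)) hXW hYW hXL hYL)
    have kill3 : ∀ {X Y : Projectivization F (Fin 3 → F)}, X ≠ Y →
        X.submodule ≤ W → Y.submodule ≤ W →
        X.submodule ≤ (p3 (0:F)).submodule ⊔ (p1 0).submodule →
        Y.submodule ≤ (p3 (0:F)).submodule ⊔ (p1 0).submodule → False :=
      fun hXY hXW hYW hXL hYL =>
        hne3 (line_eq hXY hW (rank_sup_two ((p1_ne_p3 0 0).symm)) hXW hYW hXL hYL)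
    rcases cP with rfl | rfl | rfl | ⟨a, haS, rfl⟩ | ⟨a, haS, rfl⟩ | ⟨a, haS, rfl⟩
    · rcases cQ with rfl | rfl | rfl | ⟨b, hbS, rfl⟩ | ⟨b, hbS, rfl⟩ | ⟨b, hbS, rfl⟩
      · rcases cR with rfl | rfl | rfl | ⟨c, hcS, rfl⟩ | ⟨c, hcS, rfl⟩ | ⟨c, hcS, rfl⟩
        · exact kill1 hPQ hPW hQW (memL1_p1 0) (memL1_p1 0)
        · exact kill1 hPQ hPW hQW (memL1_p1 0) (memL1_p1 0)
        · exact kill1 hPQ hPW hQW (memL1_p1 0) (memL1_p1 0)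
        · exact kill1 hPQ hPW hQW (memL1_p1 0) (memL1_p1 0)
        · exact kill1 hPQ hPW hQW (memL1_p1 0) (memL1_p1 0)
        · exact kill1 hPQ hPW hQW (memL1_p1 0) (memL1_p1 0)
      · rcases cR with rfl | rfl | rfl | ⟨c, hcS, rfl⟩ | ⟨c, hcS, rfl⟩ | ⟨c, hcS, rfl⟩
        · exact kill1 hPQ hPW hQW (memL1_p1 0) le_sup_right
        · exact kill1 hPQ hPW hQW (memL1_p1 0) le_sup_right
        · exact kill1 hPQ hPW hQW (memL1_p1 0) le_sup_right
        · exact kill1 hPQ hPW hQW (memL1_p1 0) le_sup_right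
        · exact kill1 hPQ hPW hQW (memL1_p1 0) le_sup_right
        · exact kill1 hPQ hPW hQW (memL1_p1 0) le_sup_right
      · rcases cR with rfl | rfl | rfl | ⟨c, hcS, rfl⟩ | ⟨c, hcS, rfl⟩ | ⟨c, hcS, rfl⟩
        · exact kill3 hPQ hPW hQW le_sup_right (memL3_p3 0)
        · exact kill3 hPQ hPW hQW le_sup_right (memL3_p3 0)
        · exact kill3 hPQ hPW hQW le_sup_right (memL3_p3 0)
        · exact kill3 hPQ hPW hQW le_sup_right (memL3_p3 0)
        · exact kill3 hPQ hPW hQW le_sup_right (memL3_p3 0)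
        · exact kill3 hPQ hPW hQW le_sup_right (memL3_p3 0)
      · rcases cR with rfl | rfl | rfl | ⟨c, hcS, rfl⟩ | ⟨c, hcS, rfl⟩ | ⟨c, hcS, rfl⟩
        · exact kill1 hPQ hPW hQW (memL1_p1 0) (memL1_p1 b)
        · exact kill1 hPQ hPW hQW (memL1_p1 0) (memL1_p1 b)
        · exact kill1 hPQ hPW hQW (memL1_p1 0) (memL1_p1 b)
        · exact kill1 hPQ hPW hQW (memL1_p1 0) (memL1_p1 b)
        · exact kill1 hPQ hPW hQW (memL1_p1 0) (memL1_p1 b)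
        · exact kill1 hPQ hPW hQW (memL1_p1 0) (memL1_p1 b)
      · rcases cR with rfl | rfl | rfl | ⟨c, hcS, rfl⟩ | ⟨c, hcS, rfl⟩ | ⟨c, hcS, rfl⟩
        · exact kill1 hPR hPW hRW (memL1_p1 0) (memL1_p1 0)
        · exact kill1 hPR hPW hRW (memL1_p1 0) le_sup_right
        · exact kill3 hPR hPW hRW le_sup_right (memL3_p3 0)
        · exact kill1 hPR hPW hRW (memL1_p1 0) (memL1_p1 c)
        · exact kill2 hQR hQW hRW (memL2_p2 b) (memL2_p2 c)
        · exact kill3 hPR hPW hRW le_sup_right (memL3_p3 c)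
      · rcases cR with rfl | rfl | rfl | ⟨c, hcS, rfl⟩ | ⟨c, hcS, rfl⟩ | ⟨c, hcS, rfl⟩
        · exact kill3 hPQ hPW hQW le_sup_right (memL3_p3 b)
        · exact kill3 hPQ hPW hQW le_sup_right (memL3_p3 b)
        · exact kill3 hPQ hPW hQW le_sup_right (memL3_p3 b)
        · exact kill3 hPQ hPW hQW le_sup_right (memL3_p3 b)
        · exact kill3 hPQ hPW hQW le_sup_right (memL3_p3 b)
        · exact kill3 hPQ hPW hQW le_sup_right (memL3_p3 b)
    · rcases cQ with rfl | rfl | rfl | ⟨b, hbS, rfl⟩ | ⟨b, hbS, rfl⟩ | ⟨b, hbS, rfl⟩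
      · rcases cR with rfl | rfl | rfl | ⟨c, hcS, rfl⟩ | ⟨c, hcS, rfl⟩ | ⟨c, hcS, rfl⟩
        · exact kill1 hPQ hPW hQW le_sup_right (memL1_p1 0)
        · exact kill1 hPQ hPW hQW le_sup_right (memL1_p1 0)
        · exact kill1 hPQ hPW hQW le_sup_right (memL1_p1 0)
        · exact kill1 hPQ hPW hQW le_sup_right (memL1_p1 0)
        · exact kill1 hPQ hPW hQW le_sup_right (memL1_p1 0)
        · exact kill1 hPQ hPW hQW le_sup_right (memL1_p1 0)
      · rcases cR with rfl | rfl | rfl | ⟨c, hcS, rfl⟩ | ⟨c, hcS, rfl⟩ | ⟨c, hcS, rfl⟩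
        · exact kill1 hPQ hPW hQW le_sup_right le_sup_right
        · exact kill1 hPQ hPW hQW le_sup_right le_sup_right
        · exact kill1 hPQ hPW hQW le_sup_right le_sup_right
        · exact kill1 hPQ hPW hQW le_sup_right le_sup_right
        · exact kill1 hPQ hPW hQW le_sup_right le_sup_right
        · exact kill1 hPQ hPW hQW le_sup_right le_sup_right
      · rcases cR with rfl | rfl | rfl | ⟨c, hcS, rfl⟩ | ⟨c, hcS, rfl⟩ | ⟨c, hcS, rfl⟩
        · exact kill2 hPQ hPW hQW (memL2_p2 0) le_sup_right
        · exact kill2 hPQ hPW hQW (memL2_p2 0) le_sup_right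
        · exact kill2 hPQ hPW hQW (memL2_p2 0) le_sup_right
        · exact kill2 hPQ hPW hQW (memL2_p2 0) le_sup_right
        · exact kill2 hPQ hPW hQW (memL2_p2 0) le_sup_right
        · exact kill2 hPQ hPW hQW (memL2_p2 0) le_sup_right
      · rcases cR with rfl | rfl | rfl | ⟨c, hcS, rfl⟩ | ⟨c, hcS, rfl⟩ | ⟨c, hcS, rfl⟩
        · exact kill1 hPQ hPW hQW le_sup_right (memL1_p1 b)
        · exact kill1 hPQ hPW hQW le_sup_right (memL1_p1 b)
        · exact kill1 hPQ hPW hQW le_sup_right (memL1_p1 b)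
        · exact kill1 hPQ hPW hQW le_sup_right (memL1_p1 b)
        · exact kill1 hPQ hPW hQW le_sup_right (memL1_p1 b)
        · exact kill1 hPQ hPW hQW le_sup_right (memL1_p1 b)
      · rcases cR with rfl | rfl | rfl | ⟨c, hcS, rfl⟩ | ⟨c, hcS, rfl⟩ | ⟨c, hcS, rfl⟩
        · exact kill2 hPQ hPW hQW (memL2_p2 0) (memL2_p2 b)
        · exact kill2 hPQ hPW hQW (memL2_p2 0) (memL2_p2 b)
        · exact kill2 hPQ hPW hQW (memL2_p2 0) (memL2_p2 b)
        · exact kill2 hPQ hPW hQW (memL2_p2 0) (memL2_p2 b)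
        · exact kill2 hPQ hPW hQW (memL2_p2 0) (memL2_p2 b)
        · exact kill2 hPQ hPW hQW (memL2_p2 0) (memL2_p2 b)
      · rcases cR with rfl | rfl | rfl | ⟨c, hcS, rfl⟩ | ⟨c, hcS, rfl⟩ | ⟨c, hcS, rfl⟩
        · exact kill1 hPR hPW hRW le_sup_right (memL1_p1 0)
        · exact kill1 hPR hPW hRW le_sup_right le_sup_right
        · exact kill2 hPR hPW hRW (memL2_p2 0) le_sup_right
        · exact kill1 hPR hPW hRW le_sup_right (memL1_p1 c)
        · exact kill2 hPR hPW hRW (memL2_p2 0) (memL2_p2 c)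
        · exact kill3 hQR hQW hRW (memL3_p3 b) (memL3_p3 c)
    · rcases cQ with rfl | rfl | rfl | ⟨b, hbS, rfl⟩ | ⟨b, hbS, rfl⟩ | ⟨b, hbS, rfl⟩
      · rcases cR with rfl | rfl | rfl | ⟨c, hcS, rfl⟩ | ⟨c, hcS, rfl⟩ | ⟨c, hcS, rfl⟩
        · exact kill3 hPQ hPW hQW (memL3_p3 0) le_sup_right
        · exact kill3 hPQ hPW hQW (memL3_p3 0) le_sup_right
        · exact kill3 hPQ hPW hQW (memL3_p3 0) le_sup_right
        · exact kill3 hPQ hPW hQW (memL3_p3 0) le_sup_right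
        · exact kill3 hPQ hPW hQW (memL3_p3 0) le_sup_right
        · exact kill3 hPQ hPW hQW (memL3_p3 0) le_sup_right
      · rcases cR with rfl | rfl | rfl | ⟨c, hcS, rfl⟩ | ⟨c, hcS, rfl⟩ | ⟨c, hcS, rfl⟩
        · exact kill2 hPQ hPW hQW le_sup_right (memL2_p2 0)
        · exact kill2 hPQ hPW hQW le_sup_right (memL2_p2 0)
        · exact kill2 hPQ hPW hQW le_sup_right (memL2_p2 0)
        · exact kill2 hPQ hPW hQW le_sup_right (memL2_p2 0)
        · exact kill2 hPQ hPW hQW le_sup_right (memL2_p2 0)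
        · exact kill2 hPQ hPW hQW le_sup_right (memL2_p2 0)
      · rcases cR with rfl | rfl | rfl | ⟨c, hcS, rfl⟩ | ⟨c, hcS, rfl⟩ | ⟨c, hcS, rfl⟩
        · exact kill2 hPQ hPW hQW le_sup_right le_sup_right
        · exact kill2 hPQ hPW hQW le_sup_right le_sup_right
        · exact kill2 hPQ hPW hQW le_sup_right le_sup_right
        · exact kill2 hPQ hPW hQW le_sup_right le_sup_right
        · exact kill2 hPQ hPW hQW le_sup_right le_sup_right
        · exact kill2 hPQ hPW hQW le_sup_right le_sup_right
      · rcases cR with rfl | rfl | rfl | ⟨c, hcS, rfl⟩ | ⟨c, hcS, rfl⟩ | ⟨c, hcS, rfl⟩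
        · exact kill3 hPR hPW hRW (memL3_p3 0) le_sup_right
        · exact kill2 hPR hPW hRW le_sup_right (memL2_p2 0)
        · exact kill2 hPR hPW hRW le_sup_right le_sup_right
        · exact kill1 hQR hQW hRW (memL1_p1 b) (memL1_p1 c)
        · exact kill2 hPR hPW hRW le_sup_right (memL2_p2 c)
        · exact kill3 hPR hPW hRW (memL3_p3 0) (memL3_p3 c)
      · rcases cR with rfl | rfl | rfl | ⟨c, hcS, rfl⟩ | ⟨c, hcS, rfl⟩ | ⟨c, hcS, rfl⟩
        · exact kill2 hPQ hPW hQW le_sup_right (memL2_p2 b)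
        · exact kill2 hPQ hPW hQW le_sup_right (memL2_p2 b)
        · exact kill2 hPQ hPW hQW le_sup_right (memL2_p2 b)
        · exact kill2 hPQ hPW hQW le_sup_right (memL2_p2 b)
        · exact kill2 hPQ hPW hQW le_sup_right (memL2_p2 b)
        · exact kill2 hPQ hPW hQW le_sup_right (memL2_p2 b)
      · rcases cR with rfl | rfl | rfl | ⟨c, hcS, rfl⟩ | ⟨c, hcS, rfl⟩ | ⟨c, hcS, rfl⟩
        · exact kill3 hPQ hPW hQW (memL3_p3 0) (memL3_p3 b)
        · exact kill3 hPQ hPW hQW (memL3_p3 0) (memL3_p3 b)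
        · exact kill3 hPQ hPW hQW (memL3_p3 0) (memL3_p3 b)
        · exact kill3 hPQ hPW hQW (memL3_p3 0) (memL3_p3 b)
        · exact kill3 hPQ hPW hQW (memL3_p3 0) (memL3_p3 b)
        · exact kill3 hPQ hPW hQW (memL3_p3 0) (memL3_p3 b)
    · rcases cQ with rfl | rfl | rfl | ⟨b, hbS, rfl⟩ | ⟨b, hbS, rfl⟩ | ⟨b, hbS, rfl⟩
      · rcases cR with rfl | rfl | rfl | ⟨c, hcS, rfl⟩ | ⟨c, hcS, rfl⟩ | ⟨c, hcS, rfl⟩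
        · exact kill1 hPQ hPW hQW (memL1_p1 a) (memL1_p1 0)
        · exact kill1 hPQ hPW hQW (memL1_p1 a) (memL1_p1 0)
        · exact kill1 hPQ hPW hQW (memL1_p1 a) (memL1_p1 0)
        · exact kill1 hPQ hPW hQW (memL1_p1 a) (memL1_p1 0)
        · exact kill1 hPQ hPW hQW (memL1_p1 a) (memL1_p1 0)
        · exact kill1 hPQ hPW hQW (memL1_p1 a) (memL1_p1 0)
      · rcases cR with rfl | rfl | rfl | ⟨c, hcS, rfl⟩ | ⟨c, hcS, rfl⟩ | ⟨c, hcS, rfl⟩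
        · exact kill1 hPQ hPW hQW (memL1_p1 a) le_sup_right
        · exact kill1 hPQ hPW hQW (memL1_p1 a) le_sup_right
        · exact kill1 hPQ hPW hQW (memL1_p1 a) le_sup_right
        · exact kill1 hPQ hPW hQW (memL1_p1 a) le_sup_right
        · exact kill1 hPQ hPW hQW (memL1_p1 a) le_sup_right
        · exact kill1 hPQ hPW hQW (memL1_p1 a) le_sup_right
      · rcases cR with rfl | rfl | rfl | ⟨c, hcS, rfl⟩ | ⟨c, hcS, rfl⟩ | ⟨c, hcS, rfl⟩
        · exact kill1 hPR hPW hRW (memL1_p1 a) (memL1_p1 0)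
        · exact kill1 hPR hPW hRW (memL1_p1 a) le_sup_right
        · exact kill2 hQR hQW hRW le_sup_right le_sup_right
        · exact kill1 hPR hPW hRW (memL1_p1 a) (memL1_p1 c)
        · exact kill2 hQR hQW hRW le_sup_right (memL2_p2 c)
        · exact kill3 hQR hQW hRW (memL3_p3 0) (memL3_p3 c)
      · rcases cR with rfl | rfl | rfl | ⟨c, hcS, rfl⟩ | ⟨c, hcS, rfl⟩ | ⟨c, hcS, rfl⟩
        · exact kill1 hPQ hPW hQW (memL1_p1 a) (memL1_p1 b)
        · exact kill1 hPQ hPW hQW (memL1_p1 a) (memL1_p1 b)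
        · exact kill1 hPQ hPW hQW (memL1_p1 a) (memL1_p1 b)
        · exact kill1 hPQ hPW hQW (memL1_p1 a) (memL1_p1 b)
        · exact kill1 hPQ hPW hQW (memL1_p1 a) (memL1_p1 b)
        · exact kill1 hPQ hPW hQW (memL1_p1 a) (memL1_p1 b)
      · rcases cR with rfl | rfl | rfl | ⟨c, hcS, rfl⟩ | ⟨c, hcS, rfl⟩ | ⟨c, hcS, rfl⟩
        · exact kill1 hPR hPW hRW (memL1_p1 a) (memL1_p1 0)
        · exact kill1 hPR hPW hRW (memL1_p1 a) le_sup_right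
        · exact kill2 hQR hQW hRW (memL2_p2 b) le_sup_right
        · exact kill1 hPR hPW hRW (memL1_p1 a) (memL1_p1 c)
        · exact kill2 hQR hQW hRW (memL2_p2 b) (memL2_p2 c)
        · exact killdet hW (habc _ haS _ hbS _ hcS) hPW hQW hRW
      · rcases cR with rfl | rfl | rfl | ⟨c, hcS, rfl⟩ | ⟨c, hcS, rfl⟩ | ⟨c, hcS, rfl⟩
        · exact kill1 hPR hPW hRW (memL1_p1 a) (memL1_p1 0)
        · exact kill1 hPR hPW hRW (memL1_p1 a) le_sup_right
        · exact kill3 hQR hQW hRW (memL3_p3 b) (memL3_p3 0)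
        · exact kill1 hPR hPW hRW (memL1_p1 a) (memL1_p1 c)
        · exact killdet hW (habc _ haS _ hcS _ hbS) hPW hRW hQW
        · exact kill3 hQR hQW hRW (memL3_p3 b) (memL3_p3 c)
    · rcases cQ with rfl | rfl | rfl | ⟨b, hbS, rfl⟩ | ⟨b, hbS, rfl⟩ | ⟨b, hbS, rfl⟩
      · rcases cR with rfl | rfl | rfl | ⟨c, hcS, rfl⟩ | ⟨c, hcS, rfl⟩ | ⟨c, hcS, rfl⟩
        · exact kill1 hQR hQW hRW (memL1_p1 0) (memL1_p1 0)
        · exact kill2 hPR hPW hRW (memL2_p2 a) (memL2_p2 0)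
        · exact kill2 hPR hPW hRW (memL2_p2 a) le_sup_right
        · exact kill1 hQR hQW hRW (memL1_p1 0) (memL1_p1 c)
        · exact kill2 hPR hPW hRW (memL2_p2 a) (memL2_p2 c)
        · exact kill3 hQR hQW hRW le_sup_right (memL3_p3 c)
      · rcases cR with rfl | rfl | rfl | ⟨c, hcS, rfl⟩ | ⟨c, hcS, rfl⟩ | ⟨c, hcS, rfl⟩
        · exact kill2 hPQ hPW hQW (memL2_p2 a) (memL2_p2 0)
        · exact kill2 hPQ hPW hQW (memL2_p2 a) (memL2_p2 0)
        · exact kill2 hPQ hPW hQW (memL2_p2 a) (memL2_p2 0)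
        · exact kill2 hPQ hPW hQW (memL2_p2 a) (memL2_p2 0)
        · exact kill2 hPQ hPW hQW (memL2_p2 a) (memL2_p2 0)
        · exact kill2 hPQ hPW hQW (memL2_p2 a) (memL2_p2 0)
      · rcases cR with rfl | rfl | rfl | ⟨c, hcS, rfl⟩ | ⟨c, hcS, rfl⟩ | ⟨c, hcS, rfl⟩
        · exact kill2 hPQ hPW hQW (memL2_p2 a) le_sup_right
        · exact kill2 hPQ hPW hQW (memL2_p2 a) le_sup_right
        · exact kill2 hPQ hPW hQW (memL2_p2 a) le_sup_right
        · exact kill2 hPQ hPW hQW (memL2_p2 a) le_sup_right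
        · exact kill2 hPQ hPW hQW (memL2_p2 a) le_sup_right
        · exact kill2 hPQ hPW hQW (memL2_p2 a) le_sup_right
      · rcases cR with rfl | rfl | rfl | ⟨c, hcS, rfl⟩ | ⟨c, hcS, rfl⟩ | ⟨c, hcS, rfl⟩
        · exact kill1 hQR hQW hRW (memL1_p1 b) (memL1_p1 0)
        · exact kill2 hPR hPW hRW (memL2_p2 a) (memL2_p2 0)
        · exact kill2 hPR hPW hRW (memL2_p2 a) le_sup_right
        · exact kill1 hQR hQW hRW (memL1_p1 b) (memL1_p1 c)
        · exact kill2 hPR hPW hRW (memL2_p2 a) (memL2_p2 c)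
        · exact killdet hW (habc _ hbS _ haS _ hcS) hQW hPW hRW
      · rcases cR with rfl | rfl | rfl | ⟨c, hcS, rfl⟩ | ⟨c, hcS, rfl⟩ | ⟨c, hcS, rfl⟩
        · exact kill2 hPQ hPW hQW (memL2_p2 a) (memL2_p2 b)
        · exact kill2 hPQ hPW hQW (memL2_p2 a) (memL2_p2 b)
        · exact kill2 hPQ hPW hQW (memL2_p2 a) (memL2_p2 b)
        · exact kill2 hPQ hPW hQW (memL2_p2 a) (memL2_p2 b)
        · exact kill2 hPQ hPW hQW (memL2_p2 a) (memL2_p2 b)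
        · exact kill2 hPQ hPW hQW (memL2_p2 a) (memL2_p2 b)
      · rcases cR with rfl | rfl | rfl | ⟨c, hcS, rfl⟩ | ⟨c, hcS, rfl⟩ | ⟨c, hcS, rfl⟩
        · exact kill3 hQR hQW hRW (memL3_p3 b) le_sup_right
        · exact kill2 hPR hPW hRW (memL2_p2 a) (memL2_p2 0)
        · exact kill2 hPR hPW hRW (memL2_p2 a) le_sup_right
        · exact killdet hW (habc _ hcS _ haS _ hbS) hRW hPW hQW
        · exact kill2 hPR hPW hRW (memL2_p2 a) (memL2_p2 c)
        · exact kill3 hQR hQW hRW (memL3_p3 b) (memL3_p3 c)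
    · rcases cQ with rfl | rfl | rfl | ⟨b, hbS, rfl⟩ | ⟨b, hbS, rfl⟩ | ⟨b, hbS, rfl⟩
      · rcases cR with rfl | rfl | rfl | ⟨c, hcS, rfl⟩ | ⟨c, hcS, rfl⟩ | ⟨c, hcS, rfl⟩
        · exact kill3 hPQ hPW hQW (memL3_p3 a) le_sup_right
        · exact kill3 hPQ hPW hQW (memL3_p3 a) le_sup_right
        · exact kill3 hPQ hPW hQW (memL3_p3 a) le_sup_right
        · exact kill3 hPQ hPW hQW (memL3_p3 a) le_sup_right
        · exact kill3 hPQ hPW hQW (memL3_p3 a) le_sup_right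
        · exact kill3 hPQ hPW hQW (memL3_p3 a) le_sup_right
      · rcases cR with rfl | rfl | rfl | ⟨c, hcS, rfl⟩ | ⟨c, hcS, rfl⟩ | ⟨c, hcS, rfl⟩
        · exact kill3 hPR hPW hRW (memL3_p3 a) le_sup_right
        · exact kill1 hQR hQW hRW le_sup_right le_sup_right
        · exact kill3 hPR hPW hRW (memL3_p3 a) (memL3_p3 0)
        · exact kill1 hQR hQW hRW le_sup_right (memL1_p1 c)
        · exact kill2 hQR hQW hRW (memL2_p2 0) (memL2_p2 c)
        · exact kill3 hPR hPW hRW (memL3_p3 a) (memL3_p3 c)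
      · rcases cR with rfl | rfl | rfl | ⟨c, hcS, rfl⟩ | ⟨c, hcS, rfl⟩ | ⟨c, hcS, rfl⟩
        · exact kill3 hPQ hPW hQW (memL3_p3 a) (memL3_p3 0)
        · exact kill3 hPQ hPW hQW (memL3_p3 a) (memL3_p3 0)
        · exact kill3 hPQ hPW hQW (memL3_p3 a) (memL3_p3 0)
        · exact kill3 hPQ hPW hQW (memL3_p3 a) (memL3_p3 0)
        · exact kill3 hPQ hPW hQW (memL3_p3 a) (memL3_p3 0)
        · exact kill3 hPQ hPW hQW (memL3_p3 a) (memL3_p3 0)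
      · rcases cR with rfl | rfl | rfl | ⟨c, hcS, rfl⟩ | ⟨c, hcS, rfl⟩ | ⟨c, hcS, rfl⟩
        · exact kill3 hPR hPW hRW (memL3_p3 a) le_sup_right
        · exact kill1 hQR hQW hRW (memL1_p1 b) le_sup_right
        · exact kill3 hPR hPW hRW (memL3_p3 a) (memL3_p3 0)
        · exact kill1 hQR hQW hRW (memL1_p1 b) (memL1_p1 c)
        · exact killdet hW (habc _ hbS _ hcS _ haS) hQW hRW hPW
        · exact kill3 hPR hPW hRW (memL3_p3 a) (memL3_p3 c)
      · rcases cR with rfl | rfl | rfl | ⟨c, hcS, rfl⟩ | ⟨c, hcS, rfl⟩ | ⟨c, hcS, rfl⟩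
        · exact kill3 hPR hPW hRW (memL3_p3 a) le_sup_right
        · exact kill2 hQR hQW hRW (memL2_p2 b) (memL2_p2 0)
        · exact kill3 hPR hPW hRW (memL3_p3 a) (memL3_p3 0)
        · exact killdet hW (habc _ hcS _ hbS _ haS) hRW hQW hPW
        · exact kill2 hQR hQW hRW (memL2_p2 b) (memL2_p2 c)
        · exact kill3 hPR hPW hRW (memL3_p3 a) (memL3_p3 c)
      · rcases cR with rfl | rfl | rfl | ⟨c, hcS, rfl⟩ | ⟨c, hcS, rfl⟩ | ⟨c, hcS, rfl⟩
        · exact kill3 hPQ hPW hQW (memL3_p3 a) (memL3_p3 b)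
        · exact kill3 hPQ hPW hQW (memL3_p3 a) (memL3_p3 b)
        · exact kill3 hPQ hPW hQW (memL3_p3 a) (memL3_p3 b)
        · exact kill3 hPQ hPW hQW (memL3_p3 a) (memL3_p3 b)
        · exact kill3 hPQ hPW hQW (memL3_p3 a) (memL3_p3 b)
        · exact kill3 hPQ hPW hQW (memL3_p3 a) (memL3_p3 b)
end

section
/- Let n ≥ k ≥ 1 and let G = {P_1,...,P_n} be a multiset of points of PG(k-1,q) of rank k. Draw points uniformly at random with replacement from G and let τ_P(G) be the number of draws until P lies in the span of the drawn points. Then E[τ_P(G)] = n·H_n − Σ_{s=1}^{n-1} α_P(G,s)/C(n-1,s), where α_P(G,s) is the number of s-element subsets S ⊆ [n] with P ∈ span{P_j : j ∈ S} and H_n is the n-th harmonic number. -/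
open scoped Classical
open Finset

noncomputable def aT (n t : ℕ) (S : Finset (Fin n)) : ℕ :=
  (Finset.univ.filter fun f : Fin t → Fin n => Finset.image f Finset.univ = S).card

lemma aT_zero (n : ℕ) (S : Finset (Fin n)) : aT n 0 S = if S = ∅ then 1 else 0 := by
  unfold aT
  have h : ∀ f : Fin 0 → Fin n, Finset.image f Finset.univ = S ↔ S = ∅ := by
    intro f
    simp [Finset.univ_eq_empty, eq_comm]
  by_cases hS : S = ∅
  · simp only [hS, if_pos rfl]
    rw [Finset.filter_true_of_mem (fun f _ => by simp [Finset.univ_eq_empty])]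
    simp
  · simp only [hS, if_neg hS]
    rw [Finset.filter_false_of_mem (fun f _ => by simp [Finset.univ_eq_empty, Ne.symm hS, eq_comm, hS])]
    simp

lemma aT_pos_empty (n t : ℕ) (ht : 1 ≤ t) : aT n t ∅ = 0 := by
  unfold aT
  rw [Finset.card_eq_zero, Finset.filter_eq_empty_iff]
  intro f _
  have : f ⟨0, ht⟩ ∈ Finset.image f Finset.univ := Finset.mem_image_of_mem f (Finset.mem_univ _)
  intro h
  rw [h] at this
  exact absurd this (Finset.notMem_empty _)

variable {n t : ℕ}

lemma image_cons (c : Fin n) (g : Fin t → Fin n) :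
    Finset.image (Fin.cons c g : Fin (t+1) → Fin n) Finset.univ
      = insert c (Finset.image g Finset.univ) := by
  ext x
  simp only [Finset.mem_image, Finset.mem_univ, true_and, Finset.mem_insert]
  constructor
  · rintro ⟨i, rfl⟩
    rcases Fin.eq_zero_or_eq_succ i with rfl | ⟨j, rfl⟩
    · left; simp
    · right; exact ⟨j, by simp⟩
  · rintro (rfl | ⟨j, rfl⟩)
    · exact ⟨0, by simp⟩
    · exact ⟨j.succ, by simp⟩

lemma insert_eq_iff' {c : Fin n} {T S : Finset (Fin n)} (hc : c ∈ S) :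
    insert c T = S ↔ T = S ∨ T = S.erase c := by
  constructor
  · intro h
    by_cases hcT : c ∈ T
    · left; rw [← h, Finset.insert_eq_self.2 hcT]
    · right
      ext x
      simp only [Finset.mem_erase, ← h, Finset.mem_insert]
      constructor
      · intro hx; exact ⟨fun he => hcT (he ▸ hx), Or.inr hx⟩
      · rintro ⟨hne, (rfl | hx)⟩
        · exact absurd rfl hne
        · exact hx
  · rintro (rfl | rfl)
    · exact Finset.insert_eq_self.2 hc
    · exact Finset.insert_erase hc

lemma card_fiber (S : Finset (Fin n)) (c : Fin n) :
    (Finset.univ.filter fun f : Fin (t+1) → Fin n =>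
        Finset.image f Finset.univ = S ∧ f 0 = c).card
      = (Finset.univ.filter fun g : Fin t → Fin n =>
          insert c (Finset.image g Finset.univ) = S).card := by
  refine Finset.card_nbij' (fun f => Fin.tail f) (fun g => Fin.cons c g) ?_ ?_ ?_ ?_
  · intro f hf
    simp only [Finset.mem_coe, Finset.mem_filter, Finset.mem_univ, true_and] at hf ⊢
    have h : (Fin.cons (f 0) (Fin.tail f) : Fin (t+1) → Fin n) = f := Fin.cons_self_tail f
    calc insert c (Finset.image (Fin.tail f) Finset.univ)
        = insert (f 0) (Finset.image (Fin.tail f) Finset.univ) := by rw [hf.2]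
      _ = Finset.image (Fin.cons (f 0) (Fin.tail f) : Fin (t+1) → Fin n) Finset.univ :=
          (image_cons _ _).symm
      _ = S := by rw [h, hf.1]
  · intro g hg
    simp only [Finset.mem_coe, Finset.mem_filter, Finset.mem_univ, true_and] at hg ⊢
    rw [image_cons]
    exact ⟨hg, by simp⟩
  · intro f hf
    simp only [Finset.mem_coe, Finset.mem_filter, Finset.mem_univ, true_and] at hf
    conv_rhs => rw [← Fin.cons_self_tail f]
    rw [hf.2]
  · intro g hg
    funext j; simp [Fin.tail, Fin.cons_succ]

lemma aT_succ (n t : ℕ) (S : Finset (Fin n)) :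
    aT n (t+1) S = ∑ c ∈ S, (aT n t S + aT n t (S.erase c)) := by
  unfold aT
  rw [Finset.card_eq_sum_card_fiberwise
    (f := fun f : Fin (t+1) → Fin n => f 0) (t := Finset.univ) (fun f _ => Finset.mem_univ _)]
  have key : ∀ c : Fin n,
      ((Finset.univ.filter fun f : Fin (t+1) → Fin n => Finset.image f Finset.univ = S).filter
        fun f => f 0 = c).card
      = if c ∈ S then
          (Finset.univ.filter fun g : Fin t → Fin n => Finset.image g Finset.univ = S).card
          + (Finset.univ.filter fun g : Fin t → Fin n =>
              Finset.image g Finset.univ = S.erase c).card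
        else 0 := by
    intro c
    rw [Finset.filter_filter, card_fiber]
    by_cases hc : c ∈ S
    · rw [if_pos hc]
      have h : (Finset.univ.filter fun g : Fin t → Fin n =>
          insert c (Finset.image g Finset.univ) = S)
        = (Finset.univ.filter fun g : Fin t → Fin n => Finset.image g Finset.univ = S)
          ∪ (Finset.univ.filter fun g : Fin t → Fin n =>
              Finset.image g Finset.univ = S.erase c) := by
        rw [← Finset.filter_or]
        apply Finset.filter_congr
        intro g _
        simp [insert_eq_iff' hc]
      rw [h, Finset.card_union_of_disjoint]
      rw [Finset.disjoint_left]
      intro g hg1 hg2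
      simp only [Finset.mem_filter, Finset.mem_univ, true_and] at hg1 hg2
      rw [hg1] at hg2
      exact (Finset.erase_eq_self.1 hg2.symm) hc
    · rw [if_neg hc]
      rw [Finset.card_eq_zero, Finset.filter_eq_empty_iff]
      intro g _ h
      exact hc (h ▸ Finset.mem_insert_self c _)
  calc ∑ c : Fin n, ((Finset.univ.filter fun f : Fin (t+1) → Fin n =>
          Finset.image f Finset.univ = S).filter fun f => f 0 = c).card
      = ∑ c : Fin n, (if c ∈ S then
          (Finset.univ.filter fun g : Fin t → Fin n => Finset.image g Finset.univ = S).card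
          + (Finset.univ.filter fun g : Fin t → Fin n =>
              Finset.image g Finset.univ = S.erase c).card else 0) :=
        Finset.sum_congr rfl fun c _ => key c
    _ = ∑ c ∈ S, (aT n t S + aT n t (S.erase c)) := by
        rw [Finset.sum_ite_mem]
        simp [aT]

noncomputable def AS (n : ℕ) (S : Finset (Fin n)) : ℝ :=
  ∑' t, (aT n t S : ℝ) / (n : ℝ) ^ t

lemma aT_le (n t : ℕ) (S : Finset (Fin n)) : aT n t S ≤ S.card ^ t := by
  classical
  calc aT n t S ≤ (Fintype.piFinset fun _ : Fin t => S).card := by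
        apply Finset.card_le_card
        intro f hf
        simp only [Finset.mem_filter, Finset.mem_univ, true_and] at hf
        rw [Fintype.mem_piFinset]
        intro i
        rw [← hf]
        exact Finset.mem_image_of_mem _ (Finset.mem_univ i)
    _ = S.card ^ t := by
        rw [Fintype.card_piFinset]
        simp

lemma summable_aT {n : ℕ} {S : Finset (Fin n)} (hS : S.card < n) :
    Summable (fun t => (aT n t S : ℝ) / (n : ℝ) ^ t) := by
  have hn0 : 0 < n := Nat.pos_of_ne_zero (by omega)
  have hn : (0 : ℝ) < n := by exact_mod_cast hn0
  refine Summable.of_nonneg_of_le (fun t => by positivity) (fun t => ?_)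
    (summable_geometric_of_lt_one (r := (S.card : ℝ) / n) (by positivity)
      ((div_lt_one hn).2 (by exact_mod_cast hS)))
  rw [div_pow]
  gcongr
  exact_mod_cast aT_le n t S

lemma AS_empty (n : ℕ) : AS n ∅ = 1 := by
  unfold AS
  rw [tsum_eq_single 0]
  · rw [aT_zero]; simp
  · intro t ht
    rw [aT_pos_empty n t (Nat.one_le_iff_ne_zero.2 ht)]
    simp

lemma AS_formula {n : ℕ} (S : Finset (Fin n)) (hS : S.card < n) :
    AS n S = 1 / ((n - 1).choose S.card : ℝ) := by
  induction S using Finset.strongInduction with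
  | _ S ih =>
  rcases Finset.eq_empty_or_nonempty S with rfl | hne
  · rw [AS_empty]; simp
  · have hn0 : 0 < n := Nat.pos_of_ne_zero (by omega)
    have hn : (0 : ℝ) < n := by exact_mod_cast hn0
    have hcpos : 1 ≤ S.card := Finset.card_pos.2 hne
    have hsum : Summable (fun t => (aT n t S : ℝ) / (n : ℝ) ^ t) := summable_aT hS
    have herase : ∀ c ∈ S, (S.erase c).card = S.card - 1 := fun c hc =>
      Finset.card_erase_of_mem hc
    have heraselt : ∀ c ∈ S, (S.erase c).card < n := fun c hc => by
      rw [herase c hc]; omega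
    have hsume : ∀ c ∈ S, Summable (fun t => (aT n t (S.erase c) : ℝ) / (n : ℝ) ^ t) :=
      fun c hc => summable_aT (heraselt c hc)
    -- the shifted series
    have hshift : AS n S = ∑' t, (aT n (t+1) S : ℝ) / (n : ℝ) ^ (t+1) := by
      conv_lhs => rw [AS, Summable.tsum_eq_zero_add hsum]
      rw [aT_zero, if_neg hne.ne_empty]
      simp
    -- rewrite the shifted term via the recurrence
    have hterm : ∀ t : ℕ, (aT n (t+1) S : ℝ) / (n : ℝ) ^ (t+1)
        = ∑ c ∈ S, ((1/n) * ((aT n t S : ℝ) / (n : ℝ) ^ t)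
            + (1/n) * ((aT n t (S.erase c) : ℝ) / (n : ℝ) ^ t)) := by
      intro t
      rw [aT_succ]
      push_cast
      rw [Finset.sum_div]
      apply Finset.sum_congr rfl
      intro c _
      rw [pow_succ]
      ring
    have hmain : AS n S = ∑ c ∈ S, ((1/n) * AS n S + (1/n) * AS n (S.erase c)) := by
      refine hshift.trans ?_
      calc ∑' t, (aT n (t+1) S : ℝ) / (n : ℝ) ^ (t+1)
          = ∑' t, ∑ c ∈ S, ((1/n) * ((aT n t S : ℝ) / (n : ℝ) ^ t)
              + (1/n) * ((aT n t (S.erase c) : ℝ) / (n : ℝ) ^ t)) := by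
            exact tsum_congr hterm
        _ = ∑ c ∈ S, ∑' t, ((1/n) * ((aT n t S : ℝ) / (n : ℝ) ^ t)
              + (1/n) * ((aT n t (S.erase c) : ℝ) / (n : ℝ) ^ t)) := by
            apply Summable.tsum_finsetSum
            intro c hc
            exact (hsum.mul_left _).add ((hsume c hc).mul_left _)
        _ = ∑ c ∈ S, ((1/n) * AS n S + (1/n) * AS n (S.erase c)) := by
            apply Finset.sum_congr rfl
            intro c hc
            rw [Summable.tsum_add (hsum.mul_left _) ((hsume c hc).mul_left _),
              tsum_mul_left, tsum_mul_left]
            rfl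
    -- use the induction hypothesis
    have hIH : ∀ c ∈ S, AS n (S.erase c) = 1 / ((n-1).choose (S.card - 1) : ℝ) := by
      intro c hc
      rw [ih (S.erase c) (Finset.erase_ssubset hc) (heraselt c hc), herase c hc]
    rw [Finset.sum_congr rfl (fun c hc => by rw [hIH c hc])] at hmain
    rw [Finset.sum_const, nsmul_eq_mul] at hmain
    -- now solve the linear equation
    set s := S.card with hs
    set a := AS n S
    set B : ℝ := 1 / ((n-1).choose (s - 1) : ℝ)
    have hchoose1 : (n-1).choose (s-1) ≠ 0 :=
      (Nat.choose_pos (by omega)).ne'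
    have hchoose2 : (n-1).choose s ≠ 0 := (Nat.choose_pos (by omega)).ne'
    have hkey : ((n-1).choose s : ℝ) * s = ((n-1).choose (s-1) : ℝ) * (n - s) := by
      have h1 : (n-1).choose ((s-1)+1) * ((s-1)+1) = (n-1).choose (s-1) * ((n-1) - (s-1)) :=
        Nat.choose_succ_right_eq (n-1) (s-1)
      have h2 : (s-1)+1 = s := by omega
      have h3 : (n-1) - (s-1) = n - s := by omega
      rw [h2, h3] at h1
      have h4 : ((n:ℝ) - s) = ((n - s : ℕ) : ℝ) := by
        push_cast [Nat.cast_sub (le_of_lt hS)]; ring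
      rw [h4]
      exact_mod_cast h1
    have hns : (n : ℝ) - s ≠ 0 := by
      have h6 : (s : ℝ) < n := by exact_mod_cast hS
      linarith
    have h5 : ((n : ℝ) - s) * a = s * B := by
      have hn' : (n : ℝ) ≠ 0 := ne_of_gt hn
      have h7 : (n : ℝ) * a = (n : ℝ) * ((s : ℝ) * ((1:ℝ)/n * a + 1/n * B)) := by
        rw [← hmain]
      have h8 : (n : ℝ) * ((s : ℝ) * ((1:ℝ)/n * a + 1/n * B)) = s * a + s * B := by
        field_simp
      rw [h8] at h7
      linarith
    have hC2 : (0 : ℝ) < ((n-1).choose s : ℝ) := by exact_mod_cast Nat.pos_of_ne_zero hchoose2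
    have hC1 : (0 : ℝ) < ((n-1).choose (s-1) : ℝ) := by
      exact_mod_cast Nat.pos_of_ne_zero hchoose1
    have hspos : (0 : ℝ) < (s : ℝ) := by exact_mod_cast hcpos
    rw [eq_div_iff hC2.ne']
    have hBe : ((n-1).choose (s-1) : ℝ) * B = 1 := by
      simp only [B]
      field_simp
    have hfin : a * ((n-1).choose s : ℝ) * s = 1 * s := by
      calc a * ((n-1).choose s : ℝ) * s = a * (((n-1).choose s : ℝ) * s) := by ring
        _ = a * (((n-1).choose (s-1) : ℝ) * ((n:ℝ) - s)) := by rw [hkey]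
        _ = ((n-1).choose (s-1) : ℝ) * (((n:ℝ) - s) * a) := by ring
        _ = ((n-1).choose (s-1) : ℝ) * ((s:ℝ) * B) := by rw [h5]
        _ = (((n-1).choose (s-1) : ℝ) * B) * s := by ring
        _ = 1 * s := by rw [hBe]
    exact mul_right_cancel₀ hspos.ne' hfin

/-- The expected number of uniform draws (with replacement) from the family of
points `P` until `v` lies in the span of the drawn points, computed as
`E[τ] = ∑_{t ≥ 0} Pr[τ > t]`, where `Pr[τ > t]` is the proportion of length-`t`
draw sequences whose drawn points do not span `v`. -/
noncomputable def raExp {ι : Type*} [Fintype ι] {k : ℕ} {F : Type*} [Field F]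
    (P : ι → (Fin k → F)) (v : Fin k → F) : ℝ :=
  ∑' t : ℕ, (Nat.card {f : Fin t → ι //
      v ∉ Submodule.span F (Set.range (P ∘ f))} : ℝ) / (Fintype.card ι : ℝ) ^ t

/-- `alphaV P v s` is the number of `s`-element subsets `S` of the index set
with `v` in the span of the corresponding points. -/
noncomputable def alphaV {ι : Type*} [Fintype ι] {k : ℕ} {F : Type*} [Field F]
    (P : ι → (Fin k → F)) (v : Fin k → F) (s : ℕ) : ℕ :=
  ((Finset.univ.powersetCard s).filter fun S : Finset ι =>
    v ∈ Submodule.span F (P '' (S : Set ι))).card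

/-- The formula for the random access expectation:
`E[τ_P(G)] = n·H_n − ∑_{s=1}^{n-1} α_P(G,s)/C(n-1,s)`. -/
theorem stmt5 {F : Type*} [Field F] [Fintype F] {k n : ℕ} (hk : 1 ≤ k)
    (hkn : k ≤ n) (P : Fin n → (Fin k → F)) (hP0 : ∀ i, P i ≠ 0)
    (hrank : Submodule.span F (Set.range P) = ⊤) (i : Fin n) :
    raExp P (P i) =
      n * (harmonic n : ℝ) -
        ∑ s ∈ Finset.Icc 1 (n - 1),
          (alphaV P (P i) s : ℝ) / ((n - 1).choose s : ℝ) := by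
  classical
  have hn1 : 1 ≤ n := le_trans hk hkn
  set v := P i with hv
  set Bad : Finset (Finset (Fin n)) :=
    Finset.univ.powerset.filter
      (fun S => v ∉ Submodule.span F (P '' (S : Set (Fin n)))) with hBadDef
  have hcard_lt : ∀ S ∈ Bad, S.card < n := by
    intro S hS
    simp only [hBadDef, Finset.mem_filter, Finset.mem_powerset] at hS
    rcases lt_or_eq_of_le (Finset.card_le_card (Finset.subset_univ S)) with h | h
    · simpa using h
    · exfalso
      have hSu : S = Finset.univ :=
        Finset.eq_univ_of_card S (by simpa using h)
      apply hS.2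
      rw [hSu]
      have h2 : (P '' ((Finset.univ : Finset (Fin n)) : Set (Fin n))) = Set.range P := by
        rw [Finset.coe_univ, Set.image_univ]
      rw [h2, hrank]
      trivial
  have hrange : ∀ {t : ℕ} (f : Fin t → Fin n),
      Set.range (P ∘ f) = P '' ((Finset.image f Finset.univ : Finset (Fin n)) : Set (Fin n)) := by
    intro t f
    rw [Finset.coe_image, Finset.coe_univ, Set.image_univ, Set.range_comp]
  -- Step 1 : counting
  have hcount : ∀ t : ℕ, (Nat.card {f : Fin t → Fin n //
      v ∉ Submodule.span F (Set.range (P ∘ f))}) = ∑ S ∈ Bad, aT n t S := by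
    intro t
    rw [Nat.card_eq_fintype_card, Fintype.card_subtype]
    rw [Finset.card_eq_sum_card_fiberwise
      (f := fun f : Fin t → Fin n => Finset.image f Finset.univ) (t := Bad)
      (by
        intro f hf
        simp only [Finset.mem_coe, Finset.mem_filter, Finset.mem_univ, true_and] at hf
        simp only [hBadDef, Finset.mem_coe, Finset.mem_filter, Finset.mem_powerset]
        exact ⟨Finset.subset_univ _, by rwa [← hrange f]⟩)]
    apply Finset.sum_congr rfl
    intro S hS
    simp only [hBadDef, Finset.mem_filter, Finset.mem_powerset] at hS
    rw [Finset.filter_filter]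
    unfold aT
    apply congrArg
    apply Finset.filter_congr
    intro f _
    constructor
    · exact And.right
    · intro h
      refine ⟨?_, h⟩
      rw [hrange f, h]
      exact hS.2
  -- Step 2 : raExp as a sum over bad sets
  have hstep2 : raExp P v = ∑ S ∈ Bad, AS n S := by
    unfold raExp
    have h1 : ∀ t : ℕ, (Nat.card {f : Fin t → Fin n //
        v ∉ Submodule.span F (Set.range (P ∘ f))} : ℝ) / (Fintype.card (Fin n) : ℝ) ^ t
        = ∑ S ∈ Bad, (aT n t S : ℝ) / (n : ℝ) ^ t := by
      intro t
      rw [hcount t, Fintype.card_fin]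
      push_cast
      rw [Finset.sum_div]
    rw [tsum_congr h1]
    rw [Summable.tsum_finsetSum (fun S hS => summable_aT (hcard_lt S hS))]
    rfl
  have hstep3 : raExp P v = ∑ S ∈ Bad, 1 / (((n - 1).choose S.card : ℕ) : ℝ) := by
    rw [hstep2]
    exact Finset.sum_congr rfl fun S hS => AS_formula S (hcard_lt S hS)
  -- Step 4 : group by cardinality
  have hstep4 : raExp P v = ∑ s ∈ Finset.range n,
      ((Bad.filter fun S => S.card = s).card : ℝ) / (((n - 1).choose s : ℕ) : ℝ) := by
    rw [hstep3]
    rw [← Finset.sum_fiberwise_of_maps_to (g := fun S : Finset (Fin n) => S.card)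
      (t := Finset.range n) (fun S hS => Finset.mem_range.2 (hcard_lt S hS))]
    apply Finset.sum_congr rfl
    intro s _
    have hcg : ∑ S ∈ Bad.filter fun S => S.card = s,
        1 / (((n - 1).choose S.card : ℕ) : ℝ)
        = ∑ S ∈ Bad.filter fun S => S.card = s, 1 / (((n - 1).choose s : ℕ) : ℝ) :=
      Finset.sum_congr rfl (fun S hS => by rw [(Finset.mem_filter.1 hS).2])
    rw [hcg, Finset.sum_const, nsmul_eq_mul, mul_one_div]
  -- Step 5 : count bad sets of size s
  have hstep5 : ∀ s : ℕ, ((Bad.filter fun S => S.card = s).card : ℝ)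
      = (n.choose s : ℝ) - (alphaV P v s : ℝ) := by
    intro s
    have h1 : Bad.filter (fun S => S.card = s)
        = (Finset.univ.powersetCard s).filter
            (fun S : Finset (Fin n) => ¬ v ∈ Submodule.span F (P '' (S : Set (Fin n)))) := by
      rw [hBadDef, Finset.filter_filter, Finset.powersetCard_eq_filter, Finset.filter_filter]
      apply Finset.filter_congr
      intro S _
      tauto
    have h2 := Finset.card_filter_add_card_filter_not
      (s := (Finset.univ : Finset (Fin n)).powersetCard s)
      (p := fun S : Finset (Fin n) => v ∈ Submodule.span F (P '' (S : Set (Fin n))))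
    have h3 : ((Finset.univ.powersetCard s).filter
        (fun S : Finset (Fin n) => v ∈ Submodule.span F (P '' (S : Set (Fin n))))).card
        = alphaV P v s := rfl
    have h4 : ((Finset.univ : Finset (Fin n)).powersetCard s).card = n.choose s := by
      rw [Finset.card_powersetCard, Finset.card_univ, Fintype.card_fin]
    rw [h1]
    rw [h3, h4] at h2
    have h5 : ((Finset.univ.powersetCard s).filter
        (fun S : Finset (Fin n) => ¬ v ∈ Submodule.span F (P '' (S : Set (Fin n))))).card
        = n.choose s - alphaV P v s := by omega
    rw [h5]
    have h6 : alphaV P v s ≤ n.choose s := by omega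
    push_cast [Nat.cast_sub h6]
    ring
  -- Step 6 : final assembly
  have hterm : ∀ s ∈ Finset.range n,
      ((Bad.filter fun S => S.card = s).card : ℝ) / (((n - 1).choose s : ℕ) : ℝ)
      = (n.choose s : ℝ) / (((n-1).choose s : ℕ) : ℝ)
        - (alphaV P v s : ℝ) / (((n-1).choose s : ℕ) : ℝ) := by
    intro s _
    rw [hstep5 s, sub_div]
  rw [hstep4, Finset.sum_congr rfl hterm, Finset.sum_sub_distrib]
  congr 1
  · -- first sum is n * harmonic n
    have hA : ∀ s ∈ Finset.range n, (n.choose s : ℝ) / (((n-1).choose s : ℕ) : ℝ)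
        = (n : ℝ) * (((n - s : ℕ) : ℝ))⁻¹ := by
      intro s hs
      have hs' : s < n := Finset.mem_range.1 hs
      have hnat : n * (n-1).choose s = n.choose s * (n - s) := by
        have h1 := Nat.add_one_mul_choose_eq (n-1) s
        have h2 : n - 1 + 1 = n := by omega
        rw [h2] at h1
        have h3 := Nat.choose_succ_right_eq n s
        exact h1.trans h3
      have hd1 : (((n-1).choose s : ℕ) : ℝ) ≠ 0 := by
        exact_mod_cast (Nat.choose_pos (by omega)).ne'
      have hd2 : (((n - s : ℕ)) : ℝ) ≠ 0 := by
        have hp : 0 < n - s := by omega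
        exact_mod_cast hp.ne'
      rw [← div_eq_mul_inv, div_eq_div_iff hd1 hd2]
      exact_mod_cast hnat.symm
    rw [Finset.sum_congr rfl hA, ← Finset.mul_sum]
    congr 1
    have hrefl := Finset.sum_range_reflect (fun j => (((j + 1 : ℕ)) : ℝ)⁻¹) n
    have hcg : ∀ s ∈ Finset.range n,
        (((n - s : ℕ)) : ℝ)⁻¹ = (fun j => (((j + 1 : ℕ)) : ℝ)⁻¹) (n - 1 - s) := by
      intro s hs
      have hs' : s < n := Finset.mem_range.1 hs
      simp only
      congr 2
      omega
    rw [Finset.sum_congr rfl hcg, hrefl]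
    rw [harmonic]
    push_cast
    rfl
  · -- second sum : drop the 0 term
    have h0 : alphaV P v 0 = 0 := by
      unfold alphaV
      rw [Finset.powersetCard_zero]
      rw [Finset.card_eq_zero, Finset.filter_eq_empty_iff]
      intro S hS
      rw [Finset.mem_singleton] at hS
      subst hS
      simp only [Finset.coe_empty, Set.image_empty, Submodule.span_empty, Submodule.mem_bot]
      exact hP0 i
    have hsplit : Finset.range n = insert 0 (Finset.Icc 1 (n-1)) := by
      ext x
      simp only [Finset.mem_range, Finset.mem_insert, Finset.mem_Icc]
      omega
    rw [hsplit, Finset.sum_insert (by simp)]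
    rw [h0]
    simp
end

section
/- Let x ≥ 0 be an integer and let G_x be a balanced quasi-arc of weight x in PG(2,q) (so n = 3x+3). Then the expected number of uniform draws with replacement until a fixed fundamental point is in the span of the drawn points equals E[τ_F(G_x)] = 3 + 2/(3x+1) − 2((x+2)(x+1)+x)/((3x+2)(3x+1)) + Σ_{s=3}^{x+2} ∏_{i=0}^{s-1} (x+2−i)/(3x+2−i). -/
open scoped Classical

/-- The expected number of uniform draws with replacement from the point set
`G` until the point `E` lies in the projective span of the drawn points,
computed as `E[τ] = ∑_{t ≥ 0} Pr[τ > t]`. -/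
noncomputable def raExpP {F : Type*} [Field F]
    (G : Finset (Projectivization F (Fin 3 → F)))
    (E : Projectivization F (Fin 3 → F)) : ℝ :=
  ∑' t : ℕ, (Nat.card {f : Fin t → {P // P ∈ G} //
      ¬ E.submodule ≤ ⨆ i : Fin t, Projectivization.submodule (f i).val} : ℝ) /
    (G.card : ℝ) ^ t

namespace QArcAux

open Finset Module Projectivization

variable {F : Type*} [Field F]

local notation "Pt" => Projectivization F (Fin 3 → F)

lemma amb3 : Module.finrank F (Fin 3 → F) = 3 := Module.finrank_fin_fun F

lemma pt_le_pt {P Q : Pt} (h : P.submodule ≤ Q.submodule) : P = Q := by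
  apply Projectivization.submodule_injective
  exact Submodule.eq_of_le_of_finrank_le h (by rw [P.finrank_submodule, Q.finrank_submodule])

lemma sup_rank_le (P Q : Pt) : finrank F ↥(P.submodule ⊔ Q.submodule) ≤ 2 := by
  have := Submodule.finrank_sup_add_finrank_inf_eq P.submodule Q.submodule
  rw [P.finrank_submodule, Q.finrank_submodule] at this
  omega

lemma sup_rank_eq {P Q : Pt} (h : P ≠ Q) : finrank F ↥(P.submodule ⊔ Q.submodule) = 2 := by
  refine le_antisymm (sup_rank_le P Q) ?_
  have hlt : P.submodule < P.submodule ⊔ Q.submodule := by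
    refine lt_of_le_of_ne le_sup_left fun he => ?_
    exact h (pt_le_pt (le_sup_right.trans he.ge)).symm
  have := Submodule.finrank_lt_finrank_of_lt hlt
  rw [P.finrank_submodule] at this
  omega

lemma line_eq_sup {P Q : Pt} (h : P ≠ Q) {W : Submodule F (Fin 3 → F)}
    (hW : finrank F W ≤ 2)
    (hP : P.submodule ≤ W) (hQ : Q.submodule ≤ W) : P.submodule ⊔ Q.submodule = W :=
  (Submodule.eq_of_le_of_finrank_le (sup_le hP hQ) (by rw [sup_rank_eq h]; exact hW)).symm ▸ rfl

lemma line_eq_sup' {P Q : Pt} (h : P ≠ Q) {W : Submodule F (Fin 3 → F)}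
    (hW : finrank F W ≤ 2)
    (hP : P.submodule ≤ W) (hQ : Q.submodule ≤ W) : P.submodule ⊔ Q.submodule = W :=
  Submodule.eq_of_le_of_finrank_le (sup_le hP hQ) (by rw [sup_rank_eq h]; exact hW)

lemma point_of_two_lines {P A B C D Q : Pt} (hAB : A ≠ B) (hCD : C ≠ D)
    (hne : A.submodule ⊔ B.submodule ≠ C.submodule ⊔ D.submodule)
    (hP1 : P.submodule ≤ A.submodule ⊔ B.submodule)
    (hP2 : P.submodule ≤ C.submodule ⊔ D.submodule)
    (hQ1 : Q.submodule ≤ A.submodule ⊔ B.submodule)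
    (hQ2 : Q.submodule ≤ C.submodule ⊔ D.submodule) : P = Q := by
  set W := (A.submodule ⊔ B.submodule) ⊓ (C.submodule ⊔ D.submodule) with hWdef
  have hrk : finrank F ↥W ≤ 1 := by
    by_contra hc
    push_neg at hc
    have h1 : W ≤ A.submodule ⊔ B.submodule := inf_le_left
    have h2 : W ≤ C.submodule ⊔ D.submodule := inf_le_right
    have e1 : W = A.submodule ⊔ B.submodule :=
      Submodule.eq_of_le_of_finrank_le h1 (by rw [sup_rank_eq hAB]; omega)
    have e2 : W = C.submodule ⊔ D.submodule :=
      Submodule.eq_of_le_of_finrank_le h2 (by rw [sup_rank_eq hCD]; omega)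
    exact hne (e1 ▸ e2)
  have hQW : Q.submodule ≤ W := le_inf hQ1 hQ2
  have hQeq : Q.submodule = W := by
    refine Submodule.eq_of_le_of_finrank_le hQW ?_
    rw [Q.finrank_submodule]; omega
  exact pt_le_pt (hQeq ▸ le_inf hP1 hP2)

variable {x : ℕ} {E1 E2 E3 : Projectivization F (Fin 3 → F)}
  {G1 G2 G3 : Finset (Projectivization F (Fin 3 → F))}

lemma ne12 (h : IsBalancedQuasiArc F x E1 E2 E3 G1 G2 G3) : E1 ≠ E2 := by
  intro he
  exact h.not_collinear ⟨E1.submodule ⊔ E3.submodule, sup_rank_le _ _, le_sup_left,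
    by rw [← he]; exact le_sup_left, le_sup_right⟩

lemma ne23 (h : IsBalancedQuasiArc F x E1 E2 E3 G1 G2 G3) : E2 ≠ E3 := by
  intro he
  exact h.not_collinear ⟨E1.submodule ⊔ E2.submodule, sup_rank_le _ _, le_sup_left,
    le_sup_right, by rw [← he]; exact le_sup_right⟩

lemma ne13 (h : IsBalancedQuasiArc F x E1 E2 E3 G1 G2 G3) : E1 ≠ E3 := by
  intro he
  exact h.not_collinear ⟨E1.submodule ⊔ E2.submodule, sup_rank_le _ _, le_sup_left,
    le_sup_right, by rw [← he]; exact le_sup_left⟩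

lemma nc1 (h : IsBalancedQuasiArc F x E1 E2 E3 G1 G2 G3) :
    ¬ E1.submodule ≤ E2.submodule ⊔ E3.submodule := fun hle =>
  h.not_collinear ⟨E2.submodule ⊔ E3.submodule, sup_rank_le _ _, hle, le_sup_left, le_sup_right⟩

lemma nc2 (h : IsBalancedQuasiArc F x E1 E2 E3 G1 G2 G3) :
    ¬ E2.submodule ≤ E3.submodule ⊔ E1.submodule := fun hle =>
  h.not_collinear ⟨E3.submodule ⊔ E1.submodule, sup_rank_le _ _, le_sup_right, hle, le_sup_left⟩

lemma nc3 (h : IsBalancedQuasiArc F x E1 E2 E3 G1 G2 G3) :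
    ¬ E3.submodule ≤ E1.submodule ⊔ E2.submodule := fun hle =>
  h.not_collinear ⟨E1.submodule ⊔ E2.submodule, sup_rank_le _ _, le_sup_left, le_sup_right, hle⟩

lemma l12_ne_l23 (h : IsBalancedQuasiArc F x E1 E2 E3 G1 G2 G3) :
    E1.submodule ⊔ E2.submodule ≠ E2.submodule ⊔ E3.submodule := fun he =>
  nc1 h (he ▸ le_sup_left)

lemma l12_ne_l31 (h : IsBalancedQuasiArc F x E1 E2 E3 G1 G2 G3) :
    E1.submodule ⊔ E2.submodule ≠ E3.submodule ⊔ E1.submodule := fun he =>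
  nc3 h (by rw [he]; exact le_sup_left)

lemma l23_ne_l31 (h : IsBalancedQuasiArc F x E1 E2 E3 G1 G2 G3) :
    E2.submodule ⊔ E3.submodule ≠ E3.submodule ⊔ E1.submodule := fun he =>
  nc2 h (by rw [← he]; exact le_sup_left)

/-- points on both L12 and L23 equal E2 -/
lemma meet_E2 (h : IsBalancedQuasiArc F x E1 E2 E3 G1 G2 G3) {P : Pt}
    (h1 : P.submodule ≤ E1.submodule ⊔ E2.submodule)
    (h2 : P.submodule ≤ E2.submodule ⊔ E3.submodule) : P = E2 :=
  point_of_two_lines (ne12 h) (ne23 h) (l12_ne_l23 h) h1 h2 le_sup_right le_sup_left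

lemma meet_E1 (h : IsBalancedQuasiArc F x E1 E2 E3 G1 G2 G3) {P : Pt}
    (h1 : P.submodule ≤ E1.submodule ⊔ E2.submodule)
    (h2 : P.submodule ≤ E3.submodule ⊔ E1.submodule) : P = E1 :=
  point_of_two_lines (ne12 h) ((ne13 h).symm) (l12_ne_l31 h) h1 h2 le_sup_left le_sup_right

lemma meet_E3 (h : IsBalancedQuasiArc F x E1 E2 E3 G1 G2 G3) {P : Pt}
    (h1 : P.submodule ≤ E2.submodule ⊔ E3.submodule)
    (h2 : P.submodule ≤ E3.submodule ⊔ E1.submodule) : P = E3 :=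
  point_of_two_lines (ne23 h) ((ne13 h).symm) (l23_ne_l31 h) h1 h2 le_sup_right le_sup_left

lemma memfacts (h : IsBalancedQuasiArc F x E1 E2 E3 G1 G2 G3) :
    (E1 ∉ G1 ∧ E1 ∉ G2 ∧ E1 ∉ G3) ∧ (E2 ∉ G1 ∧ E2 ∉ G2 ∧ E2 ∉ G3) ∧
    (E3 ∉ G1 ∧ E3 ∉ G2 ∧ E3 ∉ G3) ∧
    Disjoint G1 G2 ∧ Disjoint G1 G3 ∧ Disjoint G2 G3 := by
  classical
  have hc := h.card_total
  have l1 := Finset.card_union_le (({E1, E2, E3} : Finset Pt) ∪ G1 ∪ G2) G3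
  have l2 := Finset.card_union_le (({E1, E2, E3} : Finset Pt) ∪ G1) G2
  have l3 := Finset.card_union_le ({E1, E2, E3} : Finset Pt) G1
  have l4 : ({E1, E2, E3} : Finset Pt).card ≤ 3 := by
    apply le_trans (Finset.card_insert_le _ _)
    apply Nat.succ_le_succ
    apply le_trans (Finset.card_insert_le _ _)
    simp
  rw [h.card_G1] at l3
  rw [h.card_G2] at l2
  rw [h.card_G3] at l1
  have e1 : ((({E1, E2, E3} : Finset Pt) ∪ G1 ∪ G2) ∪ G3).card
      = (({E1, E2, E3} : Finset Pt) ∪ G1 ∪ G2).card + G3.card := by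
    rw [h.card_G3]; omega
  have e2 : ((({E1, E2, E3} : Finset Pt) ∪ G1) ∪ G2).card
      = (({E1, E2, E3} : Finset Pt) ∪ G1).card + G2.card := by
    rw [h.card_G2]; omega
  have e3 : (({E1, E2, E3} : Finset Pt) ∪ G1).card
      = ({E1, E2, E3} : Finset Pt).card + G1.card := by
    rw [h.card_G1]; omega
  have d3 : Disjoint (({E1, E2, E3} : Finset Pt) ∪ G1 ∪ G2) G3 :=
    Finset.card_union_eq_card_add_card.mp e1
  have d2 : Disjoint (({E1, E2, E3} : Finset Pt) ∪ G1) G2 :=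
    Finset.card_union_eq_card_add_card.mp e2
  have d1 : Disjoint ({E1, E2, E3} : Finset Pt) G1 :=
    Finset.card_union_eq_card_add_card.mp e3
  rw [Finset.disjoint_left] at d1 d2 d3
  refine ⟨⟨fun hm => d1 (by simp) hm, fun hm => d2 (by simp) hm, fun hm => d3 (by simp) hm⟩,
    ⟨fun hm => d1 (by simp) hm, fun hm => d2 (by simp) hm, fun hm => d3 (by simp) hm⟩,
    ⟨fun hm => d1 (by simp) hm, fun hm => d2 (by simp) hm, fun hm => d3 (by simp) hm⟩,
    ?_, ?_, ?_⟩
  · rw [Finset.disjoint_left]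
    intro a ha hm
    exact d2 (by simp [ha]) hm
  · rw [Finset.disjoint_left]
    intro a ha hm
    exact d3 (by simp [ha]) hm
  · rw [Finset.disjoint_left]
    intro a ha hm
    exact d3 (by simp [ha]) hm


lemma skew (h : IsBalancedQuasiArc F x E1 E2 E3 G1 G2 G3) {P Q : Pt}
    (hP : P ∈ ({E1, E2, E3} ∪ G1 ∪ G2 ∪ G3 : Finset Pt))
    (hQ : Q ∈ ({E1, E2, E3} ∪ G1 ∪ G2 ∪ G3 : Finset Pt))
    (hPQ : P ≠ Q) (hP1 : P ≠ E1) (hQ1 : Q ≠ E1)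
    (h12 : ¬(P.submodule ≤ E1.submodule ⊔ E2.submodule ∧
        Q.submodule ≤ E1.submodule ⊔ E2.submodule))
    (h31 : ¬(P.submodule ≤ E3.submodule ⊔ E1.submodule ∧
        Q.submodule ≤ E3.submodule ⊔ E1.submodule)) :
    ¬ E1.submodule ≤ P.submodule ⊔ Q.submodule := by
  intro hle
  set W := P.submodule ⊔ Q.submodule with hW
  by_cases c12 : W = E1.submodule ⊔ E2.submodule
  · exact h12 ⟨c12 ▸ le_sup_left, c12 ▸ le_sup_right⟩
  by_cases c23 : W = E2.submodule ⊔ E3.submodule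
  · exact nc1 h (c23 ▸ hle)
  by_cases c31 : W = E3.submodule ⊔ E1.submodule
  · exact h31 ⟨c31 ▸ le_sup_left, c31 ▸ le_sup_right⟩
  have hsec := h.secant W (sup_rank_eq hPQ) c12 c23 c31
  have hsubset : ({E1, P, Q} : Finset Pt) ⊆
      (({E1, E2, E3} ∪ G1 ∪ G2 ∪ G3 : Finset Pt).filter
        fun R => Projectivization.submodule R ≤ W) := by
    intro R hR
    simp only [Finset.mem_insert, Finset.mem_singleton] at hR
    rcases hR with rfl | rfl | rfl
    · exact Finset.mem_filter.mpr ⟨by simp, hle⟩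
    · exact Finset.mem_filter.mpr ⟨hP, le_sup_left⟩
    · exact Finset.mem_filter.mpr ⟨hQ, le_sup_right⟩
  have hcard : ({E1, P, Q} : Finset Pt).card = 3 := by
    rw [Finset.card_insert_of_notMem (by simp [Ne.symm hP1, Ne.symm hQ1]),
      Finset.card_insert_of_notMem (by simp [hPQ]), Finset.card_singleton]
  have := Finset.card_le_card hsubset
  omega

lemma classify (h : IsBalancedQuasiArc F x E1 E2 E3 G1 G2 G3) {t : ℕ}
    (f : Fin t → {P : Pt // P ∈ ({E1, E2, E3} ∪ G1 ∪ G2 ∪ G3 : Finset Pt)})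
    (hbad : ¬ E1.submodule ≤ ⨆ i, Projectivization.submodule (f i).val) :
    (∀ i, ((f i : Pt)) ∈ insert E2 (insert E3 G2)) ∨
    (∃ v ∈ G1 ∪ G3, ∀ i, ((f i : Pt)) = v) ∨
    (∃ p ∈ (G1 ×ˢ G3) ∪ (G1 ×ˢ insert E3 G2) ∪ (G3 ×ˢ insert E2 G2),
      (∀ i, ((f i : Pt)) = p.1 ∨ ((f i : Pt)) = p.2) ∧
      (∃ i, ((f i : Pt)) = p.1) ∧ (∃ i, ((f i : Pt)) = p.2)) := by
  classical
  obtain ⟨⟨e1g1, e1g2, e1g3⟩, ⟨e2g1, e2g2, e2g3⟩, ⟨e3g1, e3g2, e3g3⟩, d12, d13, d23⟩ :=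
    memfacts h
  have hne1 : ∀ i, (f i : Pt) ≠ E1 := by
    intro i he
    apply hbad
    have : E1.submodule = ((f i : Pt)).submodule := by rw [he]
    rw [this]
    exact le_iSup (fun j => ((f j : Pt)).submodule) i
  have hpair : ∀ i j, ¬ E1.submodule ≤ ((f i : Pt)).submodule ⊔ ((f j : Pt)).submodule := by
    intro i j hle
    exact hbad (hle.trans (sup_le (le_iSup (fun k => ((f k : Pt)).submodule) i)
      (le_iSup (fun k => ((f k : Pt)).submodule) j)))
  have hno12 : ∀ i j, (f i : Pt) ≠ (f j : Pt) →
      ¬(((f i : Pt)).submodule ≤ E1.submodule ⊔ E2.submodule ∧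
        ((f j : Pt)).submodule ≤ E1.submodule ⊔ E2.submodule) := by
    rintro i j hne ⟨hi, hj⟩
    have := line_eq_sup' hne (sup_rank_le E1 E2) hi hj
    exact hpair i j (by rw [this]; exact le_sup_left)
  have hno31 : ∀ i j, (f i : Pt) ≠ (f j : Pt) →
      ¬(((f i : Pt)).submodule ≤ E3.submodule ⊔ E1.submodule ∧
        ((f j : Pt)).submodule ≤ E3.submodule ⊔ E1.submodule) := by
    rintro i j hne ⟨hi, hj⟩
    have := line_eq_sup' hne (sup_rank_le E3 E1) hi hj
    exact hpair i j (by rw [this]; exact le_sup_right)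
  have hrank : finrank F ↥(⨆ i, ((f i : Pt)).submodule) ≤ 2 := by
    by_contra hc
    push_neg at hc
    have hle3 : finrank F ↥(⨆ i, ((f i : Pt)).submodule) ≤ 3 := by
      have := Submodule.finrank_le (⨆ i, ((f i : Pt)).submodule)
      rwa [amb3] at this
    have : (⨆ i, ((f i : Pt)).submodule) = ⊤ :=
      Submodule.eq_top_of_finrank_eq (by rw [amb3]; omega)
    exact hbad (this ▸ le_top)
  -- at most one value besides a G1∪G3 value
  have honev : ∀ i0, ((f i0 : Pt)) ∈ G1 ∪ G3 → ∀ i j,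
      (f i : Pt) ≠ (f i0 : Pt) → (f j : Pt) ≠ (f i0 : Pt) → (f i : Pt) = (f j : Pt) := by
    intro i0 hv i j hiv hjv
    by_contra hij
    set v := (f i0 : Pt) with hvdef
    set w1 := (f i : Pt) with hw1def
    set w2 := (f j : Pt) with hw2def
    have hsuple : v.submodule ⊔ w1.submodule ≤ ⨆ k, ((f k : Pt)).submodule :=
      sup_le (le_iSup (fun k => ((f k : Pt)).submodule) i0)
        (le_iSup (fun k => ((f k : Pt)).submodule) i)
    have hWeq : v.submodule ⊔ w1.submodule = ⨆ k, ((f k : Pt)).submodule :=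
      Submodule.eq_of_le_of_finrank_le hsuple
        (by rw [sup_rank_eq (Ne.symm hiv)]; exact hrank)
    have hw2le : w2.submodule ≤ v.submodule ⊔ w1.submodule :=
      hWeq ▸ le_iSup (fun k => ((f k : Pt)).submodule) j
    set W := v.submodule ⊔ w1.submodule with hWdef
    by_cases c12 : W = E1.submodule ⊔ E2.submodule
    · exact hbad (hWeq ▸ (c12 ▸ (le_sup_left : E1.submodule ≤ _)))
    by_cases c31 : W = E3.submodule ⊔ E1.submodule
    · exact hbad (hWeq ▸ (c31 ▸ (le_sup_right : E1.submodule ≤ _)))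
    by_cases c23 : W = E2.submodule ⊔ E3.submodule
    · have hvle : v.submodule ≤ E2.submodule ⊔ E3.submodule := c23 ▸ le_sup_left
      rcases Finset.mem_union.mp hv with hv1 | hv3
      · exact e2g1 ((meet_E2 h (h.sub_G1 v hv1) hvle) ▸ hv1)
      · exact e3g3 ((meet_E3 h hvle (h.sub_G3 v hv3)) ▸ hv3)
    have hsec := h.secant W (sup_rank_eq (Ne.symm hiv)) c12 c23 c31
    have hsubset : ({v, w1, w2} : Finset Pt) ⊆
        (({E1, E2, E3} ∪ G1 ∪ G2 ∪ G3 : Finset Pt).filter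
          fun R => Projectivization.submodule R ≤ W) := by
      intro R hR
      simp only [Finset.mem_insert, Finset.mem_singleton] at hR
      rcases hR with rfl | rfl | rfl
      · exact Finset.mem_filter.mpr ⟨(f i0).2, le_sup_left⟩
      · exact Finset.mem_filter.mpr ⟨(f i).2, le_sup_right⟩
      · exact Finset.mem_filter.mpr ⟨(f j).2, hw2le⟩
    have hcard : ({v, w1, w2} : Finset Pt).card = 3 := by
      rw [Finset.card_insert_of_notMem (by simp [Ne.symm hiv, Ne.symm hjv]),
        Finset.card_insert_of_notMem (by simp [hij]), Finset.card_singleton]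
    have := Finset.card_le_card hsubset
    omega
  by_cases hM : ∀ i, ((f i : Pt)) ∈ insert E2 (insert E3 G2)
  · exact Or.inl hM
  push_neg at hM
  obtain ⟨i0, hi0⟩ := hM
  have hv : ((f i0 : Pt)) ∈ G1 ∪ G3 := by
    have := (f i0).2
    simp only [Finset.mem_union, Finset.mem_insert, Finset.mem_singleton] at this hi0 ⊢
    push_neg at hi0
    rcases this with (((h1 | h1 | h1) | h1) | h1) | h1
    · exact absurd h1 (hne1 i0)
    · exact absurd h1 hi0.1
    · exact absurd h1 hi0.2.1
    · exact Or.inl h1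
    · exact absurd h1 hi0.2.2
    · exact Or.inr h1
  by_cases hconst : ∀ i, ((f i : Pt)) = (f i0 : Pt)
  · exact Or.inr (Or.inl ⟨(f i0 : Pt), hv, hconst⟩)
  push_neg at hconst
  obtain ⟨i1, hi1⟩ := hconst
  set v := (f i0 : Pt) with hvdef
  set w := (f i1 : Pt) with hwdef
  have hall : ∀ i, ((f i : Pt)) = v ∨ ((f i : Pt)) = w := by
    intro i
    by_cases hc : ((f i : Pt)) = v
    · exact Or.inl hc
    · exact Or.inr (honev i0 hv i i1 hc hi1)
  have hexv : ∃ i, ((f i : Pt)) = v := ⟨i0, rfl⟩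
  have hexw : ∃ i, ((f i : Pt)) = w := ⟨i1, rfl⟩
  have hwG : w ∈ ({E1, E2, E3} ∪ G1 ∪ G2 ∪ G3 : Finset Pt) := (f i1).2
  have hwne1 : w ≠ E1 := hne1 i1
  rcases Finset.mem_union.mp hv with hv1 | hv3
  · -- v ∈ G1
    have hwn2 : w ≠ E2 := by
      intro he
      exact hno12 i1 i0 hi1 ⟨by rw [← hwdef, he]; exact le_sup_right, h.sub_G1 v hv1⟩
    have hwng1 : w ∉ G1 := by
      intro hm
      exact hno12 i1 i0 hi1 ⟨h.sub_G1 w hm, h.sub_G1 v hv1⟩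
    have hwcase : w ∈ insert E3 G2 ∨ w ∈ G3 := by
      simp only [Finset.mem_union, Finset.mem_insert, Finset.mem_singleton] at hwG
      simp only [Finset.mem_insert]
      rcases hwG with (((h1 | h1 | h1) | h1) | h1) | h1
      · exact absurd h1 hwne1
      · exact absurd h1 hwn2
      · exact Or.inl (Or.inl h1)
      · exact absurd h1 hwng1
      · exact Or.inl (Or.inr h1)
      · exact Or.inr h1
    rcases hwcase with hw2 | hw3
    · exact Or.inr (Or.inr ⟨(v, w), by
        simp only [Finset.mem_union, Finset.mem_product]
        exact Or.inl (Or.inr ⟨hv1, hw2⟩), hall, hexv, hexw⟩)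
    · exact Or.inr (Or.inr ⟨(v, w), by
        simp only [Finset.mem_union, Finset.mem_product]
        exact Or.inl (Or.inl ⟨hv1, hw3⟩), hall, hexv, hexw⟩)
  · -- v ∈ G3
    have hwn3 : w ≠ E3 := by
      intro he
      exact hno31 i1 i0 hi1 ⟨by rw [← hwdef, he]; exact le_sup_left, h.sub_G3 v hv3⟩
    have hwng3 : w ∉ G3 := by
      intro hm
      exact hno31 i1 i0 hi1 ⟨h.sub_G3 w hm, h.sub_G3 v hv3⟩
    have hwcase : w ∈ insert E2 G2 ∨ w ∈ G1 := by
      simp only [Finset.mem_union, Finset.mem_insert, Finset.mem_singleton] at hwG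
      simp only [Finset.mem_insert]
      rcases hwG with (((h1 | h1 | h1) | h1) | h1) | h1
      · exact absurd h1 hwne1
      · exact Or.inl (Or.inl h1)
      · exact absurd h1 hwn3
      · exact Or.inr h1
      · exact Or.inl (Or.inr h1)
      · exact absurd h1 hwng3
    rcases hwcase with hw2 | hw1
    · exact Or.inr (Or.inr ⟨(v, w), by
        simp only [Finset.mem_union, Finset.mem_product]
        exact Or.inr ⟨hv3, hw2⟩, hall, hexv, hexw⟩)
    · exact Or.inr (Or.inr ⟨(w, v), by
        simp only [Finset.mem_union, Finset.mem_product]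
        exact Or.inl (Or.inl ⟨hw1, hv3⟩), fun i => (hall i).symm,
          hexw, hexv⟩)


lemma bad_of_A (h : IsBalancedQuasiArc F x E1 E2 E3 G1 G2 G3) {t : ℕ}
    (f : Fin t → {P : Pt // P ∈ ({E1, E2, E3} ∪ G1 ∪ G2 ∪ G3 : Finset Pt)})
    (hA : ∀ i, ((f i : Pt)) ∈ insert E2 (insert E3 G2)) :
    ¬ E1.submodule ≤ ⨆ i, Projectivization.submodule (f i).val := by
  intro hle
  apply nc1 h
  refine hle.trans (iSup_le fun i => ?_)
  rcases Finset.mem_insert.mp (hA i) with he | hm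
  · rw [he]; exact le_sup_left
  rcases Finset.mem_insert.mp hm with he | hm2
  · rw [he]; exact le_sup_right
  · exact h.sub_G2 _ hm2

lemma bad_of_const (h : IsBalancedQuasiArc F x E1 E2 E3 G1 G2 G3) {t : ℕ}
    (f : Fin t → {P : Pt // P ∈ ({E1, E2, E3} ∪ G1 ∪ G2 ∪ G3 : Finset Pt)})
    {v : Pt} (hv : v ∈ G1 ∪ G3) (hc : ∀ i, ((f i : Pt)) = v) :
    ¬ E1.submodule ≤ ⨆ i, Projectivization.submodule (f i).val := by
  obtain ⟨⟨e1g1, _, e1g3⟩, _, _, _⟩ := memfacts h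
  intro hle
  have hWle : (⨆ i, Projectivization.submodule (f i).val) ≤ v.submodule :=
    iSup_le fun i => le_of_eq (congrArg Projectivization.submodule (hc i))
  have : E1 = v := pt_le_pt (hle.trans hWle)
  rcases Finset.mem_union.mp hv with h1 | h3
  · exact e1g1 (this ▸ h1)
  · exact e1g3 (this ▸ h3)

lemma bad_of_pair (h : IsBalancedQuasiArc F x E1 E2 E3 G1 G2 G3) {t : ℕ}
    (f : Fin t → {P : Pt // P ∈ ({E1, E2, E3} ∪ G1 ∪ G2 ∪ G3 : Finset Pt)})
    {p : Pt × Pt}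
    (hp : p ∈ (G1 ×ˢ G3) ∪ (G1 ×ˢ insert E3 G2) ∪ (G3 ×ˢ insert E2 G2))
    (hcond : ∀ i, ((f i : Pt)) = p.1 ∨ ((f i : Pt)) = p.2) :
    ¬ E1.submodule ≤ ⨆ i, Projectivization.submodule (f i).val := by
  obtain ⟨⟨e1g1, e1g2, e1g3⟩, ⟨e2g1, e2g2, e2g3⟩, ⟨e3g1, e3g2, e3g3⟩, d12, d13, d23⟩ :=
    memfacts h
  intro hle
  have hWle : (⨆ i, Projectivization.submodule (f i).val) ≤
      p.1.submodule ⊔ p.2.submodule := by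
    refine iSup_le fun i => ?_
    rcases hcond i with he | he
    · rw [he]; exact le_sup_left
    · rw [he]; exact le_sup_right
  have hle2 : E1.submodule ≤ p.1.submodule ⊔ p.2.submodule := hle.trans hWle
  have hGsub : ∀ R : Pt, R ∈ G1 ∨ R ∈ G2 ∨ R ∈ G3 ∨ R = E2 ∨ R = E3 →
      R ∈ ({E1, E2, E3} ∪ G1 ∪ G2 ∪ G3 : Finset Pt) := by
    intro R hR
    simp only [Finset.mem_union, Finset.mem_insert, Finset.mem_singleton]
    tauto
  simp only [Finset.mem_union, Finset.mem_product, Finset.mem_insert] at hp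
  obtain ⟨v, w⟩ := p
  simp only at hle2 ⊢
  rcases hp with (⟨hv1, hw3⟩ | ⟨hv1, hw⟩) | ⟨hv3, hw⟩
  · -- v ∈ G1, w ∈ G3
    refine skew h (hGsub v (by tauto)) (hGsub w (by tauto)) ?_ ?_ ?_ ?_ ?_ hle2
    · intro he; exact (Finset.disjoint_left.mp d13) hv1 (he ▸ hw3)
    · intro he; exact e1g1 (he ▸ hv1)
    · intro he; exact e1g3 (he ▸ hw3)
    · rintro ⟨_, hw12⟩
      exact e1g3 ((meet_E1 h hw12 (h.sub_G3 w hw3)) ▸ hw3)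
    · rintro ⟨hv31, _⟩
      exact e1g1 ((meet_E1 h (h.sub_G1 v hv1) hv31) ▸ hv1)
  · -- v ∈ G1, w ∈ insert E3 G2
    refine skew h (hGsub v (by tauto)) (hGsub w (by tauto)) ?_ ?_ ?_ ?_ ?_ hle2
    · intro he
      rcases hw with he3 | hg2
      · exact e3g1 ((he.trans he3) ▸ hv1)
      · exact (Finset.disjoint_left.mp d12) hv1 (he ▸ hg2)
    · intro he; exact e1g1 (he ▸ hv1)
    · intro he
      rcases hw with he3 | hg2
      · exact ne13 h (he.symm.trans he3)
      · exact e1g2 (he ▸ hg2)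
    · rintro ⟨_, hw12⟩
      rcases hw with he3 | hg2
      · exact nc3 h (he3 ▸ hw12)
      · exact e2g2 ((meet_E2 h hw12 (h.sub_G2 w hg2)) ▸ hg2)
    · rintro ⟨hv31, _⟩
      exact e1g1 ((meet_E1 h (h.sub_G1 v hv1) hv31) ▸ hv1)
  · -- v ∈ G3, w ∈ insert E2 G2
    refine skew h (hGsub v (by tauto)) (hGsub w (by tauto)) ?_ ?_ ?_ ?_ ?_ hle2
    · intro he
      rcases hw with he2 | hg2
      · exact e2g3 ((he.trans he2) ▸ hv3)
      · exact (Finset.disjoint_left.mp d23) (he ▸ hg2) hv3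
    · intro he; exact e1g3 (he ▸ hv3)
    · intro he
      rcases hw with he2 | hg2
      · exact ne12 h (he.symm.trans he2)
      · exact e1g2 (he ▸ hg2)
    · rintro ⟨hv12, _⟩
      exact e1g3 ((meet_E1 h hv12 (h.sub_G3 v hv3)) ▸ hv3)
    · rintro ⟨hv31, hw31⟩
      rcases hw with he2 | hg2
      · exact nc2 h (he2 ▸ hw31)
      · exact e3g2 ((meet_E3 h (h.sub_G2 w hg2) hw31) ▸ hg2)


section counting
variable {α : Type*} [Fintype α] [DecidableEq α]


lemma card_pi_subset (T : Finset α) (t : ℕ) :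
    (Finset.univ.filter (fun f : Fin t → α => ∀ i, f i ∈ T)).card = T.card ^ t := by
  have e : {f : Fin t → α // ∀ i, f i ∈ T} ≃ (Fin t → ↥T) :=
    { toFun := fun f i => ⟨f.1 i, f.2 i⟩
      invFun := fun g => ⟨fun i => g i, fun i => (g i).2⟩
      left_inv := fun f => rfl
      right_inv := fun g => rfl }
  calc (Finset.univ.filter (fun f : Fin t → α => ∀ i, f i ∈ T)).card
      = Fintype.card {f : Fin t → α // ∀ i, f i ∈ T} := (Fintype.card_subtype _).symm
    _ = Fintype.card (Fin t → ↥T) := Fintype.card_congr e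
    _ = T.card ^ t := by rw [Fintype.card_fun]; simp

lemma card_const_fun (a : α) {t : ℕ} (ht : 0 < t) :
    (Finset.univ.filter (fun f : Fin t → α => ∀ i, f i = a)).card = 1 := by
  have : (Finset.univ.filter (fun f : Fin t → α => ∀ i, f i = a)) = {fun _ => a} := by
    ext f
    simp only [Finset.mem_filter, Finset.mem_univ, true_and, Finset.mem_singleton]
    exact ⟨fun hf => funext hf, fun hf i => congrFun hf i⟩
  rw [this, Finset.card_singleton]

lemma card_surj_pair {a b : α} (hab : a ≠ b) {t : ℕ} (ht : 0 < t) :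
    (Finset.univ.filter (fun f : Fin t → α =>
      (∀ i, f i = a ∨ f i = b) ∧ (∃ i, f i = a) ∧ (∃ i, f i = b))).card = 2 ^ t - 2 := by
  classical
  set A := Finset.univ.filter (fun f : Fin t → α => ∀ i, f i ∈ ({a, b} : Finset α)) with hA
  have hAcard : A.card = 2 ^ t := by
    rw [hA, card_pi_subset]
    rw [Finset.card_pair hab]
  have hsub : ({(fun _ => a : Fin t → α), fun _ => b} : Finset (Fin t → α)) ⊆ A := by
    intro f hf
    simp only [Finset.mem_insert, Finset.mem_singleton] at hf
    rcases hf with rfl | rfl <;> simp [hA]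
  have hkey : (Finset.univ.filter (fun f : Fin t → α =>
      (∀ i, f i = a ∨ f i = b) ∧ (∃ i, f i = a) ∧ (∃ i, f i = b)))
      = A \ {(fun _ => a : Fin t → α), fun _ => b} := by
    ext f
    simp only [Finset.mem_filter, Finset.mem_univ, true_and, Finset.mem_sdiff,
      Finset.mem_insert, Finset.mem_singleton, hA, Finset.mem_insert, Finset.mem_singleton]
    constructor
    · rintro ⟨h1, ⟨i, hi⟩, ⟨j, hj⟩⟩
      refine ⟨fun k => by rcases h1 k with h | h <;> simp [h], ?_⟩
      rintro (rfl | rfl)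
      · exact hab hj
      · exact hab hi.symm
    · rintro ⟨h1, h2⟩
      have h1' : ∀ i, f i = a ∨ f i = b := by
        intro i; have := h1 i; simpa using this
      refine ⟨h1', ?_, ?_⟩
      · by_contra hc
        push_neg at hc
        exact h2 (Or.inr (funext fun i => (h1' i).resolve_left (hc i)))
      · by_contra hc
        push_neg at hc
        exact h2 (Or.inl (funext fun i => (h1' i).resolve_right (hc i)))
  rw [hkey, Finset.card_sdiff_of_subset hsub, hAcard]
  congr 1
  rw [Finset.card_insert_of_notMem, Finset.card_singleton]
  simp only [Finset.mem_singleton]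
  intro hc
  exact hab (congrFun hc ⟨0, ht⟩)

end counting

set_option maxHeartbeats 1600000 in
lemma badCount (h : IsBalancedQuasiArc F x E1 E2 E3 G1 G2 G3) {t : ℕ} (ht : 0 < t) :
    Nat.card {f : Fin t → {P : Pt // P ∈ ({E1, E2, E3} ∪ G1 ∪ G2 ∪ G3 : Finset Pt)} //
      ¬ E1.submodule ≤ ⨆ i, Projectivization.submodule (f i).val}
    = (x + 2) ^ t + 2 * x + (3 * x ^ 2 + 2 * x) * (2 ^ t - 2) := by
  classical
  obtain ⟨⟨e1g1, e1g2, e1g3⟩, ⟨e2g1, e2g2, e2g3⟩, ⟨e3g1, e3g2, e3g3⟩, d12, d13, d23⟩ :=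
    memfacts h
  set α := {P : Pt // P ∈ ({E1, E2, E3} ∪ G1 ∪ G2 ∪ G3 : Finset Pt)} with hα
  set M : Finset Pt := insert E2 (insert E3 G2) with hM
  set P2 : Finset (Pt × Pt) := (G1 ×ˢ G3) ∪ (G1 ×ˢ insert E3 G2) ∪ (G3 ×ˢ insert E2 G2)
    with hP2
  have hGsub : ∀ R : Pt, R ∈ G1 ∨ R ∈ G2 ∨ R ∈ G3 ∨ R = E2 ∨ R = E3 →
      R ∈ ({E1, E2, E3} ∪ G1 ∪ G2 ∪ G3 : Finset Pt) := by
    intro R hR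
    simp only [Finset.mem_union, Finset.mem_insert, Finset.mem_singleton]
    tauto
  have hMG : M ⊆ ({E1, E2, E3} ∪ G1 ∪ G2 ∪ G3 : Finset Pt) := by
    intro R hR
    rw [hM, Finset.mem_insert, Finset.mem_insert] at hR
    exact hGsub R (by tauto)
  have hP2mem : ∀ p ∈ P2, (p.1 ∈ ({E1, E2, E3} ∪ G1 ∪ G2 ∪ G3 : Finset Pt) ∧
      p.2 ∈ ({E1, E2, E3} ∪ G1 ∪ G2 ∪ G3 : Finset Pt)) ∧ p.1 ≠ p.2 := by
    intro p hp
    rw [hP2] at hp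
    simp only [Finset.mem_union, Finset.mem_product, Finset.mem_insert] at hp
    rcases hp with (⟨hv, hw⟩ | ⟨hv, hw⟩) | ⟨hv, hw⟩
    · exact ⟨⟨hGsub _ (by tauto), hGsub _ (by tauto)⟩,
        fun he => (Finset.disjoint_left.mp d13) hv (he ▸ hw)⟩
    · refine ⟨⟨hGsub _ (by tauto), hGsub _ (by tauto)⟩, fun he => ?_⟩
      rcases hw with he3 | hg2
      · exact e3g1 ((he.trans he3) ▸ hv)
      · exact (Finset.disjoint_left.mp d12) hv (he ▸ hg2)
    · refine ⟨⟨hGsub _ (by tauto), hGsub _ (by tauto)⟩, fun he => ?_⟩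
      rcases hw with he2 | hg2
      · exact e2g3 ((he.trans he2) ▸ hv)
      · exact (Finset.disjoint_left.mp d23) (he ▸ hg2) hv
  -- the three classes
  set 𝒜 : Finset (Fin t → α) := Finset.univ.filter (fun f => ∀ i, ((f i : Pt)) ∈ M) with h𝒜
  set ℬ : Finset (Fin t → α) := (G1 ∪ G3).biUnion (fun v =>
    Finset.univ.filter (fun f => ∀ i, ((f i : Pt)) = v)) with hℬ
  set 𝒞 : Finset (Fin t → α) := P2.biUnion (fun p =>
    Finset.univ.filter (fun f => (∀ i, ((f i : Pt)) = p.1 ∨ ((f i : Pt)) = p.2) ∧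
      (∃ i, ((f i : Pt)) = p.1) ∧ (∃ i, ((f i : Pt)) = p.2))) with h𝒞
  have i0 : Fin t := ⟨0, ht⟩
  have hsplit : Finset.univ.filter (fun f : Fin t → α =>
      ¬ E1.submodule ≤ ⨆ i, Projectivization.submodule (f i).val) = (𝒜 ∪ ℬ) ∪ 𝒞 := by
    ext f
    simp only [Finset.mem_filter, Finset.mem_univ, true_and, Finset.mem_union]
    constructor
    · intro hbad
      rcases classify h f hbad with hA | ⟨v, hv, hc⟩ | ⟨p, hp, hcond⟩
      · refine Or.inl (Or.inl ?_)
        rw [h𝒜]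
        simp only [Finset.mem_filter, Finset.mem_univ, true_and]
        exact hA
      · refine Or.inl (Or.inr ?_)
        rw [hℬ, Finset.mem_biUnion]
        exact ⟨v, hv, by simp only [Finset.mem_filter, Finset.mem_univ, true_and]; exact hc⟩
      · refine Or.inr ?_
        rw [h𝒞, Finset.mem_biUnion]
        refine ⟨p, hp, ?_⟩
        simp only [Finset.mem_filter, Finset.mem_univ, true_and]
        exact hcond
    · intro hmem
      rcases hmem with (hA | hB) | hC
      · rw [h𝒜] at hA
        simp only [Finset.mem_filter, Finset.mem_univ, true_and] at hA
        exact bad_of_A h f hA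
      · rw [hℬ, Finset.mem_biUnion] at hB
        obtain ⟨v, hv, hc⟩ := hB
        simp only [Finset.mem_filter, Finset.mem_univ, true_and] at hc
        exact bad_of_const h f hv hc
      · rw [h𝒞, Finset.mem_biUnion] at hC
        obtain ⟨p, hp, hc⟩ := hC
        simp only [Finset.mem_filter, Finset.mem_univ, true_and] at hc
        exact bad_of_pair h f hp hc.1
  -- disjointness of classes
  have hdisjAB : Disjoint 𝒜 ℬ := by
    rw [Finset.disjoint_left]
    intro f hA hB
    rw [h𝒜] at hA
    rw [hℬ, Finset.mem_biUnion] at hB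
    simp only [Finset.mem_filter, Finset.mem_univ, true_and] at hA
    obtain ⟨v, hv, hc⟩ := hB
    simp only [Finset.mem_filter, Finset.mem_univ, true_and] at hc
    have h1 := hA i0
    rw [hc i0, hM, Finset.mem_insert, Finset.mem_insert] at h1
    rcases Finset.mem_union.mp hv with hg | hg
    · rcases h1 with he | he | hg2
      · exact e2g1 (he ▸ hg)
      · exact e3g1 (he ▸ hg)
      · exact (Finset.disjoint_left.mp d12) hg hg2
    · rcases h1 with he | he | hg2
      · exact e2g3 (he ▸ hg)
      · exact e3g3 (he ▸ hg)
      · exact (Finset.disjoint_left.mp d23) hg2 hg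
  have hdisjAC : Disjoint 𝒜 𝒞 := by
    rw [Finset.disjoint_left]
    intro f hA hC
    rw [h𝒜] at hA
    rw [h𝒞, Finset.mem_biUnion] at hC
    simp only [Finset.mem_filter, Finset.mem_univ, true_and] at hA
    obtain ⟨p, hp, hmem⟩ := hC
    simp only [Finset.mem_filter, Finset.mem_univ, true_and] at hmem
    obtain ⟨_, ⟨i, hi⟩, _⟩ := hmem
    have h1 := hA i
    rw [hi, hM, Finset.mem_insert, Finset.mem_insert] at h1
    rw [hP2] at hp
    simp only [Finset.mem_union, Finset.mem_product, Finset.mem_insert] at hp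
    rcases hp with (⟨hv, _⟩ | ⟨hv, _⟩) | ⟨hv, _⟩
    · rcases h1 with he | he | hg2
      · exact e2g1 (he ▸ hv)
      · exact e3g1 (he ▸ hv)
      · exact (Finset.disjoint_left.mp d12) hv hg2
    · rcases h1 with he | he | hg2
      · exact e2g1 (he ▸ hv)
      · exact e3g1 (he ▸ hv)
      · exact (Finset.disjoint_left.mp d12) hv hg2
    · rcases h1 with he | he | hg2
      · exact e2g3 (he ▸ hv)
      · exact e3g3 (he ▸ hv)
      · exact (Finset.disjoint_left.mp d23) hg2 hv
  have hdisjBC : Disjoint ℬ 𝒞 := by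
    rw [Finset.disjoint_left]
    intro f hB hC
    rw [hℬ, Finset.mem_biUnion] at hB
    rw [h𝒞, Finset.mem_biUnion] at hC
    obtain ⟨v, hv, hc⟩ := hB
    obtain ⟨p, hp, hmem⟩ := hC
    simp only [Finset.mem_filter, Finset.mem_univ, true_and] at hc hmem
    obtain ⟨hcond, ⟨i, hi⟩, ⟨j, hj⟩⟩ := hmem
    exact (hP2mem p hp).2 (by rw [← hi, ← hj, hc i, hc j])
  -- cardinalities
  have cardA : 𝒜.card = (x + 2) ^ t := by
    have hMcard : M.card = x + 2 := by
      rw [hM, Finset.card_insert_of_notMem, Finset.card_insert_of_notMem e3g2, h.card_G2]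
      rw [Finset.mem_insert]
      push_neg
      exact ⟨ne23 h, e2g2⟩
    set T : Finset α := Finset.univ.filter (fun a : α => (a : Pt) ∈ M) with hT
    have hAT : 𝒜 = Finset.univ.filter (fun f : Fin t → α => ∀ i, f i ∈ T) := by
      rw [h𝒜]
      ext f
      simp [hT]
    have hTcard : T.card = x + 2 := by
      rw [hT, ← Fintype.card_subtype]
      have e : {a : α // (a : Pt) ∈ M} ≃ {P : Pt // P ∈ M} :=
        { toFun := fun a => ⟨(a.1 : Pt), a.2⟩
          invFun := fun P => ⟨⟨P.1, hMG P.2⟩, P.2⟩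
          left_inv := fun a => by ext; rfl
          right_inv := fun P => rfl }
      rw [Fintype.card_congr e, Fintype.card_coe, hMcard]
    rw [hAT, card_pi_subset, hTcard]
  have cardB : ℬ.card = 2 * x := by
    rw [hℬ, Finset.card_biUnion]
    · have : ∀ v ∈ G1 ∪ G3, (Finset.univ.filter
          (fun f : Fin t → α => ∀ i, ((f i : Pt)) = v)).card = 1 := by
        intro v hv
        have hvG : v ∈ ({E1, E2, E3} ∪ G1 ∪ G2 ∪ G3 : Finset Pt) := by
          rcases Finset.mem_union.mp hv with hg | hg
          · exact hGsub v (by tauto)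
          · exact hGsub v (by tauto)
        have : (Finset.univ.filter (fun f : Fin t → α => ∀ i, ((f i : Pt)) = v))
            = Finset.univ.filter (fun f : Fin t → α => ∀ i, f i = ⟨v, hvG⟩) := by
          ext f
          simp only [Finset.mem_filter, Finset.mem_univ, true_and]
          constructor
          · intro hf i; exact Subtype.ext (hf i)
          · intro hf i; rw [hf i]
        rw [this, card_const_fun _ ht]
      rw [Finset.sum_congr rfl this, Finset.sum_const, smul_eq_mul, mul_one]
      rw [Finset.card_union_of_disjoint d13, h.card_G1, h.card_G3]
      ring
    · intro v hv w hw hvw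
      rw [Function.onFun, Finset.disjoint_left]
      intro f hfv hfw
      simp only [Finset.mem_filter, Finset.mem_univ, true_and] at hfv hfw
      exact hvw ((hfv i0).symm.trans (hfw i0))
  have cardC : 𝒞.card = (3 * x ^ 2 + 2 * x) * (2 ^ t - 2) := by
    rw [h𝒞, Finset.card_biUnion]
    · have hpc : ∀ p ∈ P2, (Finset.univ.filter
          (fun f : Fin t → α => (∀ i, ((f i : Pt)) = p.1 ∨ ((f i : Pt)) = p.2) ∧
            (∃ i, ((f i : Pt)) = p.1) ∧ (∃ i, ((f i : Pt)) = p.2))).card = 2 ^ t - 2 := by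
        intro p hp
        obtain ⟨⟨hm1, hm2⟩, hne⟩ := hP2mem p hp
        set a : α := ⟨p.1, hm1⟩
        set b : α := ⟨p.2, hm2⟩
        have hab : a ≠ b := fun he => hne (congrArg Subtype.val he)
        have heq : (Finset.univ.filter
            (fun f : Fin t → α => (∀ i, ((f i : Pt)) = p.1 ∨ ((f i : Pt)) = p.2) ∧
              (∃ i, ((f i : Pt)) = p.1) ∧ (∃ i, ((f i : Pt)) = p.2)))
            = Finset.univ.filter (fun f : Fin t → α =>
              (∀ i, f i = a ∨ f i = b) ∧ (∃ i, f i = a) ∧ (∃ i, f i = b)) := by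
          ext f
          simp only [Finset.mem_filter, Finset.mem_univ, true_and]
          constructor
          · rintro ⟨h1, ⟨i, hi⟩, ⟨j, hj⟩⟩
            exact ⟨fun k => (h1 k).imp (fun hh => Subtype.ext hh) (fun hh => Subtype.ext hh),
              ⟨i, Subtype.ext hi⟩, ⟨j, Subtype.ext hj⟩⟩
          · rintro ⟨h1, ⟨i, hi⟩, ⟨j, hj⟩⟩
            exact ⟨fun k => (h1 k).imp (fun hh => by rw [hh]) (fun hh => by rw [hh]),
              ⟨i, by rw [hi]⟩, ⟨j, by rw [hj]⟩⟩
        rw [heq, card_surj_pair hab ht]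
      rw [Finset.sum_congr rfl hpc, Finset.sum_const, smul_eq_mul]
      have hP2card : P2.card = 3 * x ^ 2 + 2 * x := by
        rw [hP2, Finset.card_union_of_disjoint, Finset.card_union_of_disjoint]
        · rw [Finset.card_product, Finset.card_product, Finset.card_product,
            Finset.card_insert_of_notMem e3g2, Finset.card_insert_of_notMem e2g2,
            h.card_G1, h.card_G2, h.card_G3]
          ring
        · rw [Finset.disjoint_left]
          rintro ⟨v, w⟩ hp hq
          simp only [Finset.mem_product, Finset.mem_insert] at hp hq
          rcases hq.2 with he | hg
          · exact e3g3 (he ▸ hp.2)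
          · exact (Finset.disjoint_left.mp d23) hg hp.2
        · rw [Finset.disjoint_left]
          rintro ⟨v, w⟩ hp hq
          simp only [Finset.mem_union, Finset.mem_product, Finset.mem_insert] at hp hq
          rcases hp with ⟨hv, _⟩ | ⟨hv, _⟩ <;>
            exact (Finset.disjoint_left.mp d13) hv hq.1
      rw [hP2card]
    · -- pairwise disjointness of the pair classes
      intro p hp q hq hpq
      rw [Function.onFun, Finset.disjoint_left]
      intro f hfp hfq
      simp only [Finset.mem_filter, Finset.mem_univ, true_and] at hfp hfq
      obtain ⟨hp1, ⟨i1, hi1⟩, ⟨j1, hj1⟩⟩ := hfp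
      obtain ⟨hq1, ⟨i2, hi2⟩, ⟨j2, hj2⟩⟩ := hfq
      have hq1p : q.1 = p.1 ∨ q.1 = p.2 := by
        rcases hp1 i2 with hh | hh
        · exact Or.inl (hi2 ▸ hh)
        · exact Or.inr (hi2 ▸ hh)
      have hq2p : q.2 = p.1 ∨ q.2 = p.2 := by
        rcases hp1 j2 with hh | hh
        · exact Or.inl (hj2 ▸ hh)
        · exact Or.inr (hj2 ▸ hh)
      have hnep := (hP2mem p hp).2
      have hneq := (hP2mem q hq).2
      apply hpq
      rcases hq1p with hA | hA
      · rcases hq2p with hB | hB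
        · exact absurd (hA.trans hB.symm) hneq
        · exact (Prod.ext_iff.mpr ⟨hA, hB⟩).symm
      · rcases hq2p with hB | hB
        · -- swapped case : q.1 = p.2 and q.2 = p.1 : impossible by membership
          exfalso
          rw [hP2] at hp hq
          simp only [Finset.mem_coe, Finset.mem_union, Finset.mem_product, Finset.mem_insert] at hp hq
          have hp1mem : p.1 ∈ G1 ∨ p.1 ∈ G3 := by
            rcases hp with (⟨hv, _⟩ | ⟨hv, _⟩) | ⟨hv, _⟩ <;> tauto
          rcases hq with (⟨hv', hw'⟩ | ⟨hv', hw'⟩) | ⟨hv', hw'⟩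
          · -- q ∈ G1 ×ˢ G3 : q.2 ∈ G3 so p.1 ∈ G3
            have hp1G3 : p.1 ∈ G3 := hB ▸ hw'
            have : p.1 ∉ G1 := fun hg => (Finset.disjoint_left.mp d13) hg hp1G3
            rcases hp with (⟨hv, hw⟩ | ⟨hv, hw⟩) | ⟨hv, hw⟩
            · exact this hv
            · exact this hv
            · -- p ∈ G3 ×ˢ insert E2 G2, q.1 = p.2 ∈ insert E2 G2 but q.1 ∈ G1
              rcases hw with he | hg
              · exact e2g1 ((hA.trans he) ▸ hv')
              · exact (Finset.disjoint_left.mp d12) hv' (hA ▸ hg : q.1 ∈ G2)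
          · -- q ∈ G1 ×ˢ insert E3 G2 : q.2 = p.1 ∈ G1 ∪ G3 impossible
            rcases hw' with he | hg
            · rcases hp1mem with hg1 | hg3
              · exact e3g1 ((hB.symm.trans he) ▸ hg1)
              · exact e3g3 ((hB.symm.trans he) ▸ hg3)
            · rcases hp1mem with hg1 | hg3
              · exact (Finset.disjoint_left.mp d12) hg1 (hB ▸ hg : p.1 ∈ G2)
              · exact (Finset.disjoint_left.mp d23) (hB ▸ hg : p.1 ∈ G2) hg3
          · -- q ∈ G3 ×ˢ insert E2 G2 : q.2 = p.1 ∈ G1 ∪ G3 impossible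
            rcases hw' with he | hg
            · rcases hp1mem with hg1 | hg3
              · exact e2g1 ((hB.symm.trans he) ▸ hg1)
              · exact e2g3 ((hB.symm.trans he) ▸ hg3)
            · rcases hp1mem with hg1 | hg3
              · exact (Finset.disjoint_left.mp d12) hg1 (hB ▸ hg : p.1 ∈ G2)
              · exact (Finset.disjoint_left.mp d23) (hB ▸ hg : p.1 ∈ G2) hg3
        · exact absurd (hA.trans hB.symm) hneq
  -- assemble
  rw [Nat.card_eq_fintype_card, Fintype.card_subtype, hsplit,
    Finset.card_union_of_disjoint, Finset.card_union_of_disjoint hdisjAB,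
    cardA, cardB, cardC]
  rw [Finset.disjoint_union_left]
  exact ⟨hdisjAC, hdisjBC⟩

lemma badCount0 (E : Pt) (G : Finset Pt) :
    Nat.card {f : Fin 0 → {P : Pt // P ∈ G} //
      ¬ E.submodule ≤ ⨆ i : Fin 0, Projectivization.submodule (f i).val} = 1 := by
  classical
  have hall : ∀ f : Fin 0 → {P : Pt // P ∈ G},
      ¬ E.submodule ≤ ⨆ i : Fin 0, Projectivization.submodule (f i).val := by
    intro f hle
    rw [iSup_of_empty] at hle
    have hbot : E.submodule = ⊥ := le_bot_iff.mp hle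
    have := E.finrank_submodule
    rw [hbot, finrank_bot] at this
    exact absurd this (by norm_num)
  rw [Nat.card_eq_fintype_card, Fintype.card_subtype,
    Finset.filter_true_of_mem (fun f _ => hall f)]
  simp


lemma mainE1 (h : IsBalancedQuasiArc F x E1 E2 E3 G1 G2 G3) :
    raExpP ({E1, E2, E3} ∪ G1 ∪ G2 ∪ G3) E1 =
      1 + ((x : ℝ) + 2) / (3 * (x : ℝ) + 3) * (1 - ((x : ℝ) + 2) / (3 * (x : ℝ) + 3))⁻¹
        + (2 * (x : ℝ) - 2 * (3 * (x : ℝ) ^ 2 + 2 * (x : ℝ))) / (3 * (x : ℝ) + 3) *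
            (1 - 1 / (3 * (x : ℝ) + 3))⁻¹
        + 2 * (3 * (x : ℝ) ^ 2 + 2 * (x : ℝ)) / (3 * (x : ℝ) + 3) *
            (1 - 2 / (3 * (x : ℝ) + 3))⁻¹ := by
  classical
  set nR : ℝ := 3 * (x : ℝ) + 3 with hnR
  have hnpos : (0 : ℝ) < nR := by rw [hnR]; positivity
  set K : ℝ := 3 * (x : ℝ) ^ 2 + 2 * (x : ℝ) with hK
  set r1 : ℝ := ((x : ℝ) + 2) / nR with hr1
  set r2 : ℝ := 1 / nR with hr2
  set r3 : ℝ := 2 / nR with hr3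
  have hr1n : 0 ≤ r1 := by rw [hr1]; positivity
  have hr2n : 0 ≤ r2 := by rw [hr2]; positivity
  have hr3n : 0 ≤ r3 := by rw [hr3]; positivity
  have hr1l : r1 < 1 := by
    rw [hr1, div_lt_one hnpos, hnR]
    linarith [Nat.cast_nonneg (α := ℝ) x]
  have hr2l : r2 < 1 := by
    rw [hr2, div_lt_one hnpos, hnR]
    linarith [Nat.cast_nonneg (α := ℝ) x]
  have hr3l : r3 < 1 := by
    rw [hr3, div_lt_one hnpos, hnR]
    linarith [Nat.cast_nonneg (α := ℝ) x]
  set A : ℝ := ((x : ℝ) + 2) / nR with hA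
  set B : ℝ := (2 * (x : ℝ) - 2 * K) / nR with hB
  set C : ℝ := 2 * K / nR with hC
  set g : ℕ → ℝ := fun u => A * r1 ^ u + B * r2 ^ u + C * r3 ^ u with hg
  set cf : ℕ → ℝ := fun u => (Nat.card {f : Fin u → {P : Pt //
      P ∈ ({E1, E2, E3} ∪ G1 ∪ G2 ∪ G3 : Finset Pt)} //
      ¬ E1.submodule ≤ ⨆ i : Fin u, Projectivization.submodule (f i).val} : ℝ) /
    ((({E1, E2, E3} ∪ G1 ∪ G2 ∪ G3 : Finset Pt)).card : ℝ) ^ u with hcf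
  have hcardG : ((({E1, E2, E3} ∪ G1 ∪ G2 ∪ G3 : Finset Pt)).card : ℝ) = nR := by
    rw [h.card_total, hnR]; push_cast; ring
  have hfun : ∀ u : ℕ, cf (u + 1) = g u := by
    intro u
    rw [hcf]
    simp only []
    rw [badCount h (Nat.succ_pos u), hcardG]
    have h2le : 2 ≤ 2 ^ (u + 1) := by
      calc 2 = 2 ^ 1 := by norm_num
      _ ≤ 2 ^ (u + 1) := Nat.pow_le_pow_right (by norm_num) (by omega)
    have hcast : ((((x + 2) ^ (u + 1) + 2 * x + (3 * x ^ 2 + 2 * x) * (2 ^ (u + 1) - 2)) : ℕ) : ℝ)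
        = ((x : ℝ) + 2) ^ (u + 1) + 2 * (x : ℝ) + K * (2 ^ (u + 1) - 2) := by
      rw [hK]
      push_cast [h2le]
      ring
    rw [hcast, hg]
    simp only []
    rw [hA, hB, hC, hr1, hr2, hr3]
    rw [div_pow, div_pow, div_pow]
    have hnRne : nR ≠ 0 := ne_of_gt hnpos
    field_simp
    ring
  have hsummg : Summable g := by
    refine Summable.add (Summable.add ?_ ?_) ?_
    · exact (summable_geometric_of_lt_one hr1n hr1l).mul_left A
    · exact (summable_geometric_of_lt_one hr2n hr2l).mul_left B
    · exact (summable_geometric_of_lt_one hr3n hr3l).mul_left C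
  have hsumm : Summable cf := by
    rw [← summable_nat_add_iff 1]
    exact hsummg.congr fun u => (hfun u).symm
  have hraw : raExpP ({E1, E2, E3} ∪ G1 ∪ G2 ∪ G3) E1 = ∑' u, cf u := rfl
  rw [hraw, Summable.tsum_eq_zero_add hsumm]
  have hcf0 : cf 0 = 1 := by
    rw [hcf]
    simp only []
    rw [badCount0]
    simp
  rw [hcf0]
  have : (fun u => cf (u + 1)) = g := funext hfun
  rw [this, hg]
  rw [Summable.tsum_add (((summable_geometric_of_lt_one hr1n hr1l).mul_left A).add
      ((summable_geometric_of_lt_one hr2n hr2l).mul_left B))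
      ((summable_geometric_of_lt_one hr3n hr3l).mul_left C),
    Summable.tsum_add ((summable_geometric_of_lt_one hr1n hr1l).mul_left A)
      ((summable_geometric_of_lt_one hr2n hr2l).mul_left B),
    tsum_mul_left, tsum_mul_left, tsum_mul_left,
    tsum_geometric_of_lt_one hr1n hr1l, tsum_geometric_of_lt_one hr2n hr2l,
    tsum_geometric_of_lt_one hr3n hr3l]
  rw [hA, hB, hC, hr1, hr2, hr3, hK]
  ring

lemma rot (h : IsBalancedQuasiArc F x E1 E2 E3 G1 G2 G3) :
    IsBalancedQuasiArc F x E2 E3 E1 G2 G3 G1 := by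
  obtain ⟨nc, c1, c2, c3, s1, s2, s3, ct, sec⟩ := h
  have hset : ({E2, E3, E1} : Finset Pt) ∪ G2 ∪ G3 ∪ G1
      = ({E1, E2, E3} : Finset Pt) ∪ G1 ∪ G2 ∪ G3 := by
    ext a
    simp only [Finset.mem_union, Finset.mem_insert, Finset.mem_singleton]
    tauto
  refine ⟨?_, c2, c3, c1, s2, s3, s1, ?_, ?_⟩
  · rintro ⟨W, hW, h2, h3, h1⟩
    exact nc ⟨W, hW, h1, h2, h3⟩
  · rw [hset]; exact ct
  · intro W hW n1 n2 n3
    rw [hset]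
    exact sec W hW n3 n1 n2

lemma sumform (x : ℕ) :
    (1 : ℝ) + ((x : ℝ) + 2) / (3 * (x : ℝ) + 3) * (1 - ((x : ℝ) + 2) / (3 * (x : ℝ) + 3))⁻¹
        + (2 * (x : ℝ) - 2 * (3 * (x : ℝ) ^ 2 + 2 * (x : ℝ))) / (3 * (x : ℝ) + 3) *
            (1 - 1 / (3 * (x : ℝ) + 3))⁻¹
        + 2 * (3 * (x : ℝ) ^ 2 + 2 * (x : ℝ)) / (3 * (x : ℝ) + 3) *
            (1 - 2 / (3 * (x : ℝ) + 3))⁻¹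
    = 3 + 2 / (3 * (x : ℝ) + 1) -
      2 * (((x : ℝ) + 2) * ((x : ℝ) + 1) + (x : ℝ)) /
        ((3 * (x : ℝ) + 2) * (3 * (x : ℝ) + 1)) +
      (x : ℝ) * ((x : ℝ) + 1) * ((x : ℝ) + 2) /
        ((2 * (x : ℝ) + 1) * (3 * (x : ℝ) + 2) * (3 * (x : ℝ) + 1)) := by
  have hx : (0 : ℝ) ≤ (x : ℝ) := Nat.cast_nonneg x
  have d0 : (3 * (x : ℝ) + 3) ≠ 0 := by linarith
  have d1 : (2 * (x : ℝ) + 1) ≠ 0 := by linarith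
  have d2 : (3 * (x : ℝ) + 2) ≠ 0 := by linarith
  have d3 : (3 * (x : ℝ) + 1) ≠ 0 := by linarith
  have e1 : (1 : ℝ) - ((x : ℝ) + 2) / (3 * (x : ℝ) + 3)
      = (2 * (x : ℝ) + 1) / (3 * (x : ℝ) + 3) := by field_simp; ring
  have e2 : (1 : ℝ) - 1 / (3 * (x : ℝ) + 3) = (3 * (x : ℝ) + 2) / (3 * (x : ℝ) + 3) := by
    field_simp
    ring
  have e3 : (1 : ℝ) - 2 / (3 * (x : ℝ) + 3) = (3 * (x : ℝ) + 1) / (3 * (x : ℝ) + 3) := by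
    field_simp; ring
  rw [e1, e2, e3, inv_div, inv_div, inv_div]
  field_simp
  ring

lemma prodsum (x : ℕ) :
    ∑ s ∈ Finset.Icc 3 (x + 2), ∏ i ∈ Finset.range s,
        ((x : ℝ) + 2 - (i : ℝ)) / (3 * (x : ℝ) + 2 - (i : ℝ))
    = (x : ℝ) * ((x : ℝ) + 1) * ((x : ℝ) + 2) /
        ((2 * (x : ℝ) + 1) * (3 * (x : ℝ) + 2) * (3 * (x : ℝ) + 1)) := by
  rcases Nat.eq_zero_or_pos x with rfl | hx
  · norm_num
  set a : ℕ → ℝ := fun s => ∏ i ∈ Finset.range s,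
    ((x : ℝ) + 2 - (i : ℝ)) / (3 * (x : ℝ) + 2 - (i : ℝ)) with ha
  set b : ℕ → ℝ := fun j => ((3 * (x : ℝ) - j) / (2 * (x : ℝ) + 1)) * a (j + 3) with hb
  have hxR : (1 : ℝ) ≤ (x : ℝ) := by exact_mod_cast hx
  have himg : Finset.Icc 3 (x + 2) = Finset.image (· + 3) (Finset.range x) := by
    ext c; simp only [Finset.mem_Icc, Finset.mem_image, Finset.mem_range]
    constructor
    · rintro ⟨h1, h2⟩; exact ⟨c - 3, by omega, by omega⟩
    · rintro ⟨d, hd, rfl⟩; omega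
  have hstep : ∀ j ∈ Finset.range x, a (j + 3) = b j - b (j + 1) := by
    intro j hj
    rw [Finset.mem_range] at hj
    have hjR : (j : ℝ) ≤ (x : ℝ) - 1 := by
      have : (j : ℝ) + 1 ≤ (x : ℝ) := by exact_mod_cast hj
      linarith
    have hsucc : a (j + 1 + 3) = a (j + 3) *
        (((x : ℝ) + 2 - ((j + 3 : ℕ) : ℝ)) / (3 * (x : ℝ) + 2 - ((j + 3 : ℕ) : ℝ))) := by
      have : j + 1 + 3 = (j + 3) + 1 := by ring
      rw [this, ha]
      exact Finset.prod_range_succ _ _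
    rw [hb]
    simp only []
    rw [hsucc]
    have hd1 : (2 * (x : ℝ) + 1) ≠ 0 := by linarith
    have hd2 : (3 * (x : ℝ) + 2 - ((j + 3 : ℕ) : ℝ)) ≠ 0 := by
      push_cast; linarith
    push_cast
    push_cast at hd2
    field_simp
    ring
  rw [himg, Finset.sum_image (by intro a _ b _ h; beta_reduce at h; omega)]
  rw [Finset.sum_congr rfl hstep, Finset.sum_range_sub' b x]
  have hbx : b x = 0 := by
    rw [hb]
    simp only []
    have : a (x + 3) = 0 := by
      rw [ha]
      apply Finset.prod_eq_zero (i := x + 2)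
      · simp [Finset.mem_range]
      · have : (x : ℝ) + 2 - ((x + 2 : ℕ) : ℝ) = 0 := by push_cast; ring
        rw [this, zero_div]
    rw [this, mul_zero]
  rw [hbx, sub_zero]
  have ha3 : a 3 = (((x : ℝ) + 2) / (3 * (x : ℝ) + 2)) * (((x : ℝ) + 1) / (3 * (x : ℝ) + 1))
      * ((x : ℝ) / (3 * (x : ℝ))) := by
    rw [ha]
    simp only [Finset.prod_range_succ, Finset.prod_range_zero, show (3:ℕ) = 2+1 from rfl]
    norm_num
    left; left; congr 1 <;> ring
  have hb0 : b 0 = ((3 * (x : ℝ)) / (2 * (x : ℝ) + 1)) * a 3 := by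
    rw [hb]; norm_num
  rw [hb0, ha3]
  have h1 : (2 * (x : ℝ) + 1) ≠ 0 := by linarith
  have h2 : (3 * (x : ℝ) + 2) ≠ 0 := by linarith
  have h3 : (3 * (x : ℝ) + 1) ≠ 0 := by linarith
  have h4 : (3 * (x : ℝ)) ≠ 0 := by linarith
  have h5 : (3 * (x : ℝ) + 2 - 2) ≠ 0 := by
    push_cast; linarith
  push_cast
  field_simp

end QArcAux

open QArcAux in
/-- The closed formula for the random access expectation of a fundamental point
of a balanced quasi-arc of weight `x`. -/
theorem stmt8 {F : Type*} [Field F] {x : ℕ}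
    {E1 E2 E3 : Projectivization F (Fin 3 → F)}
    {G1 G2 G3 : Finset (Projectivization F (Fin 3 → F))}
    (h : IsBalancedQuasiArc F x E1 E2 E3 G1 G2 G3)
    (G : Finset (Projectivization F (Fin 3 → F)))
    (hG : G = {E1, E2, E3} ∪ G1 ∪ G2 ∪ G3)
    (E : Projectivization F (Fin 3 → F)) (hE : E = E1 ∨ E = E2 ∨ E = E3) :
    raExpP G E = 3 + 2 / (3 * (x : ℝ) + 1) -
      2 * (((x : ℝ) + 2) * ((x : ℝ) + 1) + (x : ℝ)) /
        ((3 * (x : ℝ) + 2) * (3 * (x : ℝ) + 1)) +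
      ∑ s ∈ Finset.Icc 3 (x + 2), ∏ i ∈ Finset.range s,
        ((x : ℝ) + 2 - (i : ℝ)) / (3 * (x : ℝ) + 2 - (i : ℝ)) := by
  have key : ∀ (A1 A2 A3 : Projectivization F (Fin 3 → F))
      (H1 H2 H3 : Finset (Projectivization F (Fin 3 → F))),
      IsBalancedQuasiArc F x A1 A2 A3 H1 H2 H3 →
      raExpP ({A1, A2, A3} ∪ H1 ∪ H2 ∪ H3) A1 = 3 + 2 / (3 * (x : ℝ) + 1) -
        2 * (((x : ℝ) + 2) * ((x : ℝ) + 1) + (x : ℝ)) /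
          ((3 * (x : ℝ) + 2) * (3 * (x : ℝ) + 1)) +
        ∑ s ∈ Finset.Icc 3 (x + 2), ∏ i ∈ Finset.range s,
          ((x : ℝ) + 2 - (i : ℝ)) / (3 * (x : ℝ) + 2 - (i : ℝ)) := by
    intro A1 A2 A3 H1 H2 H3 h'
    rw [mainE1 h', prodsum x, sumform x]
  rcases hE with rfl | rfl | rfl
  · rw [hG]
    exact key E E2 E3 G1 G2 G3 h
  · rw [hG, show ({E1, E, E3} : Finset (Projectivization F (Fin 3 → F))) ∪ G1 ∪ G2 ∪ G3
        = {E, E3, E1} ∪ G2 ∪ G3 ∪ G1 from by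
      ext a
      simp only [Finset.mem_union, Finset.mem_insert, Finset.mem_singleton]
      tauto]
    exact key E E3 E1 G2 G3 G1 (rot h)
  · rw [hG, show ({E1, E2, E} : Finset (Projectivization F (Fin 3 → F))) ∪ G1 ∪ G2 ∪ G3
        = {E, E1, E2} ∪ G3 ∪ G1 ∪ G2 from by
      ext a
      simp only [Finset.mem_union, Finset.mem_insert, Finset.mem_singleton]
      tauto]
    exact key E E1 E2 G3 G1 G2 (rot (rot h))
end

section
/- For integers x ≥ 0, define f(x) = 3 + 2/(3x+1) − 2((x+2)(x+1)+x)/((3x+2)(3x+1)) + Σ_{s=3}^{x+2} ∏_{i=0}^{s-1} (x+2−i)/(3x+2−i). Then limsup_{x→∞} f(x) ≤ 3 − 1/6. -/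
open Filter Finset

/-- Geometric sum identity. -/
lemma aux_geom (m : ℕ) :
    ∑ s ∈ Finset.Icc 3 (m + 2), ((1 : ℝ) / 3) ^ (s - 2) =
      1 / 2 - (1 / 2) * (1 / 3) ^ m := by
  induction m with
  | zero => simp [show Finset.Icc 3 2 = (∅ : Finset ℕ) by decide]
  | succ m ih =>
      rw [show m + 1 + 2 = (m + 2) + 1 by ring,
        Finset.sum_Icc_succ_top (by omega : 3 ≤ m + 2 + 1), ih,
        show m + 2 + 1 - 2 = m + 1 by omega]
      ring

/-- Pointwise lower bound (for coboundedness). -/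
lemma aux_lower (x : ℕ) :
    (0 : ℝ) ≤ 3 + 2 / (3 * (x : ℝ) + 1) -
        2 * (((x : ℝ) + 2) * ((x : ℝ) + 1) + (x : ℝ)) /
          ((3 * (x : ℝ) + 2) * (3 * (x : ℝ) + 1)) +
        ∑ s ∈ Finset.Icc 3 (x + 2), ∏ i ∈ Finset.range s,
          ((x : ℝ) + 2 - (i : ℝ)) / (3 * (x : ℝ) + 2 - (i : ℝ)) := by
  have hX : (0 : ℝ) ≤ (x : ℝ) := Nat.cast_nonneg x
  have hsum : (0 : ℝ) ≤ ∑ s ∈ Finset.Icc 3 (x + 2), ∏ i ∈ Finset.range s,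
      ((x : ℝ) + 2 - (i : ℝ)) / (3 * (x : ℝ) + 2 - (i : ℝ)) := by
    apply Finset.sum_nonneg
    intro s hs
    apply Finset.prod_nonneg
    intro i hi
    have hs2 : s ≤ x + 2 := (Finset.mem_Icc.mp hs).2
    have hi' : i ≤ x + 1 := by
      have := Finset.mem_range.mp hi; omega
    have hiR : (i : ℝ) ≤ (x : ℝ) + 1 := by exact_mod_cast hi'
    apply div_nonneg <;> linarith
  have hpos : (0 : ℝ) < (3 * (x : ℝ) + 2) * (3 * (x : ℝ) + 1) := by positivity
  have h2 : 2 * (((x : ℝ) + 2) * ((x : ℝ) + 1) + (x : ℝ)) /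
      ((3 * (x : ℝ) + 2) * (3 * (x : ℝ) + 1)) ≤ 3 := by
    rw [div_le_iff₀ hpos]; nlinarith
  have h3 : (0 : ℝ) ≤ 2 / (3 * (x : ℝ) + 1) := by positivity
  linarith

/-- Pointwise upper bound for `x ≥ 1`. -/
lemma aux_upper (x : ℕ) (hx1 : 1 ≤ x) :
    3 + 2 / (3 * (x : ℝ) + 1) -
        2 * (((x : ℝ) + 2) * ((x : ℝ) + 1) + (x : ℝ)) /
          ((3 * (x : ℝ) + 2) * (3 * (x : ℝ) + 1)) +
        ∑ s ∈ Finset.Icc 3 (x + 2), ∏ i ∈ Finset.range s,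
          ((x : ℝ) + 2 - (i : ℝ)) / (3 * (x : ℝ) + 2 - (i : ℝ))
      ≤ 3 - 1 / 6 + 1 / (x : ℝ) := by
  set X : ℝ := (x : ℝ) with hXdef
  have hX : (1 : ℝ) ≤ X := by rw [hXdef]; exact_mod_cast hx1
  have hD : (0 : ℝ) < (3 * X + 2) * (3 * X + 1) := by nlinarith
  have hN2 : (0 : ℝ) ≤ (X + 2) * (X + 1) / ((3 * X + 2) * (3 * X + 1)) := by
    apply div_nonneg (by nlinarith) (le_of_lt hD)
  -- bound each product term
  have hterm : ∀ s ∈ Finset.Icc 3 (x + 2),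
      (∏ i ∈ Finset.range s, (X + 2 - (i : ℝ)) / (3 * X + 2 - (i : ℝ)))
        ≤ (X + 2) * (X + 1) / ((3 * X + 2) * (3 * X + 1)) * (1 / 3) ^ (s - 2) := by
    intro s hs
    obtain ⟨hs3, hs2⟩ := Finset.mem_Icc.mp hs
    have hsplit : (∏ i ∈ Finset.range s, (X + 2 - (i : ℝ)) / (3 * X + 2 - (i : ℝ)))
        = (∏ i ∈ Finset.range 2, (X + 2 - (i : ℝ)) / (3 * X + 2 - (i : ℝ))) *
          ∏ i ∈ Finset.Ico 2 s, (X + 2 - (i : ℝ)) / (3 * X + 2 - (i : ℝ)) := by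
      rw [Finset.range_eq_Ico]
      exact (Finset.prod_Ico_consecutive _ (by omega : 0 ≤ 2) (by omega : 2 ≤ s)).symm
    have h2prod : (∏ i ∈ Finset.range 2, (X + 2 - (i : ℝ)) / (3 * X + 2 - (i : ℝ)))
        = (X + 2) * (X + 1) / ((3 * X + 2) * (3 * X + 1)) := by
      rw [Finset.prod_range_succ, Finset.prod_range_one]
      push_cast
      rw [div_mul_div_comm]
      norm_num
      ring_nf
    have htail : (∏ i ∈ Finset.Ico 2 s, (X + 2 - (i : ℝ)) / (3 * X + 2 - (i : ℝ)))
        ≤ (1 / 3) ^ (s - 2) := by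
      have : (∏ i ∈ Finset.Ico 2 s, (X + 2 - (i : ℝ)) / (3 * X + 2 - (i : ℝ)))
          ≤ ∏ _i ∈ Finset.Ico 2 s, ((1 : ℝ) / 3) := by
        apply Finset.prod_le_prod
        · intro i hi
          obtain ⟨hi2, his⟩ := Finset.mem_Ico.mp hi
          have hiR : (i : ℝ) ≤ X + 1 := by
            have : i ≤ x + 1 := by omega
            rw [hXdef]; exact_mod_cast this
          apply div_nonneg <;> linarith
        · intro i hi
          obtain ⟨hi2, his⟩ := Finset.mem_Ico.mp hi
          have hiR : (i : ℝ) ≤ X + 1 := by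
            have : i ≤ x + 1 := by omega
            rw [hXdef]; exact_mod_cast this
          have hi2R : (2 : ℝ) ≤ (i : ℝ) := by exact_mod_cast hi2
          rw [div_le_div_iff₀ (by linarith) (by norm_num)]
          linarith
      rwa [Finset.prod_const, Nat.card_Ico] at this
    calc (∏ i ∈ Finset.range s, (X + 2 - (i : ℝ)) / (3 * X + 2 - (i : ℝ)))
        = (X + 2) * (X + 1) / ((3 * X + 2) * (3 * X + 1)) *
          ∏ i ∈ Finset.Ico 2 s, (X + 2 - (i : ℝ)) / (3 * X + 2 - (i : ℝ)) := by
          rw [hsplit, h2prod]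
      _ ≤ (X + 2) * (X + 1) / ((3 * X + 2) * (3 * X + 1)) * (1 / 3) ^ (s - 2) :=
          mul_le_mul_of_nonneg_left htail hN2
  have hsum : (∑ s ∈ Finset.Icc 3 (x + 2), ∏ i ∈ Finset.range s,
      (X + 2 - (i : ℝ)) / (3 * X + 2 - (i : ℝ)))
      ≤ (X + 2) * (X + 1) / ((3 * X + 2) * (3 * X + 1)) * (1 / 2) := by
    calc (∑ s ∈ Finset.Icc 3 (x + 2), ∏ i ∈ Finset.range s,
        (X + 2 - (i : ℝ)) / (3 * X + 2 - (i : ℝ)))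
        ≤ ∑ s ∈ Finset.Icc 3 (x + 2),
            (X + 2) * (X + 1) / ((3 * X + 2) * (3 * X + 1)) * (1 / 3) ^ (s - 2) :=
          Finset.sum_le_sum hterm
      _ = (X + 2) * (X + 1) / ((3 * X + 2) * (3 * X + 1)) *
            ∑ s ∈ Finset.Icc 3 (x + 2), ((1 : ℝ) / 3) ^ (s - 2) := by
          rw [Finset.mul_sum]
      _ ≤ (X + 2) * (X + 1) / ((3 * X + 2) * (3 * X + 1)) * (1 / 2) := by
          apply mul_le_mul_of_nonneg_left _ hN2
          rw [aux_geom x]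
          have : (0 : ℝ) ≤ (1 / 2) * (1 / 3) ^ x := by positivity
          linarith
  -- final algebra
  have hfinal : 3 + 2 / (3 * X + 1) -
      2 * ((X + 2) * (X + 1) + X) / ((3 * X + 2) * (3 * X + 1)) +
      (X + 2) * (X + 1) / ((3 * X + 2) * (3 * X + 1)) * (1 / 2)
      ≤ 3 - 1 / 6 + 1 / X := by
    have hXpos : (0 : ℝ) < X := by linarith
    have h1 : (0 : ℝ) < 3 * X + 1 := by linarith
    have h2 : (0 : ℝ) < 3 * X + 2 := by linarith
    have hA : 2 / (3 * X + 1) ≤ 1 / X := by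
      rw [div_le_div_iff₀ h1 hXpos]; linarith
    have hB : (X + 2) * (X + 1) / ((3 * X + 2) * (3 * X + 1)) * (1 / 2) + 1 / 6
        ≤ 2 * ((X + 2) * (X + 1) + X) / ((3 * X + 2) * (3 * X + 1)) := by
      rw [div_mul_eq_mul_div, div_add' _ _ _ (ne_of_gt hD),
        div_le_div_iff₀ hD hD]
      nlinarith
    linarith
  linarith

/-- The asymptotic upper bound `limsup_{x→∞} E[τ_F(G_x)] ≤ 3 - 1/6` for the
random access expectation formula of balanced quasi-arcs of weight `x`. -/
theorem stmt9 :
    Filter.limsup (fun x : ℕ =>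
      3 + 2 / (3 * (x : ℝ) + 1) -
        2 * (((x : ℝ) + 2) * ((x : ℝ) + 1) + (x : ℝ)) /
          ((3 * (x : ℝ) + 2) * (3 * (x : ℝ) + 1)) +
        ∑ s ∈ Finset.Icc 3 (x + 2), ∏ i ∈ Finset.range s,
          ((x : ℝ) + 2 - (i : ℝ)) / (3 * (x : ℝ) + 2 - (i : ℝ)))
      Filter.atTop ≤ 3 - 1 / 6 := by
  set u : ℕ → ℝ := fun x : ℕ =>
      3 + 2 / (3 * (x : ℝ) + 1) -
        2 * (((x : ℝ) + 2) * ((x : ℝ) + 1) + (x : ℝ)) /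
          ((3 * (x : ℝ) + 2) * (3 * (x : ℝ) + 1)) +
        ∑ s ∈ Finset.Icc 3 (x + 2), ∏ i ∈ Finset.range s,
          ((x : ℝ) + 2 - (i : ℝ)) / (3 * (x : ℝ) + 2 - (i : ℝ)) with hu
  have hco : Filter.IsCoboundedUnder (· ≤ ·) Filter.atTop u :=
    Filter.isCoboundedUnder_le_of_le Filter.atTop (fun x => aux_lower x)
  refine le_of_forall_pos_le_add fun ε hε => ?_
  apply Filter.limsup_le_of_le hco
  have h0 : Filter.Tendsto (fun n : ℕ => 1 / (n : ℝ)) Filter.atTop (nhds 0) :=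
    tendsto_one_div_atTop_nhds_zero_nat
  have hev : ∀ᶠ n : ℕ in Filter.atTop, 1 / (n : ℝ) < ε :=
    h0.eventually (eventually_lt_nhds hε)
  filter_upwards [hev, Filter.eventually_ge_atTop 1] with n hn hn1
  have := aux_upper n hn1
  have : u n ≤ 3 - 1 / 6 + 1 / (n : ℝ) := this
  linarith
end

section
/- Let G_{x,y} be the multiset consisting of a balanced quasi-arc of weight x in PG(2,q) in which each of the three fundamental points appears with multiplicity y ≥ 1 (so n = 3x+3y). Then the number α_F(G_{x,y}, s) of s-element sub-multisets whose span contains a fixed fundamental point satisfies: α_F(G_{x,y},1) = y; α_F(G_{x,y},2) = 2(xy + C(x,2)) + y(3x+2y) + y(y−1)/2; α_F(G_{x,y},s) = C(3x+3y,s) − C(x+2y,s) − 2·C(y,s−1)·x for 3 ≤ s ≤ x+2y; and α_F(G_{x,y},s) = C(3x+3y,s) for x+2y < s ≤ 3x+3y−1. -/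
/-!
By the symmetry of the configuration we may take `E = E1`. A line through three distinct points of
the arc is fundamental, and only `E1E2` and `E3E1` pass through `E1`. Hence a pair of indices spans
`E1` iff it contains a copy of `E1` or consists of two distinct points of `E1E2` or of `E1E3`; and a
set of `s ≥ 3` indices misses `E1` iff it lies on `E2E3` (`C(x + 2y, s)` sets) or consists of one
point of `G3` with copies of `E2`, or of one point of `G1` with copies of `E3` (`x · C(y, s - 1)`
sets each).
-/

open scoped Classical

/-- For an indexed family (multiset) of projective points `P`, the number of
`s`-element sub-multisets (i.e. `s`-subsets of the index set) whose projective
span contains the point `E`. -/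
noncomputable def alphaFam {ι : Type*} [Fintype ι] {F : Type*} [Field F]
    (P : ι → Projectivization F (Fin 3 → F))
    (E : Projectivization F (Fin 3 → F)) (s : ℕ) : ℕ :=
  ((Finset.univ.powersetCard s).filter fun S : Finset ι =>
    E.submodule ≤ ⨆ i ∈ S, Projectivization.submodule (P i)).card

open Finset Module
open scoped LinearAlgebra.Projectivization

theorem Nat.add_choose_two (a b : ℕ) : (a + b).choose 2 = a.choose 2 + a * b + b.choose 2 := by
  rw [Nat.add_choose_eq]
  simp [Finset.Nat.antidiagonal_succ]
  ring

namespace Finset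

variable {α : Type*} [DecidableEq α]

theorem card_filter_or_of_imp_not {s : Finset α} {p q : α → Prop} [DecidablePred p]
    [DecidablePred q] (h : ∀ a ∈ s, p a → ¬ q a) :
    #(s.filter fun a => p a ∨ q a) = #(s.filter p) + #(s.filter q) := by
  rw [filter_or, card_union_of_disjoint (disjoint_filter.2 h)]

theorem insert_union_rotate (a b c : α) (A B C : Finset α) :
    ({b, c, a} ∪ B ∪ C ∪ A : Finset α) = {a, b, c} ∪ A ∪ B ∪ C := by
  ext; simp only [mem_union, mem_insert, mem_singleton]; tauto

theorem insert_union_reflect (a b c : α) (A B C : Finset α) :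
    ({a, c, b} ∪ C ∪ B ∪ A : Finset α) = {a, b, c} ∪ A ∪ B ∪ C := by
  ext; simp only [mem_union, mem_insert, mem_singleton]; tauto

variable [Fintype α]

theorem card_filter_subset_and_not_subset {A K : Finset α} (hAK : A ⊆ K) (s : ℕ) :
    #((powersetCard s univ).filter fun S => S ⊆ K ∧ ¬ S ⊆ A) =
      (#K).choose s - (#A).choose s := by
  have : (powersetCard s univ).filter (fun S => S ⊆ K ∧ ¬ S ⊆ A) =
      powersetCard s K \ powersetCard s A := by
    ext S
    simp only [mem_filter, mem_powersetCard, subset_univ, true_and, mem_sdiff]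
    tauto
  rw [this, card_sdiff_of_subset (powersetCard_mono hAK), card_powersetCard, card_powersetCard]

theorem card_filter_exists_subset_insert {A : Finset α} {p : α → Prop} [DecidablePred p]
    (hA : ∀ a ∈ A, ¬ p a) (s : ℕ) :
    #((powersetCard (s + 1) univ).filter fun S => ∃ b ∈ S, p b ∧ S ⊆ insert b A) =
      #(univ.filter p) * (#A).choose s := by
  have : (powersetCard (s + 1) univ).filter (fun S => ∃ b ∈ S, p b ∧ S ⊆ insert b A) =
      (univ.filter p).biUnion fun b => (powersetCard (s + 1) (insert b A)).filter ({b} ⊆ ·) := by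
    ext S
    simp only [mem_filter, mem_powersetCard, subset_univ, true_and, mem_biUnion, mem_univ,
      singleton_subset_iff]
    aesop
  rw [this, card_biUnion, sum_const_nat fun b hb => ?_]
  · rw [card_filter_powersetCard_subset _ _ _ (by simp) (by simp),
      card_insert_of_notMem fun hbA => hA b hbA (mem_filter.1 hb).2, card_singleton]
    simp
  · intro b hb b' _ hbb'
    refine disjoint_left.2 fun S hS hS' => ?_
    simp only [mem_filter, mem_powersetCard, singleton_subset_iff] at hS hS'
    rcases mem_insert.1 (hS'.1.1 hS.2) with rfl | hbA
    · exact hbb' rfl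
    · exact hA b hbA (mem_filter.1 hb).2

end Finset

namespace Projectivization

variable {K V : Type*} [DivisionRing K] [AddCommGroup V] [Module K V]

theorem submodule_le_submodule_iff {p q : ℙ K V} : p.submodule ≤ q.submodule ↔ p = q :=
  ⟨fun h => submodule_injective (Submodule.eq_of_le_of_finrank_le h
    (by rw [p.finrank_submodule, q.finrank_submodule])), fun h => h ▸ le_rfl⟩

theorem finrank_sup_submodule_le_two (p q : ℙ K V) :
    finrank K ↥(p.submodule ⊔ q.submodule) ≤ 2 := by
  have := Submodule.finrank_sup_add_finrank_inf_eq p.submodule q.submodule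
  rw [p.finrank_submodule, q.finrank_submodule] at this
  omega

theorem finrank_sup_submodule_of_ne {p q : ℙ K V} (h : p ≠ q) :
    finrank K ↥(p.submodule ⊔ q.submodule) = 2 := by
  have hsum := Submodule.finrank_sup_add_finrank_inf_eq p.submodule q.submodule
  have hinf : finrank K ↥(p.submodule ⊓ q.submodule) ≠ 1 := fun h1 =>
    h <| submodule_le_submodule_iff.1 <| le_of_eq_of_le
      (Submodule.eq_of_le_of_finrank_le inf_le_left (by rw [h1, p.finrank_submodule])).symm
      inf_le_right
  have hle := Submodule.finrank_mono (inf_le_left : p.submodule ⊓ q.submodule ≤ p.submodule)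
  rw [p.finrank_submodule, q.finrank_submodule] at hsum
  rw [p.finrank_submodule] at hle
  omega

theorem sup_submodule_eq_of_ne {p q : ℙ K V} (h : p ≠ q) {W : Submodule K V}
    (hW : finrank K W = 2) (hp : p.submodule ≤ W) (hq : q.submodule ≤ W) :
    p.submodule ⊔ q.submodule = W :=
  haveI : FiniteDimensional K W := Module.finite_of_finrank_eq_succ hW
  Submodule.eq_of_le_of_finrank_le (sup_le hp hq) (by rw [hW, finrank_sup_submodule_of_ne h])

theorem eq_of_submodule_le_inf {W₁ W₂ : Submodule K V} (h₁ : finrank K W₁ = 2)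
    (h₂ : finrank K W₂ = 2) (hne : W₁ ≠ W₂) {p q : ℙ K V}
    (hp : p.submodule ≤ W₁ ⊓ W₂) (hq : q.submodule ≤ W₁ ⊓ W₂) : p = q := by
  by_contra hpq
  exact hne <|
    (sup_submodule_eq_of_ne hpq h₁ (hp.trans inf_le_left) (hq.trans inf_le_left)).symm.trans
      (sup_submodule_eq_of_ne hpq h₂ (hp.trans inf_le_right) (hq.trans inf_le_right))

theorem finrank_eq_two_of_ne_top [FiniteDimensional K V] (hV : finrank K V = 3)
    {W : Submodule K V} (hW : W ≠ ⊤) {p q : ℙ K V} (hpq : p ≠ q) (hp : p.submodule ≤ W)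
    (hq : q.submodule ≤ W) : finrank K W = 2 := by
  have hlt := Submodule.finrank_lt hW
  have hge := Submodule.finrank_mono (sup_le hp hq)
  rw [finrank_sup_submodule_of_ne hpq] at hge
  omega

end Projectivization

section QuasiArc

open Projectivization

variable {F : Type*} [Field F] {x y : ℕ} {E1 E2 E3 : ℙ F (Fin 3 → F)}
  {G1 G2 G3 : Finset (ℙ F (Fin 3 → F))} {ι : Type*} [Fintype ι]
  {P : ι → ℙ F (Fin 3 → F)}

namespace IsBalancedQuasiArc

theorem rotate (h : IsBalancedQuasiArc F x E1 E2 E3 G1 G2 G3) :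
    IsBalancedQuasiArc F x E2 E3 E1 G2 G3 G1 where
  not_collinear := fun ⟨W, hW, h2, h3, h1⟩ => h.not_collinear ⟨W, hW, h1, h2, h3⟩
  card_G1 := h.card_G2
  card_G2 := h.card_G3
  card_G3 := h.card_G1
  sub_G1 := h.sub_G2
  sub_G2 := h.sub_G3
  sub_G3 := h.sub_G1
  card_total := by rw [insert_union_rotate]; exact h.card_total
  secant W hW h23 h31 h12 := by rw [insert_union_rotate]; exact h.secant W hW h12 h23 h31

theorem reflect (h : IsBalancedQuasiArc F x E1 E2 E3 G1 G2 G3) :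
    IsBalancedQuasiArc F x E1 E3 E2 G3 G2 G1 where
  not_collinear := fun ⟨W, hW, h1, h3, h2⟩ => h.not_collinear ⟨W, hW, h1, h2, h3⟩
  card_G1 := h.card_G3
  card_G2 := h.card_G2
  card_G3 := h.card_G1
  sub_G1 Q hQ := sup_comm E3.submodule E1.submodule ▸ h.sub_G3 Q hQ
  sub_G2 Q hQ := sup_comm E2.submodule E3.submodule ▸ h.sub_G2 Q hQ
  sub_G3 Q hQ := sup_comm E1.submodule E2.submodule ▸ h.sub_G1 Q hQ
  card_total := by rw [insert_union_reflect]; exact h.card_total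
  secant W hW h13 h32 h21 := by
    rw [insert_union_reflect]
    exact h.secant W hW (sup_comm E2.submodule _ ▸ h21) (sup_comm E3.submodule _ ▸ h32)
      (sup_comm E1.submodule _ ▸ h13)

theorem disjoint_fundamental_and_G12 (h : IsBalancedQuasiArc F x E1 E2 E3 G1 G2 G3) :
    Disjoint ({E1, E2, E3} : Finset _) (G1 ∪ G2 ∪ G3) ∧ Disjoint G1 G2 := by
  have htot := h.card_total
  rw [union_assoc, union_assoc, ← union_assoc G1] at htot
  have h3 : #({E1, E2, E3} : Finset _) ≤ 3 := card_le_three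
  have hE := card_union_le ({E1, E2, E3} : Finset _) (G1 ∪ G2 ∪ G3)
  have h123 := card_union_le (G1 ∪ G2) G3
  have h12 := card_union_le G1 G2
  rw [h.card_G1, h.card_G2] at h12
  rw [h.card_G3] at h123
  exact ⟨card_union_eq_card_add_card.1 (by omega),
    card_union_eq_card_add_card.1 (by rw [h.card_G1, h.card_G2]; omega)⟩

theorem fundamental_ne_of_mem_G (h : IsBalancedQuasiArc F x E1 E2 E3 G1 G2 G3)
    {E Q : ℙ F (Fin 3 → F)} (hE : E ∈ ({E1, E2, E3} : Finset _))
    (hQ : Q ∈ G1 ∪ G2 ∪ G3) : E ≠ Q :=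
  fun he => disjoint_left.1 h.disjoint_fundamental_and_G12.1 hE (he ▸ hQ)

theorem disjoint_G12 (h : IsBalancedQuasiArc F x E1 E2 E3 G1 G2 G3) : Disjoint G1 G2 :=
  h.disjoint_fundamental_and_G12.2

theorem not_le_line23 (h : IsBalancedQuasiArc F x E1 E2 E3 G1 G2 G3) :
    ¬ E1.submodule ≤ E2.submodule ⊔ E3.submodule := fun hle =>
  h.not_collinear ⟨_, finrank_sup_submodule_le_two E2 E3, hle, le_sup_left, le_sup_right⟩

theorem ne12 (h : IsBalancedQuasiArc F x E1 E2 E3 G1 G2 G3) : E1 ≠ E2 := fun he =>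
  h.not_le_line23 (he ▸ le_sup_left)

theorem eq_fundamental_line_of_three (h : IsBalancedQuasiArc F x E1 E2 E3 G1 G2 G3)
    {W : Submodule F (Fin 3 → F)} (hW : finrank F W = 2) {a b c : ℙ F (Fin 3 → F)}
    (ha : a ∈ ({E1, E2, E3} ∪ G1 ∪ G2 ∪ G3 : Finset _))
    (hb : b ∈ ({E1, E2, E3} ∪ G1 ∪ G2 ∪ G3 : Finset _))
    (hc : c ∈ ({E1, E2, E3} ∪ G1 ∪ G2 ∪ G3 : Finset _)) (hab : a ≠ b) (hac : a ≠ c)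
    (hbc : b ≠ c) (haW : a.submodule ≤ W) (hbW : b.submodule ≤ W) (hcW : c.submodule ≤ W) :
    W = E1.submodule ⊔ E2.submodule ∨ W = E2.submodule ⊔ E3.submodule ∨
      W = E3.submodule ⊔ E1.submodule := by
  by_contra! hne
  have hsub : ({a, b, c} : Finset _) ⊆
      ({E1, E2, E3} ∪ G1 ∪ G2 ∪ G3 : Finset _).filter fun Q => Q.submodule ≤ W := by
    simp only [insert_subset_iff, singleton_subset_iff, mem_filter]
    exact ⟨⟨ha, haW⟩, ⟨hb, hbW⟩, ⟨hc, hcW⟩⟩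
  have := (card_le_card hsub).trans (h.secant W hW hne.1 hne.2.1 hne.2.2)
  rw [card_eq_three.2 ⟨a, b, c, hab, hac, hbc, rfl⟩] at this
  omega

theorem le_line23_iff (h : IsBalancedQuasiArc F x E1 E2 E3 G1 G2 G3) {Q : ℙ F (Fin 3 → F)}
    (hQ : Q ∈ ({E1, E2, E3} ∪ G1 ∪ G2 ∪ G3 : Finset _)) :
    Q.submodule ≤ E2.submodule ⊔ E3.submodule ↔ Q = E2 ∨ Q = E3 ∨ Q ∈ G2 := by
  have hl23 := finrank_sup_submodule_of_ne h.rotate.ne12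
  refine ⟨fun hle => ?_, ?_⟩
  · simp only [mem_union, mem_insert, mem_singleton] at hQ
    rcases hQ with (((rfl | rfl | rfl) | hQ) | hQ) | hQ
    · exact absurd hle h.not_le_line23
    · exact .inl rfl
    · exact .inr (.inl rfl)
    · -- a point of `G1` on `E2E3` would be the intersection `E2` of the two lines
      refine absurd (eq_of_submodule_le_inf (finrank_sup_submodule_of_ne h.ne12) hl23
        (fun he => h.not_le_line23 (he ▸ le_sup_left)) (le_inf (h.sub_G1 Q hQ) hle)
        (le_inf le_sup_right le_sup_left)) ?_
      exact (h.fundamental_ne_of_mem_G (E := E2) (by simp) (by simp [hQ])).symm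
    · exact .inr (.inr hQ)
    · refine absurd (eq_of_submodule_le_inf (finrank_sup_submodule_of_ne h.rotate.rotate.ne12)
        hl23 (fun he => h.not_le_line23 (he ▸ le_sup_right)) (le_inf (h.sub_G3 Q hQ) hle)
        (le_inf le_sup_left le_sup_right)) ?_
      exact (h.fundamental_ne_of_mem_G (E := E3) (by simp) (by simp [hQ])).symm
  · rintro (rfl | rfl | hQ)
    · exact le_sup_left
    · exact le_sup_right
    · exact h.sub_G2 Q hQ

end IsBalancedQuasiArc

structure EnumeratesQuasiArc (P : ι → ℙ F (Fin 3 → F)) (y : ℕ)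
    (E1 E2 E3 : ℙ F (Fin 3 → F)) (G1 G2 G3 : Finset (ℙ F (Fin 3 → F))) : Prop where
  card_fiber_fundamental : ∀ E ∈ ({E1, E2, E3} : Finset _), #(univ.filter (P · = E)) = y
  card_fiber_G : ∀ Q ∈ G1 ∪ G2 ∪ G3, #(univ.filter (P · = Q)) = 1
  mem_support : ∀ i, P i ∈ ({E1, E2, E3} ∪ G1 ∪ G2 ∪ G3 : Finset _)

namespace EnumeratesQuasiArc

theorem rotate (hP : EnumeratesQuasiArc P y E1 E2 E3 G1 G2 G3) :
    EnumeratesQuasiArc P y E2 E3 E1 G2 G3 G1 where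
  card_fiber_fundamental E hE := hP.card_fiber_fundamental E (by simp at hE ⊢; tauto)
  card_fiber_G Q hQ := hP.card_fiber_G Q (by simp at hQ ⊢; tauto)
  mem_support i := insert_union_rotate E1 E2 E3 G1 G2 G3 ▸ hP.mem_support i

theorem reflect (hP : EnumeratesQuasiArc P y E1 E2 E3 G1 G2 G3) :
    EnumeratesQuasiArc P y E1 E3 E2 G3 G2 G1 where
  card_fiber_fundamental E hE := hP.card_fiber_fundamental E (by simp at hE ⊢; tauto)
  card_fiber_G Q hQ := hP.card_fiber_G Q (by simp at hQ ⊢; tauto)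
  mem_support i := insert_union_reflect E1 E2 E3 G1 G2 G3 ▸ hP.mem_support i

theorem eq_of_mem_G (hP : EnumeratesQuasiArc P y E1 E2 E3 G1 G2 G3) {i j : ι}
    (hi : P i ∈ G1 ∪ G2 ∪ G3) (hji : P j = P i) : j = i :=
  card_le_one.1 (hP.card_fiber_G _ hi).le j (by simpa using hji) i (by simp)

theorem mem_fundamental_of_ne (hP : EnumeratesQuasiArc P y E1 E2 E3 G1 G2 G3) {i j : ι}
    (hij : i ≠ j) (he : P i = P j) : P i = E1 ∨ P i = E2 ∨ P i = E3 := by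
  have := hP.mem_support i
  simp only [mem_union, mem_insert, mem_singleton] at this
  rcases this with ((hE | hG) | hG) | hG
  · exact hE
  all_goals exact absurd (hP.eq_of_mem_G (by simp [hG]) he.symm) hij.symm

theorem card_preimage_G (hP : EnumeratesQuasiArc P y E1 E2 E3 G1 G2 G3)
    {G : Finset (ℙ F (Fin 3 → F))} (hG : G ⊆ G1 ∪ G2 ∪ G3) :
    #(univ.filter (P · ∈ G)) = #G := by
  rw [← sum_card_fiberwise_eq_card_filter, sum_congr rfl fun Q hQ => hP.card_fiber_G Q (hG hQ),
    sum_const, smul_eq_mul, mul_one]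

theorem alphaFam_one (hP : EnumeratesQuasiArc P y E1 E2 E3 G1 G2 G3) : alphaFam P E1 1 = y := by
  rw [alphaFam, powersetCard_one, filter_map, card_map]
  simp only [Function.comp_def, Function.Embedding.coeFn_mk, Finset.iSup_singleton,
    submodule_le_submodule_iff, eq_comm (a := E1)]
  exact hP.card_fiber_fundamental E1 (by simp)

end EnumeratesQuasiArc

namespace IsBalancedQuasiArc

theorem not_le_sup_of_mem_G3 (h : IsBalancedQuasiArc F x E1 E2 E3 G1 G2 G3)
    {B : ℙ F (Fin 3 → F)} (hB : B ∈ G3) :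
    ¬ E1.submodule ≤ E2.submodule ⊔ B.submodule := by
  intro hle
  have hE2B : E2 ≠ B := h.fundamental_ne_of_mem_G (by simp) (by simp [hB])
  have hne : E2.submodule ⊔ B.submodule ≠ E3.submodule ⊔ E1.submodule := fun he =>
    h.rotate.not_le_line23 (he ▸ le_sup_left)
  refine h.fundamental_ne_of_mem_G (E := E1) (Q := B) (by simp) (by simp [hB]) ?_
  exact eq_of_submodule_le_inf (finrank_sup_submodule_of_ne hE2B)
    (finrank_sup_submodule_of_ne h.rotate.rotate.ne12) hne (le_inf hle le_sup_right)
    (le_inf le_sup_right (h.sub_G3 B hB))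

theorem le_sup_of_mem_G3 (h : IsBalancedQuasiArc F x E1 E2 E3 G1 G2 G3)
    {B : ℙ F (Fin 3 → F)} (hB : B ∈ G3) : E1.submodule ≤ E3.submodule ⊔ B.submodule := by
  rw [sup_submodule_eq_of_ne (h.fundamental_ne_of_mem_G (E := E3) (by simp) (by simp [hB]))
    (finrank_sup_submodule_of_ne h.rotate.rotate.ne12) le_sup_left (h.sub_G3 B hB)]
  exact le_sup_right

theorem not_le_line23_of_mem_G3 (h : IsBalancedQuasiArc F x E1 E2 E3 G1 G2 G3)
    {B : ℙ F (Fin 3 → F)} (hB : B ∈ G3) :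
    ¬ B.submodule ≤ E2.submodule ⊔ E3.submodule := by
  rw [h.le_line23_iff (by simp [hB])]
  rintro (hB2 | hB2 | hB2)
  · exact h.fundamental_ne_of_mem_G (E := E2) (by simp) (by simp [hB]) hB2.symm
  · exact h.fundamental_ne_of_mem_G (E := E3) (by simp) (by simp [hB]) hB2.symm
  · exact disjoint_left.1 h.rotate.disjoint_G12 hB2 hB

theorem mem_G1_or_G3 (h : IsBalancedQuasiArc F x E1 E2 E3 G1 G2 G3) {Q : ℙ F (Fin 3 → F)}
    (hQ : Q ∈ ({E1, E2, E3} ∪ G1 ∪ G2 ∪ G3 : Finset _)) (hQ1 : Q ≠ E1)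
    (hQ23 : ¬ Q.submodule ≤ E2.submodule ⊔ E3.submodule) : Q ∈ G1 ∨ Q ∈ G3 := by
  rw [h.le_line23_iff hQ] at hQ23
  simp only [mem_union, mem_insert, mem_singleton] at hQ
  tauto

theorem subset_insert_of_not_le_iSup (h : IsBalancedQuasiArc F x E1 E2 E3 G1 G2 G3)
    (hP : EnumeratesQuasiArc P y E1 E2 E3 G1 G2 G3) {S : Finset ι} (hS : 3 ≤ #S)
    (hE1 : ¬ E1.submodule ≤ ⨆ i ∈ S, (P i).submodule) {i₀ : ι} (hi₀ : i₀ ∈ S)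
    (hB : P i₀ ∈ G3) : S ⊆ insert i₀ (univ.filter (P · = E2)) := by
  set V := ⨆ i ∈ S, (P i).submodule
  have hle : ∀ i ∈ S, (P i).submodule ≤ V := fun i hi =>
    le_biSup (fun i => (P i).submodule) hi
  have hV : V ≠ ⊤ := fun hV => hE1 (hV ▸ le_top)
  have hBG : P i₀ ∈ G1 ∪ G2 ∪ G3 := by simp [hB]
  -- the points of `S` other than `P i₀` coincide: otherwise `V` is a line through three
  -- points of the arc and `P i₀ ∉ E2E3`, so `V` would pass through `E1`
  have hconst : ∀ j ∈ S, ∀ k ∈ S, j ≠ i₀ → k ≠ i₀ → P j = P k := by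
    intro j hj k hk hj₀ hk₀
    by_contra hjk
    have hj₀' : P i₀ ≠ P j := fun he => hj₀ (hP.eq_of_mem_G hBG he.symm)
    have hk₀' : P i₀ ≠ P k := fun he => hk₀ (hP.eq_of_mem_G hBG he.symm)
    have hrk := finrank_eq_two_of_ne_top (finrank_fin_fun F) hV hjk (hle j hj) (hle k hk)
    rcases h.eq_fundamental_line_of_three hrk (hP.mem_support i₀) (hP.mem_support j)
      (hP.mem_support k) hj₀' hk₀' hjk (hle i₀ hi₀) (hle j hj) (hle k hk) with hW | hW | hW
    · exact hE1 (hW ▸ le_sup_left)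
    · exact h.not_le_line23_of_mem_G3 hB (hW ▸ hle i₀ hi₀)
    · exact hE1 (hW ▸ le_sup_right)
  obtain ⟨j, hj, k, hk, hjk, hj₀, hk₀⟩ :
      ∃ j ∈ S, ∃ k ∈ S, j ≠ k ∧ j ≠ i₀ ∧ k ≠ i₀ := by
    obtain ⟨j, hj, k, hk, hjk⟩ := one_lt_card.1 (by rw [card_erase_of_mem hi₀]; omega :
      1 < #(S.erase i₀))
    exact ⟨j, mem_of_mem_erase hj, k, mem_of_mem_erase hk, hjk, ne_of_mem_erase hj,
      ne_of_mem_erase hk⟩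
  -- that common point has two indices, so it is fundamental, and only `E2` keeps `E1 ∉ V`
  have hE2 : P j = E2 := by
    rcases hP.mem_fundamental_of_ne hjk (hconst j hj k hk hj₀ hk₀) with hA | hA | hA
    · exact absurd (hA ▸ hle j hj) hE1
    · exact hA
    · exact absurd ((h.le_sup_of_mem_G3 hB).trans (sup_le (hA ▸ hle j hj) (hle i₀ hi₀))) hE1
  intro i hi
  rcases eq_or_ne i i₀ with rfl | hi₀'
  · exact mem_insert_self _ _
  · exact mem_insert_of_mem <|
      mem_filter.2 ⟨mem_univ _, (hconst i hi j hj hi₀' hj₀).trans hE2⟩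

theorem not_le_iSup_of_subset_insert (h : IsBalancedQuasiArc F x E1 E2 E3 G1 G2 G3)
    {S : Finset ι} {i₀ : ι} (hB : P i₀ ∈ G3)
    (hS : S ⊆ insert i₀ (univ.filter (P · = E2))) :
    ¬ E1.submodule ≤ ⨆ i ∈ S, (P i).submodule := by
  refine fun hle => h.not_le_sup_of_mem_G3 hB (hle.trans (iSup₂_le fun i hi => ?_))
  rcases mem_insert.1 (hS hi) with rfl | hi
  · exact le_sup_right
  · exact (mem_filter.1 hi).2 ▸ le_sup_left

theorem not_le_iSup_iff_of_three_le_card (h : IsBalancedQuasiArc F x E1 E2 E3 G1 G2 G3)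
    (hP : EnumeratesQuasiArc P y E1 E2 E3 G1 G2 G3) {S : Finset ι} (hS : 3 ≤ #S) :
    ¬ E1.submodule ≤ ⨆ i ∈ S, (P i).submodule ↔
      S ⊆ univ.filter (fun i => (P i).submodule ≤ E2.submodule ⊔ E3.submodule) ∨
      (∃ i ∈ S, P i ∈ G3 ∧ S ⊆ insert i (univ.filter (P · = E2))) ∨
      (∃ i ∈ S, P i ∈ G1 ∧ S ⊆ insert i (univ.filter (P · = E3))) := by
  constructor
  · intro hE1
    by_cases hL : S ⊆ univ.filter (fun i => (P i).submodule ≤ E2.submodule ⊔ E3.submodule)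
    · exact .inl hL
    obtain ⟨i₀, hi₀, hi₀L⟩ := not_subset.1 hL
    have hi₀1 : P i₀ ≠ E1 := fun he => hE1 (he ▸ le_biSup (fun i => (P i).submodule) hi₀)
    rcases h.mem_G1_or_G3 (hP.mem_support i₀) hi₀1 (by simpa using hi₀L) with hB | hB
    · exact .inr (.inr ⟨i₀, hi₀, hB,
        h.reflect.subset_insert_of_not_le_iSup hP.reflect hS hE1 hi₀ hB⟩)
    · exact .inr (.inl ⟨i₀, hi₀, hB, h.subset_insert_of_not_le_iSup hP hS hE1 hi₀ hB⟩)
  · rintro (hL | ⟨i₀, -, hB, hS⟩ | ⟨i₀, -, hB, hS⟩)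
    · refine fun hle => h.not_le_line23 (hle.trans (iSup₂_le fun i hi => ?_))
      simpa using hL hi
    · exact h.not_le_iSup_of_subset_insert hB hS
    · exact h.reflect.not_le_iSup_of_subset_insert hB hS

theorem sup_eq_line12_of_subset (h : IsBalancedQuasiArc F x E1 E2 E3 G1 G2 G3)
    (hP : EnumeratesQuasiArc P y E1 E2 E3 G1 G2 G3) {i j : ι} (hij : i ≠ j)
    (hS : ({i, j} : Finset ι) ⊆ (univ.filter (P · = E2) ∪ univ.filter (P · ∈ G1)))
    (hS2 : ¬ ({i, j} : Finset ι) ⊆ univ.filter (P · = E2)) :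
    (P i).submodule ⊔ (P j).submodule = E1.submodule ⊔ E2.submodule := by
  simp only [insert_subset_iff, singleton_subset_iff, mem_union, mem_filter, mem_univ,
    true_and] at hS hS2
  have hline : ∀ k, P k = E2 ∨ P k ∈ G1 →
      (P k).submodule ≤ E1.submodule ⊔ E2.submodule := by
    rintro k (hk | hk)
    · exact hk ▸ le_sup_right
    · exact h.sub_G1 _ hk
  have hne : P i ≠ P j := by
    intro he
    rcases hS.1 with hi | hi
    · exact hS2 ⟨hi, he ▸ hi⟩
    · exact hij (hP.eq_of_mem_G (by simp [he ▸ hi]) he)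
  exact sup_submodule_eq_of_ne hne (finrank_sup_submodule_of_ne h.ne12) (hline i hS.1)
    (hline j hS.2)

theorem subset_of_sup_eq_line12 (h : IsBalancedQuasiArc F x E1 E2 E3 G1 G2 G3)
    (hP : EnumeratesQuasiArc P y E1 E2 E3 G1 G2 G3) {i j : ι} (hi : P i ≠ E1) (hj : P j ≠ E1)
    (hW : (P i).submodule ⊔ (P j).submodule = E1.submodule ⊔ E2.submodule) :
    ({i, j} : Finset ι) ⊆ (univ.filter (P · = E2) ∪ univ.filter (P · ∈ G1)) ∧
      ¬ ({i, j} : Finset ι) ⊆ univ.filter (P · = E2) := by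
  have hclass : ∀ k, (P k).submodule ≤ E1.submodule ⊔ E2.submodule → P k ≠ E1 →
      P k = E2 ∨ P k ∈ G1 := fun k hk hk1 => by
    have := (h.rotate.rotate.le_line23_iff (hP.rotate.rotate.mem_support k)).1 hk
    tauto
  simp only [insert_subset_iff, singleton_subset_iff, mem_union, mem_filter, mem_univ,
    true_and]
  refine ⟨⟨hclass i (hW ▸ le_sup_left) hi, hclass j (hW ▸ le_sup_right) hj⟩, ?_⟩
  rintro ⟨hi2, hj2⟩
  rw [hi2, hj2, sup_idem] at hW
  exact h.ne12 (submodule_le_submodule_iff.1 (hW ▸ le_sup_left))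

theorem le_iSup_iff_of_card_eq_two (h : IsBalancedQuasiArc F x E1 E2 E3 G1 G2 G3)
    (hP : EnumeratesQuasiArc P y E1 E2 E3 G1 G2 G3) {S : Finset ι} (hS : #S = 2) :
    E1.submodule ≤ ⨆ i ∈ S, (P i).submodule ↔ (∃ i ∈ S, P i = E1) ∨
      (S ⊆ (univ.filter (P · = E2) ∪ univ.filter (P · ∈ G1)) ∧
        ¬ S ⊆ univ.filter (P · = E2)) ∨
      (S ⊆ (univ.filter (P · = E3) ∪ univ.filter (P · ∈ G3)) ∧
        ¬ S ⊆ univ.filter (P · = E3)) := by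
  obtain ⟨i, j, hij, rfl⟩ := card_eq_two.1 hS
  rw [Finset.iSup_insert, Finset.iSup_singleton]
  constructor
  · intro hle
    by_cases hi : P i = E1
    · exact .inl ⟨i, by simp, hi⟩
    by_cases hj : P j = E1
    · exact .inl ⟨j, by simp, hj⟩
    have hne : P i ≠ P j := fun he =>
      hj (submodule_le_submodule_iff.1 (by rwa [he, sup_idem] at hle)).symm
    rcases h.eq_fundamental_line_of_three (finrank_sup_submodule_of_ne hne) (by simp)
      (hP.mem_support i) (hP.mem_support j) (Ne.symm hi) (Ne.symm hj) hne hle le_sup_left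
      le_sup_right with hW | hW | hW
    · exact .inr (.inl (h.subset_of_sup_eq_line12 hP hi hj hW))
    · exact absurd (hW ▸ hle) h.not_le_line23
    · exact .inr (.inr (h.reflect.subset_of_sup_eq_line12 hP.reflect hi hj
        (hW.trans (sup_comm _ _))))
  · rintro (⟨k, hk, rfl⟩ | ⟨hS, hS2⟩ | ⟨hS, hS2⟩)
    · rcases mem_insert.1 hk with rfl | hk
      · exact le_sup_left
      · exact (mem_singleton.1 hk) ▸ le_sup_right
    · exact h.sup_eq_line12_of_subset hP hij hS hS2 ▸ le_sup_left
    · exact h.reflect.sup_eq_line12_of_subset hP.reflect hij hS hS2 ▸ le_sup_left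

theorem card_filter_eq_or_mem (h : IsBalancedQuasiArc F x E1 E2 E3 G1 G2 G3)
    (hP : EnumeratesQuasiArc P y E1 E2 E3 G1 G2 G3) :
    #(univ.filter (P · = E2) ∪ univ.filter (P · ∈ G1)) = y + x := by
  rw [card_union_of_disjoint (disjoint_filter.2 fun i _ hi hG =>
      h.fundamental_ne_of_mem_G (E := E2) (by simp) (by simp [hG]) hi.symm),
    hP.card_fiber_fundamental E2 (by simp), hP.card_preimage_G (by simp [union_assoc]), h.card_G1]

theorem card_filter_le_line23 (h : IsBalancedQuasiArc F x E1 E2 E3 G1 G2 G3)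
    (hP : EnumeratesQuasiArc P y E1 E2 E3 G1 G2 G3) :
    #(univ.filter fun i => (P i).submodule ≤ E2.submodule ⊔ E3.submodule) = x + 2 * y := by
  have hE2 : E2 ∉ insert E3 G2 := by
    simp only [mem_insert, not_or]
    exact ⟨h.rotate.ne12, fun hG =>
      h.fundamental_ne_of_mem_G (E := E2) (by simp) (by simp [hG]) rfl⟩
  have hE3 : E3 ∉ G2 := fun hG =>
    h.fundamental_ne_of_mem_G (E := E3) (by simp) (by simp [hG]) rfl
  rw [filter_congr fun i _ => (h.le_line23_iff (hP.mem_support i)).trans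
      (show _ ↔ P i ∈ insert E2 (insert E3 G2) by simp), ← sum_card_fiberwise_eq_card_filter,
    sum_insert hE2, sum_insert hE3, sum_congr rfl fun Q hQ => hP.card_fiber_G Q (by simp [hQ]),
    hP.card_fiber_fundamental E2 (by simp), hP.card_fiber_fundamental E3 (by simp)]
  simp [h.card_G2]
  ring

theorem ne_of_mem_filter_eq_or_mem (h : IsBalancedQuasiArc F x E1 E2 E3 G1 G2 G3) {i : ι}
    (hi : i ∈ univ.filter (P · = E2) ∪ univ.filter (P · ∈ G1)) : P i ≠ E1 := by
  simp only [mem_union, mem_filter, mem_univ, true_and] at hi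
  rintro rfl
  rcases hi with hi | hi
  · exact h.ne12 hi
  · exact h.fundamental_ne_of_mem_G (E := P i) (by simp) (by simp [hi]) rfl

theorem disjoint_filter_eq_or_mem (h : IsBalancedQuasiArc F x E1 E2 E3 G1 G2 G3) :
    Disjoint (univ.filter (P · = E2) ∪ univ.filter (P · ∈ G1))
      (univ.filter (P · = E3) ∪ univ.filter (P · ∈ G3)) := by
  refine disjoint_left.2 fun i hi hi' => ?_
  simp only [mem_union, mem_filter, mem_univ, true_and] at hi hi'
  rcases hi with hi | hi <;> rcases hi' with hi' | hi'
  · exact h.rotate.ne12 (hi.symm.trans hi')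
  · exact h.fundamental_ne_of_mem_G (E := E2) (by simp) (by simp [← hi, hi']) rfl
  · exact h.fundamental_ne_of_mem_G (E := E3) (by simp) (by simp [← hi', hi]) rfl
  · exact disjoint_left.1 h.rotate.rotate.disjoint_G12 hi' hi

theorem alphaFam_two (h : IsBalancedQuasiArc F x E1 E2 E3 G1 G2 G3)
    (hP : EnumeratesQuasiArc P y E1 E2 E3 G1 G2 G3) :
    alphaFam P E1 2 =
      (Fintype.card ι).choose 2 - (Fintype.card ι - y).choose 2 +
        2 * ((y + x).choose 2 - y.choose 2) := by
  have hI1 : #(univ.filter (P · ≠ E1)) = Fintype.card ι - y := by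
    rw [← card_univ, ← card_filter_add_card_filter_not (s := univ) (P · = E1),
      hP.card_fiber_fundamental E1 (by simp)]
    simp
  rw [alphaFam, filter_congr fun S hS => h.le_iSup_iff_of_card_eq_two hP (mem_powersetCard.1 hS).2,
    card_filter_or_of_imp_not, card_filter_or_of_imp_not,
    filter_congr fun S _ => show (∃ i ∈ S, P i = E1) ↔
      S ⊆ univ ∧ ¬ S ⊆ univ.filter (P · ≠ E1) by simp [not_subset],
    card_filter_subset_and_not_subset (subset_univ _),
    card_filter_subset_and_not_subset subset_union_left,
    card_filter_subset_and_not_subset subset_union_left, card_univ, hI1,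
    h.card_filter_eq_or_mem hP, h.reflect.card_filter_eq_or_mem hP.reflect,
    hP.card_fiber_fundamental E2 (by simp), hP.card_fiber_fundamental E3 (by simp)]
  · ring
  · rintro S hS ⟨hS2, -⟩ ⟨hS3, -⟩
    obtain ⟨i, hi⟩ := card_pos.1 (by rw [(mem_powersetCard.1 hS).2]; omega : 0 < #S)
    exact disjoint_left.1 h.disjoint_filter_eq_or_mem (hS2 hi) (hS3 hi)
  · rintro S - ⟨i, hi, hi1⟩ (⟨hS, -⟩ | ⟨hS, -⟩)
    · exact h.ne_of_mem_filter_eq_or_mem (hS hi) hi1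
    · exact h.reflect.ne_of_mem_filter_eq_or_mem (hS hi) hi1

theorem card_filter_not_le_iSup (h : IsBalancedQuasiArc F x E1 E2 E3 G1 G2 G3)
    (hP : EnumeratesQuasiArc P y E1 E2 E3 G1 G2 G3) {t : ℕ} (ht : 2 ≤ t) :
    #((powersetCard (t + 1) univ).filter
      fun S => ¬ E1.submodule ≤ ⨆ i ∈ S, (P i).submodule) =
      (x + 2 * y).choose (t + 1) + 2 * (x * y.choose t) := by
  have hL : (powersetCard (t + 1) univ).filter
        (· ⊆ univ.filter fun i => (P i).submodule ≤ E2.submodule ⊔ E3.submodule) =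
      powersetCard (t + 1)
        (univ.filter fun i => (P i).submodule ≤ E2.submodule ⊔ E3.submodule) := by
    ext S
    simp only [mem_filter, mem_powersetCard, subset_univ, true_and]
    tauto
  rw [filter_congr fun S hS => h.not_le_iSup_iff_of_three_le_card hP
      (by rw [(mem_powersetCard.1 hS).2]; omega),
    card_filter_or_of_imp_not, card_filter_or_of_imp_not, hL, card_powersetCard,
    h.card_filter_le_line23 hP,
    card_filter_exists_subset_insert fun i hi hG =>
      h.fundamental_ne_of_mem_G (E := E2) (by simp) (by simp [hG]) (mem_filter.1 hi).2.symm,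
    card_filter_exists_subset_insert fun i hi hG =>
      h.fundamental_ne_of_mem_G (E := E3) (by simp) (by simp [hG]) (mem_filter.1 hi).2.symm,
    hP.card_preimage_G subset_union_right,
    hP.card_preimage_G (subset_union_left.trans subset_union_left),
    h.card_G1, h.card_G3, hP.card_fiber_fundamental E2 (by simp),
    hP.card_fiber_fundamental E3 (by simp)]
  · ring
  · rintro S - ⟨i, hi, hB, hS⟩ ⟨j, hj, hB', -⟩
    rcases mem_insert.1 (hS hj) with rfl | hj2
    · exact disjoint_left.1 h.rotate.rotate.disjoint_G12 hB hB'
    · exact h.fundamental_ne_of_mem_G (E := E2) (by simp) (by simp [hB'])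
        (mem_filter.1 hj2).2.symm
  · rintro S - hL (⟨i, hi, hB, -⟩ | ⟨i, hi, hB, -⟩)
    · exact h.not_le_line23_of_mem_G3 hB (mem_filter.1 (hL hi)).2
    · exact h.reflect.not_le_line23_of_mem_G3 hB
        (sup_comm E2.submodule _ ▸ (mem_filter.1 (hL hi)).2)

theorem alphaFam_of_three_le (h : IsBalancedQuasiArc F x E1 E2 E3 G1 G2 G3)
    (hP : EnumeratesQuasiArc P y E1 E2 E3 G1 G2 G3) {s : ℕ} (hs : 3 ≤ s) :
    alphaFam P E1 s =
      (Fintype.card ι).choose s - ((x + 2 * y).choose s + 2 * (x * y.choose (s - 1))) := by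
  obtain ⟨t, rfl⟩ : ∃ t, s = t + 1 := ⟨s - 1, by omega⟩
  have hsplit := card_filter_add_card_filter_not (s := powersetCard (t + 1) univ)
    fun S => E1.submodule ≤ ⨆ i ∈ S, (P i).submodule
  rw [h.card_filter_not_le_iSup hP (by omega), card_powersetCard, card_univ] at hsplit
  rw [alphaFam, ← hsplit, Nat.add_sub_cancel_right, Nat.add_sub_cancel_right]

end IsBalancedQuasiArc

end QuasiArc

/-- Recovery counts of a fundamental point for a balanced quasi-arc of weight
`x` in which each fundamental point appears with multiplicity `y`. -/
theorem stmt11 {F : Type*} [Field F] {x y : ℕ} (hy : 1 ≤ y)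
    {E1 E2 E3 : Projectivization F (Fin 3 → F)}
    {G1 G2 G3 : Finset (Projectivization F (Fin 3 → F))}
    (h : IsBalancedQuasiArc F x E1 E2 E3 G1 G2 G3)
    (P : Fin (3 * x + 3 * y) → Projectivization F (Fin 3 → F))
    (hmultF : ∀ E ∈ ({E1, E2, E3} : Finset (Projectivization F (Fin 3 → F))),
      (Finset.univ.filter fun i => P i = E).card = y)
    (hmultN : ∀ Q ∈ G1 ∪ G2 ∪ G3,
      (Finset.univ.filter fun i => P i = Q).card = 1)
    (hrange : ∀ i, P i ∈ ({E1, E2, E3} ∪ G1 ∪ G2 ∪ G3 : Finset _))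
    (E : Projectivization F (Fin 3 → F)) (hE : E = E1 ∨ E = E2 ∨ E = E3) :
    alphaFam P E 1 = y ∧
    alphaFam P E 2 =
      2 * (x * y + x.choose 2) + y * (3 * x + 2 * y) + y * (y - 1) / 2 ∧
    (∀ s, 3 ≤ s → s ≤ x + 2 * y →
      alphaFam P E s =
        (3 * x + 3 * y).choose s - (x + 2 * y).choose s - 2 * y.choose (s - 1) * x) ∧
    (∀ s, x + 2 * y < s → s ≤ 3 * x + 3 * y - 1 →
      alphaFam P E s = (3 * x + 3 * y).choose s) := by
  have hP : EnumeratesQuasiArc P y E1 E2 E3 G1 G2 G3 := ⟨hmultF, hmultN, hrange⟩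
  clear hmultF hmultN hrange
  wlog hE1 : E = E1 generalizing E1 E2 E3 G1 G2 G3
  · rcases hE with rfl | rfl | rfl
    exacts [absurd rfl hE1, this h.rotate (.inl rfl) hP.rotate rfl,
      this h.rotate.rotate (.inl rfl) hP.rotate.rotate rfl]
  subst hE1
  refine ⟨hP.alphaFam_one, ?_, fun s hs _ => ?_, fun s hs _ => ?_⟩
  · rw [h.alphaFam_two hP, Fintype.card_fin, show 3 * x + 3 * y - y = 3 * x + 2 * y by omega,
      show 3 * x + 3 * y = 3 * x + 2 * y + y by ring, Nat.add_choose_two (3 * x + 2 * y),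
      Nat.add_choose_two y x, ← Nat.choose_two_right]
    simp only [add_assoc, Nat.add_sub_cancel_left]
    ring
  · rw [h.alphaFam_of_three_le hP hs, Fintype.card_fin, Nat.sub_add_eq, mul_comm x, mul_assoc]
  · rw [h.alphaFam_of_three_le hP (by omega), Fintype.card_fin,
      Nat.choose_eq_zero_of_lt (by omega : x + 2 * y < s),
      Nat.choose_eq_zero_of_lt (by omega : y < s - 1)]
    simp
end
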